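/- arXiv:2203.02276 — 4 statements merged into one kernel-verified Lean document; each statement's English description precedes it below -/
import Mathlib

section
/- For q = 152 and p = 825353008489: p is prime, p + 357·152 is prime, no integer m with p < m < p + 357·152 and m ≡ p (mod 152) is prime, and moreover ⌊√p⌋ = ⌊√(p + 357·152)⌋ (in particular p exceeds the square of the gap 357·152 = 54264). -/
private lemma zmod_pow_eq (p a e r : ℕ) (h : a ^ e % p = r) : ((a:ℕ) : ZMod p) ^ e = ((r:ℕ) : ZMod p) := by
  rw [← Nat.cast_pow, ← ZMod.natCast_mod, h]

private lemma zmod_ne_one (p r : ℕ) (hp : 1 < p) (hr1 : r ≠ 1) (hrp : r < p) : ((r:ℕ) : ZMod p) ≠ 1 := by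
  haveI : NeZero p := ⟨by omega⟩
  haveI : Fact (1 < p) := ⟨hp⟩
  intro h
  have := congrArg ZMod.val h
  rw [ZMod.val_natCast_of_lt hrp, ZMod.val_one] at this
  exact hr1 this

private lemma np (d n : ℕ) (h1 : 1 < d) (h2 : d < n) (h3 : n % d = 0) : ¬ n.Prime := fun hp =>
  absurd (hp.eq_one_or_self_of_dvd d (Nat.dvd_of_mod_eq_zero h3)) (by omega)
private lemma pow_mod_sq (a n k K v w : ℕ) (hK : K = k + k) (h : a ^ k % n = v) (hw : v * v % n = w) : a ^ K % n = w := by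
  subst hK; rw [pow_add, Nat.mul_mod, h, hw]

private lemma pow_mod_s1 (a n k K v w : ℕ) (hK : K = k + 1) (h : a ^ k % n = v) (hw : v * (a % n) % n = w) : a ^ K % n = w := by
  subst hK; rw [pow_succ, Nat.mul_mod, h, hw]

private lemma prime_r : Nat.Prime 3821078743 := by
  have h1 : 5 ^ 1 % 3821078743 = 5 := by norm_num
  have h2 : 5 ^ 2 % 3821078743 = 25 := pow_mod_sq 5 3821078743 1 2 5 25 (by norm_num) h1 (by norm_num)
  have h3 : 5 ^ 3 % 3821078743 = 125 := pow_mod_s1 5 3821078743 2 3 25 125 (by norm_num) h2 (by norm_num)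
  have h6 : 5 ^ 6 % 3821078743 = 15625 := pow_mod_sq 5 3821078743 3 6 125 15625 (by norm_num) h3 (by norm_num)
  have h7 : 5 ^ 7 % 3821078743 = 78125 := pow_mod_s1 5 3821078743 6 7 15625 78125 (by norm_num) h6 (by norm_num)
  have h14 : 5 ^ 14 % 3821078743 = 2282436882 := pow_mod_sq 5 3821078743 7 14 78125 2282436882 (by norm_num) h7 (by norm_num)
  have h28 : 5 ^ 28 % 3821078743 = 731896782 := pow_mod_sq 5 3821078743 14 28 2282436882 731896782 (by norm_num) h14 (by norm_num)
  have h56 : 5 ^ 56 % 3821078743 = 1106906707 := pow_mod_sq 5 3821078743 28 56 731896782 1106906707 (by norm_num) h28 (by norm_num)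
  have h112 : 5 ^ 112 % 3821078743 = 1871253685 := pow_mod_sq 5 3821078743 56 112 1106906707 1871253685 (by norm_num) h56 (by norm_num)
  have h113 : 5 ^ 113 % 3821078743 = 1714110939 := pow_mod_s1 5 3821078743 112 113 1871253685 1714110939 (by norm_num) h112 (by norm_num)
  have h226 : 5 ^ 226 % 3821078743 = 300013184 := pow_mod_sq 5 3821078743 113 226 1714110939 300013184 (by norm_num) h113 (by norm_num)
  have h227 : 5 ^ 227 % 3821078743 = 1500065920 := pow_mod_s1 5 3821078743 226 227 300013184 1500065920 (by norm_num) h226 (by norm_num)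
  have h454 : 5 ^ 454 % 3821078743 = 1877505099 := pow_mod_sq 5 3821078743 227 454 1500065920 1877505099 (by norm_num) h227 (by norm_num)
  have h455 : 5 ^ 455 % 3821078743 = 1745368009 := pow_mod_s1 5 3821078743 454 455 1877505099 1745368009 (by norm_num) h454 (by norm_num)
  have h910 : 5 ^ 910 % 3821078743 = 2421411898 := pow_mod_sq 5 3821078743 455 910 1745368009 2421411898 (by norm_num) h455 (by norm_num)
  have h911 : 5 ^ 911 % 3821078743 = 643823261 := pow_mod_s1 5 3821078743 910 911 2421411898 643823261 (by norm_num) h910 (by norm_num)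
  have h1822 : 5 ^ 1822 % 3821078743 = 874020033 := pow_mod_sq 5 3821078743 911 1822 643823261 874020033 (by norm_num) h911 (by norm_num)
  have h3644 : 5 ^ 3644 % 3821078743 = 515075339 := pow_mod_sq 5 3821078743 1822 3644 874020033 515075339 (by norm_num) h1822 (by norm_num)
  have h7288 : 5 ^ 7288 % 3821078743 = 2758274273 := pow_mod_sq 5 3821078743 3644 7288 515075339 2758274273 (by norm_num) h3644 (by norm_num)
  have h14576 : 5 ^ 14576 % 3821078743 = 1373109941 := pow_mod_sq 5 3821078743 7288 14576 2758274273 1373109941 (by norm_num) h7288 (by norm_num)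
  have h29152 : 5 ^ 29152 % 3821078743 = 3657504944 := pow_mod_sq 5 3821078743 14576 29152 1373109941 3657504944 (by norm_num) h14576 (by norm_num)
  have h58304 : 5 ^ 58304 % 3821078743 = 2184238585 := pow_mod_sq 5 3821078743 29152 58304 3657504944 2184238585 (by norm_num) h29152 (by norm_num)
  have h58305 : 5 ^ 58305 % 3821078743 = 3279035439 := pow_mod_s1 5 3821078743 58304 58305 2184238585 3279035439 (by norm_num) h58304 (by norm_num)
  have h116610 : 5 ^ 116610 % 3821078743 = 2648062681 := pow_mod_sq 5 3821078743 58305 116610 3279035439 2648062681 (by norm_num) h58305 (by norm_num)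
  have h233220 : 5 ^ 233220 % 3821078743 = 1581485928 := pow_mod_sq 5 3821078743 116610 233220 2648062681 1581485928 (by norm_num) h116610 (by norm_num)
  have h466440 : 5 ^ 466440 % 3821078743 = 3705993186 := pow_mod_sq 5 3821078743 233220 466440 1581485928 3705993186 (by norm_num) h233220 (by norm_num)
  have h932880 : 5 ^ 932880 % 3821078743 = 1153753761 := pow_mod_sq 5 3821078743 466440 932880 3705993186 1153753761 (by norm_num) h466440 (by norm_num)
  have h1865760 : 5 ^ 1865760 % 3821078743 = 2795893690 := pow_mod_sq 5 3821078743 932880 1865760 1153753761 2795893690 (by norm_num) h932880 (by norm_num)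
  have h1865761 : 5 ^ 1865761 % 3821078743 = 2516232221 := pow_mod_s1 5 3821078743 1865760 1865761 2795893690 2516232221 (by norm_num) h1865760 (by norm_num)
  have h3731522 : 5 ^ 3731522 % 3821078743 = 3034905602 := pow_mod_sq 5 3821078743 1865761 3731522 2516232221 3034905602 (by norm_num) h1865761 (by norm_num)
  have h7463044 : 5 ^ 7463044 % 3821078743 = 1247864355 := pow_mod_sq 5 3821078743 3731522 7463044 3034905602 1247864355 (by norm_num) h3731522 (by norm_num)
  have h14926088 : 5 ^ 14926088 % 3821078743 = 830781246 := pow_mod_sq 5 3821078743 7463044 14926088 1247864355 830781246 (by norm_num) h7463044 (by norm_num)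
  have h29852176 : 5 ^ 29852176 % 3821078743 = 3100193979 := pow_mod_sq 5 3821078743 14926088 29852176 830781246 3100193979 (by norm_num) h14926088 (by norm_num)
  have h29852177 : 5 ^ 29852177 % 3821078743 = 216654923 := pow_mod_s1 5 3821078743 29852176 29852177 3100193979 216654923 (by norm_num) h29852176 (by norm_num)
  have h59704354 : 5 ^ 59704354 % 3821078743 = 1635926169 := pow_mod_sq 5 3821078743 29852177 59704354 216654923 1635926169 (by norm_num) h29852177 (by norm_num)
  have h59704355 : 5 ^ 59704355 % 3821078743 = 537473359 := pow_mod_s1 5 3821078743 59704354 59704355 1635926169 537473359 (by norm_num) h59704354 (by norm_num)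
  have h119408710 : 5 ^ 119408710 % 3821078743 = 678317815 := pow_mod_sq 5 3821078743 59704355 119408710 537473359 678317815 (by norm_num) h59704355 (by norm_num)
  have h238817420 : 5 ^ 238817420 % 3821078743 = 2687942716 := pow_mod_sq 5 3821078743 119408710 238817420 678317815 2687942716 (by norm_num) h119408710 (by norm_num)
  have h238817421 : 5 ^ 238817421 % 3821078743 = 1976477351 := pow_mod_s1 5 3821078743 238817420 238817421 2687942716 1976477351 (by norm_num) h238817420 (by norm_num)
  have h477634842 : 5 ^ 477634842 % 3821078743 = 3648089556 := pow_mod_sq 5 3821078743 238817421 477634842 1976477351 3648089556 (by norm_num) h238817421 (by norm_num)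
  have h955269684 : 5 ^ 955269684 % 3821078743 = 3008273594 := pow_mod_sq 5 3821078743 477634842 955269684 3648089556 3008273594 (by norm_num) h477634842 (by norm_num)
  have h955269685 : 5 ^ 955269685 % 3821078743 = 3578131741 := pow_mod_s1 5 3821078743 955269684 955269685 3008273594 3578131741 (by norm_num) h955269684 (by norm_num)
  have h1910539370 : 5 ^ 1910539370 % 3821078743 = 1528431497 := pow_mod_sq 5 3821078743 955269685 1910539370 3578131741 1528431497 (by norm_num) h955269685 (by norm_num)
  have h1910539371 : 5 ^ 1910539371 % 3821078743 = 3821078742 := pow_mod_s1 5 3821078743 1910539370 1910539371 1528431497 3821078742 (by norm_num) h1910539370 (by norm_num)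
  have h3821078742 : 5 ^ 3821078742 % 3821078743 = 1 := pow_mod_sq 5 3821078743 1910539371 3821078742 3821078742 1 (by norm_num) h1910539371 (by norm_num)
  have hfull : ((5:ℕ) : ZMod 3821078743) ^ (3821078743 - 1) = 1 := by
    have h' := zmod_pow_eq 3821078743 5 3821078742 1 h3821078742
    rw [show (3821078743:ℕ) - 1 = 3821078742 by norm_num, h']; norm_num
  have g2e1 : 5 ^ 1 % 3821078743 = 5 := by norm_num
  have g2e2 : 5 ^ 2 % 3821078743 = 25 := pow_mod_sq 5 3821078743 1 2 5 25 (by norm_num) g2e1 (by norm_num)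
  have g2e3 : 5 ^ 3 % 3821078743 = 125 := pow_mod_s1 5 3821078743 2 3 25 125 (by norm_num) g2e2 (by norm_num)
  have g2e6 : 5 ^ 6 % 3821078743 = 15625 := pow_mod_sq 5 3821078743 3 6 125 15625 (by norm_num) g2e3 (by norm_num)
  have g2e7 : 5 ^ 7 % 3821078743 = 78125 := pow_mod_s1 5 3821078743 6 7 15625 78125 (by norm_num) g2e6 (by norm_num)
  have g2e14 : 5 ^ 14 % 3821078743 = 2282436882 := pow_mod_sq 5 3821078743 7 14 78125 2282436882 (by norm_num) g2e7 (by norm_num)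
  have g2e28 : 5 ^ 28 % 3821078743 = 731896782 := pow_mod_sq 5 3821078743 14 28 2282436882 731896782 (by norm_num) g2e14 (by norm_num)
  have g2e56 : 5 ^ 56 % 3821078743 = 1106906707 := pow_mod_sq 5 3821078743 28 56 731896782 1106906707 (by norm_num) g2e28 (by norm_num)
  have g2e112 : 5 ^ 112 % 3821078743 = 1871253685 := pow_mod_sq 5 3821078743 56 112 1106906707 1871253685 (by norm_num) g2e56 (by norm_num)
  have g2e113 : 5 ^ 113 % 3821078743 = 1714110939 := pow_mod_s1 5 3821078743 112 113 1871253685 1714110939 (by norm_num) g2e112 (by norm_num)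
  have g2e226 : 5 ^ 226 % 3821078743 = 300013184 := pow_mod_sq 5 3821078743 113 226 1714110939 300013184 (by norm_num) g2e113 (by norm_num)
  have g2e227 : 5 ^ 227 % 3821078743 = 1500065920 := pow_mod_s1 5 3821078743 226 227 300013184 1500065920 (by norm_num) g2e226 (by norm_num)
  have g2e454 : 5 ^ 454 % 3821078743 = 1877505099 := pow_mod_sq 5 3821078743 227 454 1500065920 1877505099 (by norm_num) g2e227 (by norm_num)
  have g2e455 : 5 ^ 455 % 3821078743 = 1745368009 := pow_mod_s1 5 3821078743 454 455 1877505099 1745368009 (by norm_num) g2e454 (by norm_num)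
  have g2e910 : 5 ^ 910 % 3821078743 = 2421411898 := pow_mod_sq 5 3821078743 455 910 1745368009 2421411898 (by norm_num) g2e455 (by norm_num)
  have g2e911 : 5 ^ 911 % 3821078743 = 643823261 := pow_mod_s1 5 3821078743 910 911 2421411898 643823261 (by norm_num) g2e910 (by norm_num)
  have g2e1822 : 5 ^ 1822 % 3821078743 = 874020033 := pow_mod_sq 5 3821078743 911 1822 643823261 874020033 (by norm_num) g2e911 (by norm_num)
  have g2e3644 : 5 ^ 3644 % 3821078743 = 515075339 := pow_mod_sq 5 3821078743 1822 3644 874020033 515075339 (by norm_num) g2e1822 (by norm_num)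
  have g2e7288 : 5 ^ 7288 % 3821078743 = 2758274273 := pow_mod_sq 5 3821078743 3644 7288 515075339 2758274273 (by norm_num) g2e3644 (by norm_num)
  have g2e14576 : 5 ^ 14576 % 3821078743 = 1373109941 := pow_mod_sq 5 3821078743 7288 14576 2758274273 1373109941 (by norm_num) g2e7288 (by norm_num)
  have g2e29152 : 5 ^ 29152 % 3821078743 = 3657504944 := pow_mod_sq 5 3821078743 14576 29152 1373109941 3657504944 (by norm_num) g2e14576 (by norm_num)
  have g2e58304 : 5 ^ 58304 % 3821078743 = 2184238585 := pow_mod_sq 5 3821078743 29152 58304 3657504944 2184238585 (by norm_num) g2e29152 (by norm_num)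
  have g2e58305 : 5 ^ 58305 % 3821078743 = 3279035439 := pow_mod_s1 5 3821078743 58304 58305 2184238585 3279035439 (by norm_num) g2e58304 (by norm_num)
  have g2e116610 : 5 ^ 116610 % 3821078743 = 2648062681 := pow_mod_sq 5 3821078743 58305 116610 3279035439 2648062681 (by norm_num) g2e58305 (by norm_num)
  have g2e233220 : 5 ^ 233220 % 3821078743 = 1581485928 := pow_mod_sq 5 3821078743 116610 233220 2648062681 1581485928 (by norm_num) g2e116610 (by norm_num)
  have g2e466440 : 5 ^ 466440 % 3821078743 = 3705993186 := pow_mod_sq 5 3821078743 233220 466440 1581485928 3705993186 (by norm_num) g2e233220 (by norm_num)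
  have g2e932880 : 5 ^ 932880 % 3821078743 = 1153753761 := pow_mod_sq 5 3821078743 466440 932880 3705993186 1153753761 (by norm_num) g2e466440 (by norm_num)
  have g2e1865760 : 5 ^ 1865760 % 3821078743 = 2795893690 := pow_mod_sq 5 3821078743 932880 1865760 1153753761 2795893690 (by norm_num) g2e932880 (by norm_num)
  have g2e1865761 : 5 ^ 1865761 % 3821078743 = 2516232221 := pow_mod_s1 5 3821078743 1865760 1865761 2795893690 2516232221 (by norm_num) g2e1865760 (by norm_num)
  have g2e3731522 : 5 ^ 3731522 % 3821078743 = 3034905602 := pow_mod_sq 5 3821078743 1865761 3731522 2516232221 3034905602 (by norm_num) g2e1865761 (by norm_num)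
  have g2e7463044 : 5 ^ 7463044 % 3821078743 = 1247864355 := pow_mod_sq 5 3821078743 3731522 7463044 3034905602 1247864355 (by norm_num) g2e3731522 (by norm_num)
  have g2e14926088 : 5 ^ 14926088 % 3821078743 = 830781246 := pow_mod_sq 5 3821078743 7463044 14926088 1247864355 830781246 (by norm_num) g2e7463044 (by norm_num)
  have g2e29852176 : 5 ^ 29852176 % 3821078743 = 3100193979 := pow_mod_sq 5 3821078743 14926088 29852176 830781246 3100193979 (by norm_num) g2e14926088 (by norm_num)
  have g2e29852177 : 5 ^ 29852177 % 3821078743 = 216654923 := pow_mod_s1 5 3821078743 29852176 29852177 3100193979 216654923 (by norm_num) g2e29852176 (by norm_num)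
  have g2e59704354 : 5 ^ 59704354 % 3821078743 = 1635926169 := pow_mod_sq 5 3821078743 29852177 59704354 216654923 1635926169 (by norm_num) g2e29852177 (by norm_num)
  have g2e59704355 : 5 ^ 59704355 % 3821078743 = 537473359 := pow_mod_s1 5 3821078743 59704354 59704355 1635926169 537473359 (by norm_num) g2e59704354 (by norm_num)
  have g2e119408710 : 5 ^ 119408710 % 3821078743 = 678317815 := pow_mod_sq 5 3821078743 59704355 119408710 537473359 678317815 (by norm_num) g2e59704355 (by norm_num)
  have g2e238817420 : 5 ^ 238817420 % 3821078743 = 2687942716 := pow_mod_sq 5 3821078743 119408710 238817420 678317815 2687942716 (by norm_num) g2e119408710 (by norm_num)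
  have g2e238817421 : 5 ^ 238817421 % 3821078743 = 1976477351 := pow_mod_s1 5 3821078743 238817420 238817421 2687942716 1976477351 (by norm_num) g2e238817420 (by norm_num)
  have g2e477634842 : 5 ^ 477634842 % 3821078743 = 3648089556 := pow_mod_sq 5 3821078743 238817421 477634842 1976477351 3648089556 (by norm_num) g2e238817421 (by norm_num)
  have g2e955269684 : 5 ^ 955269684 % 3821078743 = 3008273594 := pow_mod_sq 5 3821078743 477634842 955269684 3648089556 3008273594 (by norm_num) g2e477634842 (by norm_num)
  have g2e955269685 : 5 ^ 955269685 % 3821078743 = 3578131741 := pow_mod_s1 5 3821078743 955269684 955269685 3008273594 3578131741 (by norm_num) g2e955269684 (by norm_num)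
  have g2e1910539370 : 5 ^ 1910539370 % 3821078743 = 1528431497 := pow_mod_sq 5 3821078743 955269685 1910539370 3578131741 1528431497 (by norm_num) g2e955269685 (by norm_num)
  have g2e1910539371 : 5 ^ 1910539371 % 3821078743 = 3821078742 := pow_mod_s1 5 3821078743 1910539370 1910539371 1528431497 3821078742 (by norm_num) g2e1910539370 (by norm_num)
  have hne2 : ((5:ℕ) : ZMod 3821078743) ^ 1910539371 ≠ 1 := by
    rw [zmod_pow_eq 3821078743 5 1910539371 3821078742 g2e1910539371]
    exact zmod_ne_one 3821078743 3821078742 (by norm_num) (by norm_num) (by norm_num)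
  have g3e1 : 5 ^ 1 % 3821078743 = 5 := by norm_num
  have g3e2 : 5 ^ 2 % 3821078743 = 25 := pow_mod_sq 5 3821078743 1 2 5 25 (by norm_num) g3e1 (by norm_num)
  have g3e4 : 5 ^ 4 % 3821078743 = 625 := pow_mod_sq 5 3821078743 2 4 25 625 (by norm_num) g3e2 (by norm_num)
  have g3e8 : 5 ^ 8 % 3821078743 = 390625 := pow_mod_sq 5 3821078743 4 8 625 390625 (by norm_num) g3e4 (by norm_num)
  have g3e9 : 5 ^ 9 % 3821078743 = 1953125 := pow_mod_s1 5 3821078743 8 9 390625 1953125 (by norm_num) g3e8 (by norm_num)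
  have g3e18 : 5 ^ 18 % 3821078743 = 1260680111 := pow_mod_sq 5 3821078743 9 18 1953125 1260680111 (by norm_num) g3e9 (by norm_num)
  have g3e36 : 5 ^ 36 % 3821078743 = 247838747 := pow_mod_sq 5 3821078743 18 36 1260680111 247838747 (by norm_num) g3e18 (by norm_num)
  have g3e37 : 5 ^ 37 % 3821078743 = 1239193735 := pow_mod_s1 5 3821078743 36 37 247838747 1239193735 (by norm_num) g3e36 (by norm_num)
  have g3e74 : 5 ^ 74 % 3821078743 = 3343239549 := pow_mod_sq 5 3821078743 37 74 1239193735 3343239549 (by norm_num) g3e37 (by norm_num)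
  have g3e75 : 5 ^ 75 % 3821078743 = 1431882773 := pow_mod_s1 5 3821078743 74 75 3343239549 1431882773 (by norm_num) g3e74 (by norm_num)
  have g3e150 : 5 ^ 150 % 3821078743 = 2800304107 := pow_mod_sq 5 3821078743 75 150 1431882773 2800304107 (by norm_num) g3e75 (by norm_num)
  have g3e151 : 5 ^ 151 % 3821078743 = 2538284306 := pow_mod_s1 5 3821078743 150 151 2800304107 2538284306 (by norm_num) g3e150 (by norm_num)
  have g3e302 : 5 ^ 302 % 3821078743 = 2671603874 := pow_mod_sq 5 3821078743 151 302 2538284306 2671603874 (by norm_num) g3e151 (by norm_num)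
  have g3e303 : 5 ^ 303 % 3821078743 = 1894783141 := pow_mod_s1 5 3821078743 302 303 2671603874 1894783141 (by norm_num) g3e302 (by norm_num)
  have g3e606 : 5 ^ 606 % 3821078743 = 447827363 := pow_mod_sq 5 3821078743 303 606 1894783141 447827363 (by norm_num) g3e303 (by norm_num)
  have g3e607 : 5 ^ 607 % 3821078743 = 2239136815 := pow_mod_s1 5 3821078743 606 607 447827363 2239136815 (by norm_num) g3e606 (by norm_num)
  have g3e1214 : 5 ^ 1214 % 3821078743 = 803429312 := pow_mod_sq 5 3821078743 607 1214 2239136815 803429312 (by norm_num) g3e607 (by norm_num)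
  have g3e2428 : 5 ^ 2428 % 3821078743 = 2425981601 := pow_mod_sq 5 3821078743 1214 2428 803429312 2425981601 (by norm_num) g3e1214 (by norm_num)
  have g3e2429 : 5 ^ 2429 % 3821078743 = 666671776 := pow_mod_s1 5 3821078743 2428 2429 2425981601 666671776 (by norm_num) g3e2428 (by norm_num)
  have g3e4858 : 5 ^ 4858 % 3821078743 = 3042844969 := pow_mod_sq 5 3821078743 2429 4858 666671776 3042844969 (by norm_num) g3e2429 (by norm_num)
  have g3e9716 : 5 ^ 9716 % 3821078743 = 1782148078 := pow_mod_sq 5 3821078743 4858 9716 3042844969 1782148078 (by norm_num) g3e4858 (by norm_num)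
  have g3e9717 : 5 ^ 9717 % 3821078743 = 1268582904 := pow_mod_s1 5 3821078743 9716 9717 1782148078 1268582904 (by norm_num) g3e9716 (by norm_num)
  have g3e19434 : 5 ^ 19434 % 3821078743 = 3623684464 := pow_mod_sq 5 3821078743 9717 19434 1268582904 3623684464 (by norm_num) g3e9717 (by norm_num)
  have g3e19435 : 5 ^ 19435 % 3821078743 = 2834107348 := pow_mod_s1 5 3821078743 19434 19435 3623684464 2834107348 (by norm_num) g3e19434 (by norm_num)
  have g3e38870 : 5 ^ 38870 % 3821078743 = 1403677555 := pow_mod_sq 5 3821078743 19435 38870 2834107348 1403677555 (by norm_num) g3e19435 (by norm_num)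
  have g3e77740 : 5 ^ 77740 % 3821078743 = 2430746922 := pow_mod_sq 5 3821078743 38870 77740 1403677555 2430746922 (by norm_num) g3e38870 (by norm_num)
  have g3e155480 : 5 ^ 155480 % 3821078743 = 408915242 := pow_mod_sq 5 3821078743 77740 155480 2430746922 408915242 (by norm_num) g3e77740 (by norm_num)
  have g3e310960 : 5 ^ 310960 % 3821078743 = 748095888 := pow_mod_sq 5 3821078743 155480 310960 408915242 748095888 (by norm_num) g3e155480 (by norm_num)
  have g3e621920 : 5 ^ 621920 % 3821078743 = 3101042257 := pow_mod_sq 5 3821078743 310960 621920 748095888 3101042257 (by norm_num) g3e310960 (by norm_num)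
  have g3e1243840 : 5 ^ 1243840 % 3821078743 = 2820288904 := pow_mod_sq 5 3821078743 621920 1243840 3101042257 2820288904 (by norm_num) g3e621920 (by norm_num)
  have g3e2487680 : 5 ^ 2487680 % 3821078743 = 1473203096 := pow_mod_sq 5 3821078743 1243840 2487680 2820288904 1473203096 (by norm_num) g3e1243840 (by norm_num)
  have g3e2487681 : 5 ^ 2487681 % 3821078743 = 3544936737 := pow_mod_s1 5 3821078743 2487680 2487681 1473203096 3544936737 (by norm_num) g3e2487680 (by norm_num)
  have g3e4975362 : 5 ^ 4975362 % 3821078743 = 991631543 := pow_mod_sq 5 3821078743 2487681 4975362 3544936737 991631543 (by norm_num) g3e2487681 (by norm_num)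
  have g3e9950724 : 5 ^ 9950724 % 3821078743 = 3771597710 := pow_mod_sq 5 3821078743 4975362 9950724 991631543 3771597710 (by norm_num) g3e4975362 (by norm_num)
  have g3e9950725 : 5 ^ 9950725 % 3821078743 = 3573673578 := pow_mod_s1 5 3821078743 9950724 9950725 3771597710 3573673578 (by norm_num) g3e9950724 (by norm_num)
  have g3e19901450 : 5 ^ 19901450 % 3821078743 = 1698820474 := pow_mod_sq 5 3821078743 9950725 19901450 3573673578 1698820474 (by norm_num) g3e9950725 (by norm_num)
  have g3e19901451 : 5 ^ 19901451 % 3821078743 = 851944884 := pow_mod_s1 5 3821078743 19901450 19901451 1698820474 851944884 (by norm_num) g3e19901450 (by norm_num)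
  have g3e39802902 : 5 ^ 39802902 % 3821078743 = 3040745199 := pow_mod_sq 5 3821078743 19901451 39802902 851944884 3040745199 (by norm_num) g3e19901451 (by norm_num)
  have g3e39802903 : 5 ^ 39802903 % 3821078743 = 3740489766 := pow_mod_s1 5 3821078743 39802902 39802903 3040745199 3740489766 (by norm_num) g3e39802902 (by norm_num)
  have g3e79605806 : 5 ^ 79605806 % 3821078743 = 2664634233 := pow_mod_sq 5 3821078743 39802903 79605806 3740489766 2664634233 (by norm_num) g3e39802903 (by norm_num)
  have g3e79605807 : 5 ^ 79605807 % 3821078743 = 1859934936 := pow_mod_s1 5 3821078743 79605806 79605807 2664634233 1859934936 (by norm_num) g3e79605806 (by norm_num)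
  have g3e159211614 : 5 ^ 159211614 % 3821078743 = 3116638349 := pow_mod_sq 5 3821078743 79605807 159211614 1859934936 3116638349 (by norm_num) g3e79605807 (by norm_num)
  have g3e318423228 : 5 ^ 318423228 % 3821078743 = 1826446992 := pow_mod_sq 5 3821078743 159211614 318423228 3116638349 1826446992 (by norm_num) g3e159211614 (by norm_num)
  have g3e636846456 : 5 ^ 636846456 % 3821078743 = 195485097 := pow_mod_sq 5 3821078743 318423228 636846456 1826446992 195485097 (by norm_num) g3e318423228 (by norm_num)
  have g3e636846457 : 5 ^ 636846457 % 3821078743 = 977425485 := pow_mod_s1 5 3821078743 636846456 636846457 195485097 977425485 (by norm_num) g3e636846456 (by norm_num)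
  have g3e1273692914 : 5 ^ 1273692914 % 3821078743 = 977425484 := pow_mod_sq 5 3821078743 636846457 1273692914 977425485 977425484 (by norm_num) g3e636846457 (by norm_num)
  have hne3 : ((5:ℕ) : ZMod 3821078743) ^ 1273692914 ≠ 1 := by
    rw [zmod_pow_eq 3821078743 5 1273692914 977425484 g3e1273692914]
    exact zmod_ne_one 3821078743 977425484 (by norm_num) (by norm_num) (by norm_num)
  have g13e1 : 5 ^ 1 % 3821078743 = 5 := by norm_num
  have g13e2 : 5 ^ 2 % 3821078743 = 25 := pow_mod_sq 5 3821078743 1 2 5 25 (by norm_num) g13e1 (by norm_num)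
  have g13e4 : 5 ^ 4 % 3821078743 = 625 := pow_mod_sq 5 3821078743 2 4 25 625 (by norm_num) g13e2 (by norm_num)
  have g13e8 : 5 ^ 8 % 3821078743 = 390625 := pow_mod_sq 5 3821078743 4 8 625 390625 (by norm_num) g13e4 (by norm_num)
  have g13e16 : 5 ^ 16 % 3821078743 = 3565819648 := pow_mod_sq 5 3821078743 8 16 390625 3565819648 (by norm_num) g13e8 (by norm_num)
  have g13e17 : 5 ^ 17 % 3821078743 = 2544783268 := pow_mod_s1 5 3821078743 16 17 3565819648 2544783268 (by norm_num) g13e16 (by norm_num)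
  have g13e34 : 5 ^ 34 % 3821078743 = 3219619694 := pow_mod_sq 5 3821078743 17 34 2544783268 3219619694 (by norm_num) g13e17 (by norm_num)
  have g13e35 : 5 ^ 35 % 3821078743 = 813783498 := pow_mod_s1 5 3821078743 34 35 3219619694 813783498 (by norm_num) g13e34 (by norm_num)
  have g13e70 : 5 ^ 70 % 3821078743 = 2340792511 := pow_mod_sq 5 3821078743 35 70 813783498 2340792511 (by norm_num) g13e35 (by norm_num)
  have g13e140 : 5 ^ 140 % 3821078743 = 3598803908 := pow_mod_sq 5 3821078743 70 140 2340792511 3598803908 (by norm_num) g13e70 (by norm_num)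
  have g13e280 : 5 ^ 280 % 3821078743 = 1193500156 := pow_mod_sq 5 3821078743 140 280 3598803908 1193500156 (by norm_num) g13e140 (by norm_num)
  have g13e560 : 5 ^ 560 % 3821078743 = 2540075098 := pow_mod_sq 5 3821078743 280 560 1193500156 2540075098 (by norm_num) g13e280 (by norm_num)
  have g13e1120 : 5 ^ 1120 % 3821078743 = 2203630809 := pow_mod_sq 5 3821078743 560 1120 2540075098 2203630809 (by norm_num) g13e560 (by norm_num)
  have g13e1121 : 5 ^ 1121 % 3821078743 = 3375996559 := pow_mod_s1 5 3821078743 1120 1121 2203630809 3375996559 (by norm_num) g13e1120 (by norm_num)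
  have g13e2242 : 5 ^ 2242 % 3821078743 = 1206386954 := pow_mod_sq 5 3821078743 1121 2242 3375996559 1206386954 (by norm_num) g13e1121 (by norm_num)
  have g13e4484 : 5 ^ 4484 % 3821078743 = 3052213885 := pow_mod_sq 5 3821078743 2242 4484 1206386954 3052213885 (by norm_num) g13e2242 (by norm_num)
  have g13e4485 : 5 ^ 4485 % 3821078743 = 3797833196 := pow_mod_s1 5 3821078743 4484 4485 3052213885 3797833196 (by norm_num) g13e4484 (by norm_num)
  have g13e8970 : 5 ^ 8970 % 3821078743 = 1425966607 := pow_mod_sq 5 3821078743 4485 8970 3797833196 1425966607 (by norm_num) g13e4485 (by norm_num)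
  have g13e17940 : 5 ^ 17940 % 3821078743 = 687253427 := pow_mod_sq 5 3821078743 8970 17940 1425966607 687253427 (by norm_num) g13e8970 (by norm_num)
  have g13e35880 : 5 ^ 35880 % 3821078743 = 3712310335 := pow_mod_sq 5 3821078743 17940 35880 687253427 3712310335 (by norm_num) g13e17940 (by norm_num)
  have g13e71760 : 5 ^ 71760 % 3821078743 = 2408132388 := pow_mod_sq 5 3821078743 35880 71760 3712310335 2408132388 (by norm_num) g13e35880 (by norm_num)
  have g13e143520 : 5 ^ 143520 % 3821078743 = 400585966 := pow_mod_sq 5 3821078743 71760 143520 2408132388 400585966 (by norm_num) g13e71760 (by norm_num)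
  have g13e287040 : 5 ^ 287040 % 3821078743 = 2681865990 := pow_mod_sq 5 3821078743 143520 287040 400585966 2681865990 (by norm_num) g13e143520 (by norm_num)
  have g13e574080 : 5 ^ 574080 % 3821078743 = 3689331838 := pow_mod_sq 5 3821078743 287040 574080 2681865990 3689331838 (by norm_num) g13e287040 (by norm_num)
  have g13e1148160 : 5 ^ 1148160 % 3821078743 = 608080268 := pow_mod_sq 5 3821078743 574080 1148160 3689331838 608080268 (by norm_num) g13e574080 (by norm_num)
  have g13e2296320 : 5 ^ 2296320 % 3821078743 = 2630986666 := pow_mod_sq 5 3821078743 1148160 2296320 608080268 2630986666 (by norm_num) g13e1148160 (by norm_num)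
  have g13e2296321 : 5 ^ 2296321 % 3821078743 = 1691697101 := pow_mod_s1 5 3821078743 2296320 2296321 2630986666 1691697101 (by norm_num) g13e2296320 (by norm_num)
  have g13e4592642 : 5 ^ 4592642 % 3821078743 = 2821261425 := pow_mod_sq 5 3821078743 2296321 4592642 1691697101 2821261425 (by norm_num) g13e2296321 (by norm_num)
  have g13e9185284 : 5 ^ 9185284 % 3821078743 = 1158946011 := pow_mod_sq 5 3821078743 4592642 9185284 2821261425 1158946011 (by norm_num) g13e4592642 (by norm_num)
  have g13e9185285 : 5 ^ 9185285 % 3821078743 = 1973651312 := pow_mod_s1 5 3821078743 9185284 9185285 1158946011 1973651312 (by norm_num) g13e9185284 (by norm_num)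
  have g13e18370570 : 5 ^ 18370570 % 3821078743 = 2580769568 := pow_mod_sq 5 3821078743 9185285 18370570 1973651312 2580769568 (by norm_num) g13e9185285 (by norm_num)
  have g13e36741140 : 5 ^ 36741140 % 3821078743 = 1243120376 := pow_mod_sq 5 3821078743 18370570 36741140 2580769568 1243120376 (by norm_num) g13e18370570 (by norm_num)
  have g13e36741141 : 5 ^ 36741141 % 3821078743 = 2394523137 := pow_mod_s1 5 3821078743 36741140 36741141 1243120376 2394523137 (by norm_num) g13e36741140 (by norm_num)
  have g13e73482282 : 5 ^ 73482282 % 3821078743 = 1273812371 := pow_mod_sq 5 3821078743 36741141 73482282 2394523137 1273812371 (by norm_num) g13e36741141 (by norm_num)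
  have g13e73482283 : 5 ^ 73482283 % 3821078743 = 2547983112 := pow_mod_s1 5 3821078743 73482282 73482283 1273812371 2547983112 (by norm_num) g13e73482282 (by norm_num)
  have g13e146964566 : 5 ^ 146964566 % 3821078743 = 962492874 := pow_mod_sq 5 3821078743 73482283 146964566 2547983112 962492874 (by norm_num) g13e73482283 (by norm_num)
  have g13e146964567 : 5 ^ 146964567 % 3821078743 = 991385627 := pow_mod_s1 5 3821078743 146964566 146964567 962492874 991385627 (by norm_num) g13e146964566 (by norm_num)
  have g13e293929134 : 5 ^ 293929134 % 3821078743 = 1832559136 := pow_mod_sq 5 3821078743 146964567 293929134 991385627 1832559136 (by norm_num) g13e146964567 (by norm_num)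
  have hne13 : ((5:ℕ) : ZMod 3821078743) ^ 293929134 ≠ 1 := by
    rw [zmod_pow_eq 3821078743 5 293929134 1832559136 g13e293929134]
    exact zmod_ne_one 3821078743 1832559136 (by norm_num) (by norm_num) (by norm_num)
  have g67e1 : 5 ^ 1 % 3821078743 = 5 := by norm_num
  have g67e2 : 5 ^ 2 % 3821078743 = 25 := pow_mod_sq 5 3821078743 1 2 5 25 (by norm_num) g67e1 (by norm_num)
  have g67e3 : 5 ^ 3 % 3821078743 = 125 := pow_mod_s1 5 3821078743 2 3 25 125 (by norm_num) g67e2 (by norm_num)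
  have g67e6 : 5 ^ 6 % 3821078743 = 15625 := pow_mod_sq 5 3821078743 3 6 125 15625 (by norm_num) g67e3 (by norm_num)
  have g67e12 : 5 ^ 12 % 3821078743 = 244140625 := pow_mod_sq 5 3821078743 6 12 15625 244140625 (by norm_num) g67e6 (by norm_num)
  have g67e13 : 5 ^ 13 % 3821078743 = 1220703125 := pow_mod_s1 5 3821078743 12 13 244140625 1220703125 (by norm_num) g67e12 (by norm_num)
  have g67e26 : 5 ^ 26 % 3821078743 = 182119021 := pow_mod_sq 5 3821078743 13 26 1220703125 182119021 (by norm_num) g67e13 (by norm_num)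
  have g67e27 : 5 ^ 27 % 3821078743 = 910595105 := pow_mod_s1 5 3821078743 26 27 182119021 910595105 (by norm_num) g67e26 (by norm_num)
  have g67e54 : 5 ^ 54 % 3821078743 = 197119418 := pow_mod_sq 5 3821078743 27 54 910595105 197119418 (by norm_num) g67e27 (by norm_num)
  have g67e108 : 5 ^ 108 % 3821078743 = 492092085 := pow_mod_sq 5 3821078743 54 108 197119418 492092085 (by norm_num) g67e54 (by norm_num)
  have g67e216 : 5 ^ 216 % 3821078743 = 2245767030 := pow_mod_sq 5 3821078743 108 216 492092085 2245767030 (by norm_num) g67e108 (by norm_num)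
  have g67e217 : 5 ^ 217 % 3821078743 = 3586677664 := pow_mod_s1 5 3821078743 216 217 2245767030 3586677664 (by norm_num) g67e216 (by norm_num)
  have g67e434 : 5 ^ 434 % 3821078743 = 1428955791 := pow_mod_sq 5 3821078743 217 434 3586677664 1428955791 (by norm_num) g67e217 (by norm_num)
  have g67e435 : 5 ^ 435 % 3821078743 = 3323700212 := pow_mod_s1 5 3821078743 434 435 1428955791 3323700212 (by norm_num) g67e434 (by norm_num)
  have g67e870 : 5 ^ 870 % 3821078743 = 3544340262 := pow_mod_sq 5 3821078743 435 870 3323700212 3544340262 (by norm_num) g67e435 (by norm_num)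
  have g67e1740 : 5 ^ 1740 % 3821078743 = 2179200253 := pow_mod_sq 5 3821078743 870 1740 3544340262 2179200253 (by norm_num) g67e870 (by norm_num)
  have g67e3480 : 5 ^ 3480 % 3821078743 = 2074460213 := pow_mod_sq 5 3821078743 1740 3480 2179200253 2074460213 (by norm_num) g67e1740 (by norm_num)
  have g67e6960 : 5 ^ 6960 % 3821078743 = 3532152200 := pow_mod_sq 5 3821078743 3480 6960 2074460213 3532152200 (by norm_num) g67e3480 (by norm_num)
  have g67e6961 : 5 ^ 6961 % 3821078743 = 2376446028 := pow_mod_s1 5 3821078743 6960 6961 3532152200 2376446028 (by norm_num) g67e6960 (by norm_num)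
  have g67e13922 : 5 ^ 13922 % 3821078743 = 3043839320 := pow_mod_sq 5 3821078743 6961 13922 2376446028 3043839320 (by norm_num) g67e6961 (by norm_num)
  have g67e13923 : 5 ^ 13923 % 3821078743 = 3755960371 := pow_mod_s1 5 3821078743 13922 13923 3043839320 3755960371 (by norm_num) g67e13922 (by norm_num)
  have g67e27846 : 5 ^ 27846 % 3821078743 = 2268752307 := pow_mod_sq 5 3821078743 13923 27846 3755960371 2268752307 (by norm_num) g67e13923 (by norm_num)
  have g67e27847 : 5 ^ 27847 % 3821078743 = 3701604049 := pow_mod_s1 5 3821078743 27846 27847 2268752307 3701604049 (by norm_num) g67e27846 (by norm_num)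
  have g67e55694 : 5 ^ 55694 % 3821078743 = 1163341915 := pow_mod_sq 5 3821078743 27847 55694 3701604049 1163341915 (by norm_num) g67e27847 (by norm_num)
  have g67e111388 : 5 ^ 111388 % 3821078743 = 278336731 := pow_mod_sq 5 3821078743 55694 111388 1163341915 278336731 (by norm_num) g67e55694 (by norm_num)
  have g67e222776 : 5 ^ 222776 % 3821078743 = 3642859457 := pow_mod_sq 5 3821078743 111388 222776 278336731 3642859457 (by norm_num) g67e111388 (by norm_num)
  have g67e222777 : 5 ^ 222777 % 3821078743 = 2929982313 := pow_mod_s1 5 3821078743 222776 222777 3642859457 2929982313 (by norm_num) g67e222776 (by norm_num)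
  have g67e445554 : 5 ^ 445554 % 3821078743 = 3076856021 := pow_mod_sq 5 3821078743 222777 445554 2929982313 3076856021 (by norm_num) g67e222777 (by norm_num)
  have g67e891108 : 5 ^ 891108 % 3821078743 = 2192088120 := pow_mod_sq 5 3821078743 445554 891108 3076856021 2192088120 (by norm_num) g67e445554 (by norm_num)
  have g67e891109 : 5 ^ 891109 % 3821078743 = 3318283114 := pow_mod_s1 5 3821078743 891108 891109 2192088120 3318283114 (by norm_num) g67e891108 (by norm_num)
  have g67e1782218 : 5 ^ 1782218 % 3821078743 = 3698672237 := pow_mod_sq 5 3821078743 891109 1782218 3318283114 3698672237 (by norm_num) g67e891109 (by norm_num)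
  have g67e1782219 : 5 ^ 1782219 % 3821078743 = 3209046213 := pow_mod_s1 5 3821078743 1782218 1782219 3698672237 3209046213 (by norm_num) g67e1782218 (by norm_num)
  have g67e3564438 : 5 ^ 3564438 % 3821078743 = 2883490999 := pow_mod_sq 5 3821078743 1782219 3564438 3209046213 2883490999 (by norm_num) g67e1782219 (by norm_num)
  have g67e3564439 : 5 ^ 3564439 % 3821078743 = 2954218766 := pow_mod_s1 5 3821078743 3564438 3564439 2883490999 2954218766 (by norm_num) g67e3564438 (by norm_num)
  have g67e7128878 : 5 ^ 7128878 % 3821078743 = 437916224 := pow_mod_sq 5 3821078743 3564439 7128878 2954218766 437916224 (by norm_num) g67e3564439 (by norm_num)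
  have g67e14257756 : 5 ^ 14257756 % 3821078743 = 563381096 := pow_mod_sq 5 3821078743 7128878 14257756 437916224 563381096 (by norm_num) g67e7128878 (by norm_num)
  have g67e28515512 : 5 ^ 28515512 % 3821078743 = 2003621860 := pow_mod_sq 5 3821078743 14257756 28515512 563381096 2003621860 (by norm_num) g67e14257756 (by norm_num)
  have g67e28515513 : 5 ^ 28515513 % 3821078743 = 2375951814 := pow_mod_s1 5 3821078743 28515512 28515513 2003621860 2375951814 (by norm_num) g67e28515512 (by norm_num)
  have g67e57031026 : 5 ^ 57031026 % 3821078743 = 146634199 := pow_mod_sq 5 3821078743 28515513 57031026 2375951814 146634199 (by norm_num) g67e28515513 (by norm_num)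
  have hne67 : ((5:ℕ) : ZMod 3821078743) ^ 57031026 ≠ 1 := by
    rw [zmod_pow_eq 3821078743 5 57031026 146634199 g67e57031026]
    exact zmod_ne_one 3821078743 146634199 (by norm_num) (by norm_num) (by norm_num)
  have g227e1 : 5 ^ 1 % 3821078743 = 5 := by norm_num
  have g227e2 : 5 ^ 2 % 3821078743 = 25 := pow_mod_sq 5 3821078743 1 2 5 25 (by norm_num) g227e1 (by norm_num)
  have g227e4 : 5 ^ 4 % 3821078743 = 625 := pow_mod_sq 5 3821078743 2 4 25 625 (by norm_num) g227e2 (by norm_num)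
  have g227e8 : 5 ^ 8 % 3821078743 = 390625 := pow_mod_sq 5 3821078743 4 8 625 390625 (by norm_num) g227e4 (by norm_num)
  have g227e16 : 5 ^ 16 % 3821078743 = 3565819648 := pow_mod_sq 5 3821078743 8 16 390625 3565819648 (by norm_num) g227e8 (by norm_num)
  have g227e32 : 5 ^ 32 % 3821078743 = 2727118333 := pow_mod_sq 5 3821078743 16 32 3565819648 2727118333 (by norm_num) g227e16 (by norm_num)
  have g227e64 : 5 ^ 64 % 3821078743 = 3625100224 := pow_mod_sq 5 3821078743 32 64 2727118333 3625100224 (by norm_num) g227e32 (by norm_num)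
  have g227e128 : 5 ^ 128 % 3821078743 = 3103090118 := pow_mod_sq 5 3821078743 64 128 3625100224 3103090118 (by norm_num) g227e64 (by norm_num)
  have g227e256 : 5 ^ 256 % 3821078743 = 2097051489 := pow_mod_sq 5 3821078743 128 256 3103090118 2097051489 (by norm_num) g227e128 (by norm_num)
  have g227e512 : 5 ^ 512 % 3821078743 = 2487182133 := pow_mod_sq 5 3821078743 256 512 2097051489 2487182133 (by norm_num) g227e256 (by norm_num)
  have g227e513 : 5 ^ 513 % 3821078743 = 972674436 := pow_mod_s1 5 3821078743 512 513 2487182133 972674436 (by norm_num) g227e512 (by norm_num)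
  have g227e1026 : 5 ^ 1026 % 3821078743 = 34114 := pow_mod_sq 5 3821078743 513 1026 972674436 34114 (by norm_num) g227e513 (by norm_num)
  have g227e1027 : 5 ^ 1027 % 3821078743 = 170570 := pow_mod_s1 5 3821078743 1026 1027 34114 170570 (by norm_num) g227e1026 (by norm_num)
  have g227e2054 : 5 ^ 2054 % 3821078743 = 2346573699 := pow_mod_sq 5 3821078743 1027 2054 170570 2346573699 (by norm_num) g227e1027 (by norm_num)
  have g227e4108 : 5 ^ 4108 % 3821078743 = 1031486894 := pow_mod_sq 5 3821078743 2054 4108 2346573699 1031486894 (by norm_num) g227e2054 (by norm_num)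
  have g227e4109 : 5 ^ 4109 % 3821078743 = 1336355727 := pow_mod_s1 5 3821078743 4108 4109 1031486894 1336355727 (by norm_num) g227e4108 (by norm_num)
  have g227e8218 : 5 ^ 8218 % 3821078743 = 539308481 := pow_mod_sq 5 3821078743 4109 8218 1336355727 539308481 (by norm_num) g227e4109 (by norm_num)
  have g227e8219 : 5 ^ 8219 % 3821078743 = 2696542405 := pow_mod_s1 5 3821078743 8218 8219 539308481 2696542405 (by norm_num) g227e8218 (by norm_num)
  have g227e16438 : 5 ^ 16438 % 3821078743 = 545752852 := pow_mod_sq 5 3821078743 8219 16438 2696542405 545752852 (by norm_num) g227e8219 (by norm_num)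
  have g227e32876 : 5 ^ 32876 % 3821078743 = 3601808734 := pow_mod_sq 5 3821078743 16438 32876 545752852 3601808734 (by norm_num) g227e16438 (by norm_num)
  have g227e65752 : 5 ^ 65752 % 3821078743 = 2190463701 := pow_mod_sq 5 3821078743 32876 65752 3601808734 2190463701 (by norm_num) g227e32876 (by norm_num)
  have g227e65753 : 5 ^ 65753 % 3821078743 = 3310161019 := pow_mod_s1 5 3821078743 65752 65753 2190463701 3310161019 (by norm_num) g227e65752 (by norm_num)
  have g227e131506 : 5 ^ 131506 % 3821078743 = 2790870036 := pow_mod_sq 5 3821078743 65753 131506 3310161019 2790870036 (by norm_num) g227e65753 (by norm_num)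
  have g227e131507 : 5 ^ 131507 % 3821078743 = 2491113951 := pow_mod_s1 5 3821078743 131506 131507 2790870036 2491113951 (by norm_num) g227e131506 (by norm_num)
  have g227e263014 : 5 ^ 263014 % 3821078743 = 3479401380 := pow_mod_sq 5 3821078743 131507 263014 2491113951 3479401380 (by norm_num) g227e131507 (by norm_num)
  have g227e526028 : 5 ^ 526028 % 3821078743 = 3797016101 := pow_mod_sq 5 3821078743 263014 526028 3479401380 3797016101 (by norm_num) g227e263014 (by norm_num)
  have g227e526029 : 5 ^ 526029 % 3821078743 = 3700765533 := pow_mod_s1 5 3821078743 526028 526029 3797016101 3700765533 (by norm_num) g227e526028 (by norm_num)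
  have g227e1052058 : 5 ^ 1052058 % 3821078743 = 1993995719 := pow_mod_sq 5 3821078743 526029 1052058 3700765533 1993995719 (by norm_num) g227e526029 (by norm_num)
  have g227e1052059 : 5 ^ 1052059 % 3821078743 = 2327821109 := pow_mod_s1 5 3821078743 1052058 1052059 1993995719 2327821109 (by norm_num) g227e1052058 (by norm_num)
  have g227e2104118 : 5 ^ 2104118 % 3821078743 = 1536512743 := pow_mod_sq 5 3821078743 1052059 2104118 2327821109 1536512743 (by norm_num) g227e1052059 (by norm_num)
  have g227e4208236 : 5 ^ 4208236 % 3821078743 = 2463844351 := pow_mod_sq 5 3821078743 2104118 4208236 1536512743 2463844351 (by norm_num) g227e2104118 (by norm_num)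
  have g227e8416472 : 5 ^ 8416472 % 3821078743 = 1942241733 := pow_mod_sq 5 3821078743 4208236 8416472 2463844351 1942241733 (by norm_num) g227e4208236 (by norm_num)
  have g227e8416473 : 5 ^ 8416473 % 3821078743 = 2069051179 := pow_mod_s1 5 3821078743 8416472 8416473 1942241733 2069051179 (by norm_num) g227e8416472 (by norm_num)
  have g227e16832946 : 5 ^ 16832946 % 3821078743 = 1699511138 := pow_mod_sq 5 3821078743 8416473 16832946 2069051179 1699511138 (by norm_num) g227e8416473 (by norm_num)
  have hne227 : ((5:ℕ) : ZMod 3821078743) ^ 16832946 ≠ 1 := by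
    rw [zmod_pow_eq 3821078743 5 16832946 1699511138 g227e16832946]
    exact zmod_ne_one 3821078743 1699511138 (by norm_num) (by norm_num) (by norm_num)
  have g3221e1 : 5 ^ 1 % 3821078743 = 5 := by norm_num
  have g3221e2 : 5 ^ 2 % 3821078743 = 25 := pow_mod_sq 5 3821078743 1 2 5 25 (by norm_num) g3221e1 (by norm_num)
  have g3221e4 : 5 ^ 4 % 3821078743 = 625 := pow_mod_sq 5 3821078743 2 4 25 625 (by norm_num) g3221e2 (by norm_num)
  have g3221e8 : 5 ^ 8 % 3821078743 = 390625 := pow_mod_sq 5 3821078743 4 8 625 390625 (by norm_num) g3221e4 (by norm_num)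
  have g3221e9 : 5 ^ 9 % 3821078743 = 1953125 := pow_mod_s1 5 3821078743 8 9 390625 1953125 (by norm_num) g3221e8 (by norm_num)
  have g3221e18 : 5 ^ 18 % 3821078743 = 1260680111 := pow_mod_sq 5 3821078743 9 18 1953125 1260680111 (by norm_num) g3221e9 (by norm_num)
  have g3221e36 : 5 ^ 36 % 3821078743 = 247838747 := pow_mod_sq 5 3821078743 18 36 1260680111 247838747 (by norm_num) g3221e18 (by norm_num)
  have g3221e72 : 5 ^ 72 % 3821078743 = 1203631630 := pow_mod_sq 5 3821078743 36 72 247838747 1203631630 (by norm_num) g3221e36 (by norm_num)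
  have g3221e144 : 5 ^ 144 % 3821078743 = 2458141616 := pow_mod_sq 5 3821078743 72 144 1203631630 2458141616 (by norm_num) g3221e72 (by norm_num)
  have g3221e288 : 5 ^ 288 % 3821078743 = 1181004070 := pow_mod_sq 5 3821078743 144 288 2458141616 1181004070 (by norm_num) g3221e144 (by norm_num)
  have g3221e289 : 5 ^ 289 % 3821078743 = 2083941607 := pow_mod_s1 5 3821078743 288 289 1181004070 2083941607 (by norm_num) g3221e288 (by norm_num)
  have g3221e578 : 5 ^ 578 % 3821078743 = 127488136 := pow_mod_sq 5 3821078743 289 578 2083941607 127488136 (by norm_num) g3221e289 (by norm_num)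
  have g3221e579 : 5 ^ 579 % 3821078743 = 637440680 := pow_mod_s1 5 3821078743 578 579 127488136 637440680 (by norm_num) g3221e578 (by norm_num)
  have g3221e1158 : 5 ^ 1158 % 3821078743 = 3365929594 := pow_mod_sq 5 3821078743 579 1158 637440680 3365929594 (by norm_num) g3221e579 (by norm_num)
  have g3221e2316 : 5 ^ 2316 % 3821078743 = 871835965 := pow_mod_sq 5 3821078743 1158 2316 3365929594 871835965 (by norm_num) g3221e1158 (by norm_num)
  have g3221e4632 : 5 ^ 4632 % 3821078743 = 2059190147 := pow_mod_sq 5 3821078743 2316 4632 871835965 2059190147 (by norm_num) g3221e2316 (by norm_num)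
  have g3221e4633 : 5 ^ 4633 % 3821078743 = 2653793249 := pow_mod_s1 5 3821078743 4632 4633 2059190147 2653793249 (by norm_num) g3221e4632 (by norm_num)
  have g3221e9266 : 5 ^ 9266 % 3821078743 = 936212207 := pow_mod_sq 5 3821078743 4633 9266 2653793249 936212207 (by norm_num) g3221e4633 (by norm_num)
  have g3221e9267 : 5 ^ 9267 % 3821078743 = 859982292 := pow_mod_s1 5 3821078743 9266 9267 936212207 859982292 (by norm_num) g3221e9266 (by norm_num)
  have g3221e18534 : 5 ^ 18534 % 3821078743 = 216041559 := pow_mod_sq 5 3821078743 9267 18534 859982292 216041559 (by norm_num) g3221e9267 (by norm_num)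
  have g3221e18535 : 5 ^ 18535 % 3821078743 = 1080207795 := pow_mod_s1 5 3821078743 18534 18535 216041559 1080207795 (by norm_num) g3221e18534 (by norm_num)
  have g3221e37070 : 5 ^ 37070 % 3821078743 = 576886884 := pow_mod_sq 5 3821078743 18535 37070 1080207795 576886884 (by norm_num) g3221e18535 (by norm_num)
  have g3221e37071 : 5 ^ 37071 % 3821078743 = 2884434420 := pow_mod_s1 5 3821078743 37070 37071 576886884 2884434420 (by norm_num) g3221e37070 (by norm_num)
  have g3221e74142 : 5 ^ 74142 % 3821078743 = 100545768 := pow_mod_sq 5 3821078743 37071 74142 2884434420 100545768 (by norm_num) g3221e37071 (by norm_num)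
  have g3221e74143 : 5 ^ 74143 % 3821078743 = 502728840 := pow_mod_s1 5 3821078743 74142 74143 100545768 502728840 (by norm_num) g3221e74142 (by norm_num)
  have g3221e148286 : 5 ^ 148286 % 3821078743 = 1183820421 := pow_mod_sq 5 3821078743 74143 148286 502728840 1183820421 (by norm_num) g3221e74143 (by norm_num)
  have g3221e148287 : 5 ^ 148287 % 3821078743 = 2098023362 := pow_mod_s1 5 3821078743 148286 148287 1183820421 2098023362 (by norm_num) g3221e148286 (by norm_num)
  have g3221e296574 : 5 ^ 296574 % 3821078743 = 2912303285 := pow_mod_sq 5 3821078743 148287 296574 2098023362 2912303285 (by norm_num) g3221e148287 (by norm_num)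
  have g3221e296575 : 5 ^ 296575 % 3821078743 = 3098280196 := pow_mod_s1 5 3821078743 296574 296575 2912303285 3098280196 (by norm_num) g3221e296574 (by norm_num)
  have g3221e593150 : 5 ^ 593150 % 3821078743 = 3298281324 := pow_mod_sq 5 3821078743 296575 593150 3098280196 3298281324 (by norm_num) g3221e296575 (by norm_num)
  have g3221e593151 : 5 ^ 593151 % 3821078743 = 1207091648 := pow_mod_s1 5 3821078743 593150 593151 3298281324 1207091648 (by norm_num) g3221e593150 (by norm_num)
  have g3221e1186302 : 5 ^ 1186302 % 3821078743 = 972583630 := pow_mod_sq 5 3821078743 593151 1186302 1207091648 972583630 (by norm_num) g3221e593151 (by norm_num)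
  have hne3221 : ((5:ℕ) : ZMod 3821078743) ^ 1186302 ≠ 1 := by
    rw [zmod_pow_eq 3821078743 5 1186302 972583630 g3221e1186302]
    exact zmod_ne_one 3821078743 972583630 (by norm_num) (by norm_num) (by norm_num)
  refine lucas_primality 3821078743 ((5:ℕ) : ZMod 3821078743) hfull ?_
  intro q hq hdvd
  rw [show (3821078743:ℕ) - 1 = 2 * 3 * 13 * 67 * 227 * 3221 by norm_num] at hdvd
  have hqcases : q = 2 ∨ q = 3 ∨ q = 13 ∨ q = 67 ∨ q = 227 ∨ q = 3221 := by
    rcases (Nat.Prime.dvd_mul hq).mp hdvd with hdvdl | hdvdr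
    · rcases (Nat.Prime.dvd_mul hq).mp hdvdl with hdvdll | hdvdlr
      · rcases (Nat.Prime.dvd_mul hq).mp hdvdll with hdvdlll | hdvdllr
        · rcases (Nat.Prime.dvd_mul hq).mp hdvdlll with hdvdllll | hdvdlllr
          · rcases (Nat.Prime.dvd_mul hq).mp hdvdllll with hdvdlllll | hdvdllllr
            · have := (Nat.prime_dvd_prime_iff_eq hq Nat.prime_two).mp hdvdlllll
              exact Or.inl this
            · have := (Nat.prime_dvd_prime_iff_eq hq Nat.prime_three).mp hdvdllllr
              exact Or.inr (Or.inl this)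
          · have := (Nat.prime_dvd_prime_iff_eq hq (by norm_num)).mp hdvdlllr
            exact Or.inr (Or.inr (Or.inl this))
        · have := (Nat.prime_dvd_prime_iff_eq hq (by norm_num)).mp hdvdllr
          exact Or.inr (Or.inr (Or.inr (Or.inl this)))
      · have := (Nat.prime_dvd_prime_iff_eq hq (by norm_num)).mp hdvdlr
        exact Or.inr (Or.inr (Or.inr (Or.inr (Or.inl this))))
    · have := (Nat.prime_dvd_prime_iff_eq hq (by norm_num)).mp hdvdr
      exact Or.inr (Or.inr (Or.inr (Or.inr (Or.inr (this)))))
  rcases hqcases with rfl | rfl | rfl | rfl | rfl | rfl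
  · rw [show (3821078743:ℕ) - 1 = 1910539371 * 2 by norm_num, Nat.mul_div_cancel _ (by norm_num)]
    exact hne2
  · rw [show (3821078743:ℕ) - 1 = 1273692914 * 3 by norm_num, Nat.mul_div_cancel _ (by norm_num)]
    exact hne3
  · rw [show (3821078743:ℕ) - 1 = 293929134 * 13 by norm_num, Nat.mul_div_cancel _ (by norm_num)]
    exact hne13
  · rw [show (3821078743:ℕ) - 1 = 57031026 * 67 by norm_num, Nat.mul_div_cancel _ (by norm_num)]
    exact hne67
  · rw [show (3821078743:ℕ) - 1 = 16832946 * 227 by norm_num, Nat.mul_div_cancel _ (by norm_num)]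
    exact hne227
  · rw [show (3821078743:ℕ) - 1 = 1186302 * 3221 by norm_num, Nat.mul_div_cancel _ (by norm_num)]
    exact hne3221

private lemma prime_p : Nat.Prime 825353008489 := by
  have h1 : 19 ^ 1 % 825353008489 = 19 := by norm_num
  have h2 : 19 ^ 2 % 825353008489 = 361 := pow_mod_sq 19 825353008489 1 2 19 361 (by norm_num) h1 (by norm_num)
  have h3 : 19 ^ 3 % 825353008489 = 6859 := pow_mod_s1 19 825353008489 2 3 361 6859 (by norm_num) h2 (by norm_num)
  have h6 : 19 ^ 6 % 825353008489 = 47045881 := pow_mod_sq 19 825353008489 3 6 6859 47045881 (by norm_num) h3 (by norm_num)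
  have h12 : 19 ^ 12 % 825353008489 = 543503307152 := pow_mod_sq 19 825353008489 6 12 47045881 543503307152 (by norm_num) h6 (by norm_num)
  have h24 : 19 ^ 24 % 825353008489 = 340197395302 := pow_mod_sq 19 825353008489 12 24 543503307152 340197395302 (by norm_num) h12 (by norm_num)
  have h48 : 19 ^ 48 % 825353008489 = 400953866156 := pow_mod_sq 19 825353008489 24 48 340197395302 400953866156 (by norm_num) h24 (by norm_num)
  have h96 : 19 ^ 96 % 825353008489 = 150807801449 := pow_mod_sq 19 825353008489 48 96 400953866156 150807801449 (by norm_num) h48 (by norm_num)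
  have h192 : 19 ^ 192 % 825353008489 = 381854711920 := pow_mod_sq 19 825353008489 96 192 150807801449 381854711920 (by norm_num) h96 (by norm_num)
  have h384 : 19 ^ 384 % 825353008489 = 121360723589 := pow_mod_sq 19 825353008489 192 384 381854711920 121360723589 (by norm_num) h192 (by norm_num)
  have h768 : 19 ^ 768 % 825353008489 = 395214882992 := pow_mod_sq 19 825353008489 384 768 121360723589 395214882992 (by norm_num) h384 (by norm_num)
  have h1536 : 19 ^ 1536 % 825353008489 = 815724163696 := pow_mod_sq 19 825353008489 768 1536 395214882992 815724163696 (by norm_num) h768 (by norm_num)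
  have h1537 : 19 ^ 1537 % 825353008489 = 642404957422 := pow_mod_s1 19 825353008489 1536 1537 815724163696 642404957422 (by norm_num) h1536 (by norm_num)
  have h3074 : 19 ^ 3074 % 825353008489 = 95467724777 := pow_mod_sq 19 825353008489 1537 3074 642404957422 95467724777 (by norm_num) h1537 (by norm_num)
  have h6148 : 19 ^ 6148 % 825353008489 = 793853516872 := pow_mod_sq 19 825353008489 3074 6148 95467724777 793853516872 (by norm_num) h3074 (by norm_num)
  have h6149 : 19 ^ 6149 % 825353008489 = 226862667766 := pow_mod_s1 19 825353008489 6148 6149 793853516872 226862667766 (by norm_num) h6148 (by norm_num)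
  have h12298 : 19 ^ 12298 % 825353008489 = 622588886833 := pow_mod_sq 19 825353008489 6149 12298 226862667766 622588886833 (by norm_num) h6149 (by norm_num)
  have h24596 : 19 ^ 24596 % 825353008489 = 333802809702 := pow_mod_sq 19 825353008489 12298 24596 622588886833 333802809702 (by norm_num) h12298 (by norm_num)
  have h24597 : 19 ^ 24597 % 825353008489 = 564782324915 := pow_mod_s1 19 825353008489 24596 24597 333802809702 564782324915 (by norm_num) h24596 (by norm_num)
  have h49194 : 19 ^ 49194 % 825353008489 = 499568112732 := pow_mod_sq 19 825353008489 24597 49194 564782324915 499568112732 (by norm_num) h24597 (by norm_num)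
  have h98388 : 19 ^ 98388 % 825353008489 = 533293450256 := pow_mod_sq 19 825353008489 49194 98388 499568112732 533293450256 (by norm_num) h49194 (by norm_num)
  have h98389 : 19 ^ 98389 % 825353008489 = 228339452996 := pow_mod_s1 19 825353008489 98388 98389 533293450256 228339452996 (by norm_num) h98388 (by norm_num)
  have h196778 : 19 ^ 196778 % 825353008489 = 136811962590 := pow_mod_sq 19 825353008489 98389 196778 228339452996 136811962590 (by norm_num) h98389 (by norm_num)
  have h196779 : 19 ^ 196779 % 825353008489 = 123368263743 := pow_mod_s1 19 825353008489 196778 196779 136811962590 123368263743 (by norm_num) h196778 (by norm_num)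
  have h393558 : 19 ^ 393558 % 825353008489 = 148091661097 := pow_mod_sq 19 825353008489 196779 393558 123368263743 148091661097 (by norm_num) h196779 (by norm_num)
  have h787116 : 19 ^ 787116 % 825353008489 = 701711758797 := pow_mod_sq 19 825353008489 393558 787116 148091661097 701711758797 (by norm_num) h393558 (by norm_num)
  have h787117 : 19 ^ 787117 % 825353008489 = 126875281319 := pow_mod_s1 19 825353008489 787116 787117 701711758797 126875281319 (by norm_num) h787116 (by norm_num)
  have h1574234 : 19 ^ 1574234 % 825353008489 = 76674360841 := pow_mod_sq 19 825353008489 787117 1574234 126875281319 76674360841 (by norm_num) h787117 (by norm_num)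
  have h1574235 : 19 ^ 1574235 % 825353008489 = 631459847490 := pow_mod_s1 19 825353008489 1574234 1574235 76674360841 631459847490 (by norm_num) h1574234 (by norm_num)
  have h3148470 : 19 ^ 3148470 % 825353008489 = 548692730483 := pow_mod_sq 19 825353008489 1574235 3148470 631459847490 548692730483 (by norm_num) h1574235 (by norm_num)
  have h3148471 : 19 ^ 3148471 % 825353008489 = 520925777309 := pow_mod_s1 19 825353008489 3148470 3148471 548692730483 520925777309 (by norm_num) h3148470 (by norm_num)
  have h6296942 : 19 ^ 6296942 % 825353008489 = 701905284191 := pow_mod_sq 19 825353008489 3148471 6296942 520925777309 701905284191 (by norm_num) h3148471 (by norm_num)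
  have h6296943 : 19 ^ 6296943 % 825353008489 = 130552263805 := pow_mod_s1 19 825353008489 6296942 6296943 701905284191 130552263805 (by norm_num) h6296942 (by norm_num)
  have h12593886 : 19 ^ 12593886 % 825353008489 = 71948502463 := pow_mod_sq 19 825353008489 6296943 12593886 130552263805 71948502463 (by norm_num) h6296943 (by norm_num)
  have h12593887 : 19 ^ 12593887 % 825353008489 = 541668538308 := pow_mod_s1 19 825353008489 12593886 12593887 71948502463 541668538308 (by norm_num) h12593886 (by norm_num)
  have h25187774 : 19 ^ 25187774 % 825353008489 = 199342080727 := pow_mod_sq 19 825353008489 12593887 25187774 541668538308 199342080727 (by norm_num) h12593887 (by norm_num)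
  have h50375548 : 19 ^ 50375548 % 825353008489 = 387018414913 := pow_mod_sq 19 825353008489 25187774 50375548 199342080727 387018414913 (by norm_num) h25187774 (by norm_num)
  have h50375549 : 19 ^ 50375549 % 825353008489 = 750525815435 := pow_mod_s1 19 825353008489 50375548 50375549 387018414913 750525815435 (by norm_num) h50375548 (by norm_num)
  have h100751098 : 19 ^ 100751098 % 825353008489 = 154399273381 := pow_mod_sq 19 825353008489 50375549 100751098 750525815435 154399273381 (by norm_num) h50375549 (by norm_num)
  have h100751099 : 19 ^ 100751099 % 825353008489 = 457527168772 := pow_mod_s1 19 825353008489 100751098 100751099 154399273381 457527168772 (by norm_num) h100751098 (by norm_num)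
  have h201502198 : 19 ^ 201502198 % 825353008489 = 605616131859 := pow_mod_sq 19 825353008489 100751099 201502198 457527168772 605616131859 (by norm_num) h100751099 (by norm_num)
  have h201502199 : 19 ^ 201502199 % 825353008489 = 777117394964 := pow_mod_s1 19 825353008489 201502198 201502199 605616131859 777117394964 (by norm_num) h201502198 (by norm_num)
  have h403004398 : 19 ^ 403004398 % 825353008489 = 96616893182 := pow_mod_sq 19 825353008489 201502199 403004398 777117394964 96616893182 (by norm_num) h201502199 (by norm_num)
  have h806008796 : 19 ^ 806008796 % 825353008489 = 364053609616 := pow_mod_sq 19 825353008489 403004398 806008796 96616893182 364053609616 (by norm_num) h403004398 (by norm_num)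
  have h806008797 : 19 ^ 806008797 % 825353008489 = 314194514792 := pow_mod_s1 19 825353008489 806008796 806008797 364053609616 314194514792 (by norm_num) h806008796 (by norm_num)
  have h1612017594 : 19 ^ 1612017594 % 825353008489 = 99982541833 := pow_mod_sq 19 825353008489 806008797 1612017594 314194514792 99982541833 (by norm_num) h806008797 (by norm_num)
  have h3224035188 : 19 ^ 3224035188 % 825353008489 = 657091316100 := pow_mod_sq 19 825353008489 1612017594 3224035188 99982541833 657091316100 (by norm_num) h1612017594 (by norm_num)
  have h3224035189 : 19 ^ 3224035189 % 825353008489 = 104439878565 := pow_mod_s1 19 825353008489 3224035188 3224035189 657091316100 104439878565 (by norm_num) h3224035188 (by norm_num)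
  have h6448070378 : 19 ^ 6448070378 % 825353008489 = 189062249559 := pow_mod_sq 19 825353008489 3224035189 6448070378 104439878565 189062249559 (by norm_num) h3224035189 (by norm_num)
  have h12896140756 : 19 ^ 12896140756 % 825353008489 = 298125844366 := pow_mod_sq 19 825353008489 6448070378 12896140756 189062249559 298125844366 (by norm_num) h6448070378 (by norm_num)
  have h12896140757 : 19 ^ 12896140757 % 825353008489 = 712272992020 := pow_mod_s1 19 825353008489 12896140756 12896140757 298125844366 712272992020 (by norm_num) h12896140756 (by norm_num)
  have h25792281514 : 19 ^ 25792281514 % 825353008489 = 681307274900 := pow_mod_sq 19 825353008489 12896140757 25792281514 712272992020 681307274900 (by norm_num) h12896140757 (by norm_num)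
  have h25792281515 : 19 ^ 25792281515 % 825353008489 = 564543095765 := pow_mod_s1 19 825353008489 25792281514 25792281515 681307274900 564543095765 (by norm_num) h25792281514 (by norm_num)
  have h51584563030 : 19 ^ 51584563030 % 825353008489 = 116403616795 := pow_mod_sq 19 825353008489 25792281515 51584563030 564543095765 116403616795 (by norm_num) h25792281515 (by norm_num)
  have h103169126060 : 19 ^ 103169126060 % 825353008489 = 286435680627 := pow_mod_sq 19 825353008489 51584563030 103169126060 116403616795 286435680627 (by norm_num) h51584563030 (by norm_num)
  have h103169126061 : 19 ^ 103169126061 % 825353008489 = 490159880979 := pow_mod_s1 19 825353008489 103169126060 103169126061 286435680627 490159880979 (by norm_num) h103169126060 (by norm_num)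
  have h206338252122 : 19 ^ 206338252122 % 825353008489 = 747573832689 := pow_mod_sq 19 825353008489 103169126061 206338252122 490159880979 747573832689 (by norm_num) h103169126061 (by norm_num)
  have h412676504244 : 19 ^ 412676504244 % 825353008489 = 825353008488 := pow_mod_sq 19 825353008489 206338252122 412676504244 747573832689 825353008488 (by norm_num) h206338252122 (by norm_num)
  have h825353008488 : 19 ^ 825353008488 % 825353008489 = 1 := pow_mod_sq 19 825353008489 412676504244 825353008488 825353008488 1 (by norm_num) h412676504244 (by norm_num)
  have hfull : ((19:ℕ) : ZMod 825353008489) ^ (825353008489 - 1) = 1 := by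
    have h' := zmod_pow_eq 825353008489 19 825353008488 1 h825353008488
    rw [show (825353008489:ℕ) - 1 = 825353008488 by norm_num, h']; norm_num
  have g2e1 : 19 ^ 1 % 825353008489 = 19 := by norm_num
  have g2e2 : 19 ^ 2 % 825353008489 = 361 := pow_mod_sq 19 825353008489 1 2 19 361 (by norm_num) g2e1 (by norm_num)
  have g2e3 : 19 ^ 3 % 825353008489 = 6859 := pow_mod_s1 19 825353008489 2 3 361 6859 (by norm_num) g2e2 (by norm_num)
  have g2e6 : 19 ^ 6 % 825353008489 = 47045881 := pow_mod_sq 19 825353008489 3 6 6859 47045881 (by norm_num) g2e3 (by norm_num)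
  have g2e12 : 19 ^ 12 % 825353008489 = 543503307152 := pow_mod_sq 19 825353008489 6 12 47045881 543503307152 (by norm_num) g2e6 (by norm_num)
  have g2e24 : 19 ^ 24 % 825353008489 = 340197395302 := pow_mod_sq 19 825353008489 12 24 543503307152 340197395302 (by norm_num) g2e12 (by norm_num)
  have g2e48 : 19 ^ 48 % 825353008489 = 400953866156 := pow_mod_sq 19 825353008489 24 48 340197395302 400953866156 (by norm_num) g2e24 (by norm_num)
  have g2e96 : 19 ^ 96 % 825353008489 = 150807801449 := pow_mod_sq 19 825353008489 48 96 400953866156 150807801449 (by norm_num) g2e48 (by norm_num)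
  have g2e192 : 19 ^ 192 % 825353008489 = 381854711920 := pow_mod_sq 19 825353008489 96 192 150807801449 381854711920 (by norm_num) g2e96 (by norm_num)
  have g2e384 : 19 ^ 384 % 825353008489 = 121360723589 := pow_mod_sq 19 825353008489 192 384 381854711920 121360723589 (by norm_num) g2e192 (by norm_num)
  have g2e768 : 19 ^ 768 % 825353008489 = 395214882992 := pow_mod_sq 19 825353008489 384 768 121360723589 395214882992 (by norm_num) g2e384 (by norm_num)
  have g2e1536 : 19 ^ 1536 % 825353008489 = 815724163696 := pow_mod_sq 19 825353008489 768 1536 395214882992 815724163696 (by norm_num) g2e768 (by norm_num)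
  have g2e1537 : 19 ^ 1537 % 825353008489 = 642404957422 := pow_mod_s1 19 825353008489 1536 1537 815724163696 642404957422 (by norm_num) g2e1536 (by norm_num)
  have g2e3074 : 19 ^ 3074 % 825353008489 = 95467724777 := pow_mod_sq 19 825353008489 1537 3074 642404957422 95467724777 (by norm_num) g2e1537 (by norm_num)
  have g2e6148 : 19 ^ 6148 % 825353008489 = 793853516872 := pow_mod_sq 19 825353008489 3074 6148 95467724777 793853516872 (by norm_num) g2e3074 (by norm_num)
  have g2e6149 : 19 ^ 6149 % 825353008489 = 226862667766 := pow_mod_s1 19 825353008489 6148 6149 793853516872 226862667766 (by norm_num) g2e6148 (by norm_num)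
  have g2e12298 : 19 ^ 12298 % 825353008489 = 622588886833 := pow_mod_sq 19 825353008489 6149 12298 226862667766 622588886833 (by norm_num) g2e6149 (by norm_num)
  have g2e24596 : 19 ^ 24596 % 825353008489 = 333802809702 := pow_mod_sq 19 825353008489 12298 24596 622588886833 333802809702 (by norm_num) g2e12298 (by norm_num)
  have g2e24597 : 19 ^ 24597 % 825353008489 = 564782324915 := pow_mod_s1 19 825353008489 24596 24597 333802809702 564782324915 (by norm_num) g2e24596 (by norm_num)
  have g2e49194 : 19 ^ 49194 % 825353008489 = 499568112732 := pow_mod_sq 19 825353008489 24597 49194 564782324915 499568112732 (by norm_num) g2e24597 (by norm_num)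
  have g2e98388 : 19 ^ 98388 % 825353008489 = 533293450256 := pow_mod_sq 19 825353008489 49194 98388 499568112732 533293450256 (by norm_num) g2e49194 (by norm_num)
  have g2e98389 : 19 ^ 98389 % 825353008489 = 228339452996 := pow_mod_s1 19 825353008489 98388 98389 533293450256 228339452996 (by norm_num) g2e98388 (by norm_num)
  have g2e196778 : 19 ^ 196778 % 825353008489 = 136811962590 := pow_mod_sq 19 825353008489 98389 196778 228339452996 136811962590 (by norm_num) g2e98389 (by norm_num)
  have g2e196779 : 19 ^ 196779 % 825353008489 = 123368263743 := pow_mod_s1 19 825353008489 196778 196779 136811962590 123368263743 (by norm_num) g2e196778 (by norm_num)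
  have g2e393558 : 19 ^ 393558 % 825353008489 = 148091661097 := pow_mod_sq 19 825353008489 196779 393558 123368263743 148091661097 (by norm_num) g2e196779 (by norm_num)
  have g2e787116 : 19 ^ 787116 % 825353008489 = 701711758797 := pow_mod_sq 19 825353008489 393558 787116 148091661097 701711758797 (by norm_num) g2e393558 (by norm_num)
  have g2e787117 : 19 ^ 787117 % 825353008489 = 126875281319 := pow_mod_s1 19 825353008489 787116 787117 701711758797 126875281319 (by norm_num) g2e787116 (by norm_num)
  have g2e1574234 : 19 ^ 1574234 % 825353008489 = 76674360841 := pow_mod_sq 19 825353008489 787117 1574234 126875281319 76674360841 (by norm_num) g2e787117 (by norm_num)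
  have g2e1574235 : 19 ^ 1574235 % 825353008489 = 631459847490 := pow_mod_s1 19 825353008489 1574234 1574235 76674360841 631459847490 (by norm_num) g2e1574234 (by norm_num)
  have g2e3148470 : 19 ^ 3148470 % 825353008489 = 548692730483 := pow_mod_sq 19 825353008489 1574235 3148470 631459847490 548692730483 (by norm_num) g2e1574235 (by norm_num)
  have g2e3148471 : 19 ^ 3148471 % 825353008489 = 520925777309 := pow_mod_s1 19 825353008489 3148470 3148471 548692730483 520925777309 (by norm_num) g2e3148470 (by norm_num)
  have g2e6296942 : 19 ^ 6296942 % 825353008489 = 701905284191 := pow_mod_sq 19 825353008489 3148471 6296942 520925777309 701905284191 (by norm_num) g2e3148471 (by norm_num)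
  have g2e6296943 : 19 ^ 6296943 % 825353008489 = 130552263805 := pow_mod_s1 19 825353008489 6296942 6296943 701905284191 130552263805 (by norm_num) g2e6296942 (by norm_num)
  have g2e12593886 : 19 ^ 12593886 % 825353008489 = 71948502463 := pow_mod_sq 19 825353008489 6296943 12593886 130552263805 71948502463 (by norm_num) g2e6296943 (by norm_num)
  have g2e12593887 : 19 ^ 12593887 % 825353008489 = 541668538308 := pow_mod_s1 19 825353008489 12593886 12593887 71948502463 541668538308 (by norm_num) g2e12593886 (by norm_num)
  have g2e25187774 : 19 ^ 25187774 % 825353008489 = 199342080727 := pow_mod_sq 19 825353008489 12593887 25187774 541668538308 199342080727 (by norm_num) g2e12593887 (by norm_num)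
  have g2e50375548 : 19 ^ 50375548 % 825353008489 = 387018414913 := pow_mod_sq 19 825353008489 25187774 50375548 199342080727 387018414913 (by norm_num) g2e25187774 (by norm_num)
  have g2e50375549 : 19 ^ 50375549 % 825353008489 = 750525815435 := pow_mod_s1 19 825353008489 50375548 50375549 387018414913 750525815435 (by norm_num) g2e50375548 (by norm_num)
  have g2e100751098 : 19 ^ 100751098 % 825353008489 = 154399273381 := pow_mod_sq 19 825353008489 50375549 100751098 750525815435 154399273381 (by norm_num) g2e50375549 (by norm_num)
  have g2e100751099 : 19 ^ 100751099 % 825353008489 = 457527168772 := pow_mod_s1 19 825353008489 100751098 100751099 154399273381 457527168772 (by norm_num) g2e100751098 (by norm_num)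
  have g2e201502198 : 19 ^ 201502198 % 825353008489 = 605616131859 := pow_mod_sq 19 825353008489 100751099 201502198 457527168772 605616131859 (by norm_num) g2e100751099 (by norm_num)
  have g2e201502199 : 19 ^ 201502199 % 825353008489 = 777117394964 := pow_mod_s1 19 825353008489 201502198 201502199 605616131859 777117394964 (by norm_num) g2e201502198 (by norm_num)
  have g2e403004398 : 19 ^ 403004398 % 825353008489 = 96616893182 := pow_mod_sq 19 825353008489 201502199 403004398 777117394964 96616893182 (by norm_num) g2e201502199 (by norm_num)
  have g2e806008796 : 19 ^ 806008796 % 825353008489 = 364053609616 := pow_mod_sq 19 825353008489 403004398 806008796 96616893182 364053609616 (by norm_num) g2e403004398 (by norm_num)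
  have g2e806008797 : 19 ^ 806008797 % 825353008489 = 314194514792 := pow_mod_s1 19 825353008489 806008796 806008797 364053609616 314194514792 (by norm_num) g2e806008796 (by norm_num)
  have g2e1612017594 : 19 ^ 1612017594 % 825353008489 = 99982541833 := pow_mod_sq 19 825353008489 806008797 1612017594 314194514792 99982541833 (by norm_num) g2e806008797 (by norm_num)
  have g2e3224035188 : 19 ^ 3224035188 % 825353008489 = 657091316100 := pow_mod_sq 19 825353008489 1612017594 3224035188 99982541833 657091316100 (by norm_num) g2e1612017594 (by norm_num)
  have g2e3224035189 : 19 ^ 3224035189 % 825353008489 = 104439878565 := pow_mod_s1 19 825353008489 3224035188 3224035189 657091316100 104439878565 (by norm_num) g2e3224035188 (by norm_num)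
  have g2e6448070378 : 19 ^ 6448070378 % 825353008489 = 189062249559 := pow_mod_sq 19 825353008489 3224035189 6448070378 104439878565 189062249559 (by norm_num) g2e3224035189 (by norm_num)
  have g2e12896140756 : 19 ^ 12896140756 % 825353008489 = 298125844366 := pow_mod_sq 19 825353008489 6448070378 12896140756 189062249559 298125844366 (by norm_num) g2e6448070378 (by norm_num)
  have g2e12896140757 : 19 ^ 12896140757 % 825353008489 = 712272992020 := pow_mod_s1 19 825353008489 12896140756 12896140757 298125844366 712272992020 (by norm_num) g2e12896140756 (by norm_num)
  have g2e25792281514 : 19 ^ 25792281514 % 825353008489 = 681307274900 := pow_mod_sq 19 825353008489 12896140757 25792281514 712272992020 681307274900 (by norm_num) g2e12896140757 (by norm_num)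
  have g2e25792281515 : 19 ^ 25792281515 % 825353008489 = 564543095765 := pow_mod_s1 19 825353008489 25792281514 25792281515 681307274900 564543095765 (by norm_num) g2e25792281514 (by norm_num)
  have g2e51584563030 : 19 ^ 51584563030 % 825353008489 = 116403616795 := pow_mod_sq 19 825353008489 25792281515 51584563030 564543095765 116403616795 (by norm_num) g2e25792281515 (by norm_num)
  have g2e103169126060 : 19 ^ 103169126060 % 825353008489 = 286435680627 := pow_mod_sq 19 825353008489 51584563030 103169126060 116403616795 286435680627 (by norm_num) g2e51584563030 (by norm_num)
  have g2e103169126061 : 19 ^ 103169126061 % 825353008489 = 490159880979 := pow_mod_s1 19 825353008489 103169126060 103169126061 286435680627 490159880979 (by norm_num) g2e103169126060 (by norm_num)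
  have g2e206338252122 : 19 ^ 206338252122 % 825353008489 = 747573832689 := pow_mod_sq 19 825353008489 103169126061 206338252122 490159880979 747573832689 (by norm_num) g2e103169126061 (by norm_num)
  have g2e412676504244 : 19 ^ 412676504244 % 825353008489 = 825353008488 := pow_mod_sq 19 825353008489 206338252122 412676504244 747573832689 825353008488 (by norm_num) g2e206338252122 (by norm_num)
  have hne2 : ((19:ℕ) : ZMod 825353008489) ^ 412676504244 ≠ 1 := by
    rw [zmod_pow_eq 825353008489 19 412676504244 825353008488 g2e412676504244]
    exact zmod_ne_one 825353008489 825353008488 (by norm_num) (by norm_num) (by norm_num)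
  have g3e1 : 19 ^ 1 % 825353008489 = 19 := by norm_num
  have g3e2 : 19 ^ 2 % 825353008489 = 361 := pow_mod_sq 19 825353008489 1 2 19 361 (by norm_num) g3e1 (by norm_num)
  have g3e4 : 19 ^ 4 % 825353008489 = 130321 := pow_mod_sq 19 825353008489 2 4 361 130321 (by norm_num) g3e2 (by norm_num)
  have g3e8 : 19 ^ 8 % 825353008489 = 16983563041 := pow_mod_sq 19 825353008489 4 8 130321 16983563041 (by norm_num) g3e4 (by norm_num)
  have g3e16 : 19 ^ 16 % 825353008489 = 575361855279 := pow_mod_sq 19 825353008489 8 16 16983563041 575361855279 (by norm_num) g3e8 (by norm_num)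
  have g3e32 : 19 ^ 32 % 825353008489 = 794101191869 := pow_mod_sq 19 825353008489 16 32 575361855279 794101191869 (by norm_num) g3e16 (by norm_num)
  have g3e64 : 19 ^ 64 % 825353008489 = 181682033888 := pow_mod_sq 19 825353008489 32 64 794101191869 181682033888 (by norm_num) g3e32 (by norm_num)
  have g3e128 : 19 ^ 128 % 825353008489 = 387818411022 := pow_mod_sq 19 825353008489 64 128 181682033888 387818411022 (by norm_num) g3e64 (by norm_num)
  have g3e256 : 19 ^ 256 % 825353008489 = 792363730317 := pow_mod_sq 19 825353008489 128 256 387818411022 792363730317 (by norm_num) g3e128 (by norm_num)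
  have g3e512 : 19 ^ 512 % 825353008489 = 741174432141 := pow_mod_sq 19 825353008489 256 512 792363730317 741174432141 (by norm_num) g3e256 (by norm_num)
  have g3e1024 : 19 ^ 1024 % 825353008489 = 468948044955 := pow_mod_sq 19 825353008489 512 1024 741174432141 468948044955 (by norm_num) g3e512 (by norm_num)
  have g3e2048 : 19 ^ 2048 % 825353008489 = 804130777755 := pow_mod_sq 19 825353008489 1024 2048 468948044955 804130777755 (by norm_num) g3e1024 (by norm_num)
  have g3e2049 : 19 ^ 2049 % 825353008489 = 422130624543 := pow_mod_s1 19 825353008489 2048 2049 804130777755 422130624543 (by norm_num) g3e2048 (by norm_num)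
  have g3e4098 : 19 ^ 4098 % 825353008489 = 452130709299 := pow_mod_sq 19 825353008489 2049 4098 422130624543 452130709299 (by norm_num) g3e2049 (by norm_num)
  have g3e4099 : 19 ^ 4099 % 825353008489 = 336953391791 := pow_mod_s1 19 825353008489 4098 4099 452130709299 336953391791 (by norm_num) g3e4098 (by norm_num)
  have g3e8198 : 19 ^ 8198 % 825353008489 = 31878578836 := pow_mod_sq 19 825353008489 4099 8198 336953391791 31878578836 (by norm_num) g3e4099 (by norm_num)
  have g3e8199 : 19 ^ 8199 % 825353008489 = 605692997884 := pow_mod_s1 19 825353008489 8198 8199 31878578836 605692997884 (by norm_num) g3e8198 (by norm_num)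
  have g3e16398 : 19 ^ 16398 % 825353008489 = 471858266102 := pow_mod_sq 19 825353008489 8199 16398 605692997884 471858266102 (by norm_num) g3e8199 (by norm_num)
  have g3e32796 : 19 ^ 32796 % 825353008489 = 181177421735 := pow_mod_sq 19 825353008489 16398 32796 471858266102 181177421735 (by norm_num) g3e16398 (by norm_num)
  have g3e65592 : 19 ^ 65592 % 825353008489 = 663080976176 := pow_mod_sq 19 825353008489 32796 65592 181177421735 663080976176 (by norm_num) g3e32796 (by norm_num)
  have g3e65593 : 19 ^ 65593 % 825353008489 = 218243420009 := pow_mod_s1 19 825353008489 65592 65593 663080976176 218243420009 (by norm_num) g3e65592 (by norm_num)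
  have g3e131186 : 19 ^ 131186 % 825353008489 = 811933817648 := pow_mod_sq 19 825353008489 65593 131186 218243420009 811933817648 (by norm_num) g3e65593 (by norm_num)
  have g3e262372 : 19 ^ 262372 % 825353008489 = 342998875127 := pow_mod_sq 19 825353008489 131186 262372 811933817648 342998875127 (by norm_num) g3e131186 (by norm_num)
  have g3e524744 : 19 ^ 524744 % 825353008489 = 526452479487 := pow_mod_sq 19 825353008489 262372 524744 342998875127 526452479487 (by norm_num) g3e262372 (by norm_num)
  have g3e524745 : 19 ^ 524745 % 825353008489 = 98361008385 := pow_mod_s1 19 825353008489 524744 524745 526452479487 98361008385 (by norm_num) g3e524744 (by norm_num)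
  have g3e1049490 : 19 ^ 1049490 % 825353008489 = 283355730051 := pow_mod_sq 19 825353008489 524745 1049490 98361008385 283355730051 (by norm_num) g3e524745 (by norm_num)
  have g3e2098980 : 19 ^ 2098980 % 825353008489 = 64030766023 := pow_mod_sq 19 825353008489 1049490 2098980 283355730051 64030766023 (by norm_num) g3e1049490 (by norm_num)
  have g3e2098981 : 19 ^ 2098981 % 825353008489 = 391231545948 := pow_mod_s1 19 825353008489 2098980 2098981 64030766023 391231545948 (by norm_num) g3e2098980 (by norm_num)
  have g3e4197962 : 19 ^ 4197962 % 825353008489 = 349193866652 := pow_mod_sq 19 825353008489 2098981 4197962 391231545948 349193866652 (by norm_num) g3e2098981 (by norm_num)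
  have g3e8395924 : 19 ^ 8395924 % 825353008489 = 355614380105 := pow_mod_sq 19 825353008489 4197962 8395924 349193866652 355614380105 (by norm_num) g3e4197962 (by norm_num)
  have g3e16791848 : 19 ^ 16791848 % 825353008489 = 564569930842 := pow_mod_sq 19 825353008489 8395924 16791848 355614380105 564569930842 (by norm_num) g3e8395924 (by norm_num)
  have g3e16791849 : 19 ^ 16791849 % 825353008489 = 822592584130 := pow_mod_s1 19 825353008489 16791848 16791849 564569930842 822592584130 (by norm_num) g3e16791848 (by norm_num)
  have g3e33583698 : 19 ^ 33583698 % 825353008489 = 571308201154 := pow_mod_sq 19 825353008489 16791849 33583698 822592584130 571308201154 (by norm_num) g3e16791849 (by norm_num)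
  have g3e33583699 : 19 ^ 33583699 % 825353008489 = 125266711569 := pow_mod_s1 19 825353008489 33583698 33583699 571308201154 125266711569 (by norm_num) g3e33583698 (by norm_num)
  have g3e67167398 : 19 ^ 67167398 % 825353008489 = 653298884033 := pow_mod_sq 19 825353008489 33583699 67167398 125266711569 653298884033 (by norm_num) g3e33583699 (by norm_num)
  have g3e67167399 : 19 ^ 67167399 % 825353008489 = 32383669292 := pow_mod_s1 19 825353008489 67167398 67167399 653298884033 32383669292 (by norm_num) g3e67167398 (by norm_num)
  have g3e134334798 : 19 ^ 134334798 % 825353008489 = 615453919097 := pow_mod_sq 19 825353008489 67167399 134334798 32383669292 615453919097 (by norm_num) g3e67167399 (by norm_num)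
  have g3e134334799 : 19 ^ 134334799 % 825353008489 = 138682343997 := pow_mod_s1 19 825353008489 134334798 134334799 615453919097 138682343997 (by norm_num) g3e134334798 (by norm_num)
  have g3e268669598 : 19 ^ 268669598 % 825353008489 = 402635721063 := pow_mod_sq 19 825353008489 134334799 268669598 138682343997 402635721063 (by norm_num) g3e134334799 (by norm_num)
  have g3e268669599 : 19 ^ 268669599 % 825353008489 = 221901623796 := pow_mod_s1 19 825353008489 268669598 268669599 402635721063 221901623796 (by norm_num) g3e268669598 (by norm_num)
  have g3e537339198 : 19 ^ 537339198 % 825353008489 = 328224457847 := pow_mod_sq 19 825353008489 268669599 537339198 221901623796 328224457847 (by norm_num) g3e268669599 (by norm_num)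
  have g3e1074678396 : 19 ^ 1074678396 % 825353008489 = 140045708582 := pow_mod_sq 19 825353008489 537339198 1074678396 328224457847 140045708582 (by norm_num) g3e537339198 (by norm_num)
  have g3e2149356792 : 19 ^ 2149356792 % 825353008489 = 226679925434 := pow_mod_sq 19 825353008489 1074678396 2149356792 140045708582 226679925434 (by norm_num) g3e1074678396 (by norm_num)
  have g3e4298713584 : 19 ^ 4298713584 % 825353008489 = 270669593341 := pow_mod_sq 19 825353008489 2149356792 4298713584 226679925434 270669593341 (by norm_num) g3e2149356792 (by norm_num)
  have g3e4298713585 : 19 ^ 4298713585 % 825353008489 = 190604222545 := pow_mod_s1 19 825353008489 4298713584 4298713585 270669593341 190604222545 (by norm_num) g3e4298713584 (by norm_num)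
  have g3e8597427170 : 19 ^ 8597427170 % 825353008489 = 606556600731 := pow_mod_sq 19 825353008489 4298713585 8597427170 190604222545 606556600731 (by norm_num) g3e4298713585 (by norm_num)
  have g3e8597427171 : 19 ^ 8597427171 % 825353008489 = 794986303532 := pow_mod_s1 19 825353008489 8597427170 8597427171 606556600731 794986303532 (by norm_num) g3e8597427170 (by norm_num)
  have g3e17194854342 : 19 ^ 17194854342 % 825353008489 = 404716741063 := pow_mod_sq 19 825353008489 8597427171 17194854342 794986303532 404716741063 (by norm_num) g3e8597427171 (by norm_num)
  have g3e17194854343 : 19 ^ 17194854343 % 825353008489 = 261441003796 := pow_mod_s1 19 825353008489 17194854342 17194854343 404716741063 261441003796 (by norm_num) g3e17194854342 (by norm_num)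
  have g3e34389708686 : 19 ^ 34389708686 % 825353008489 = 10518909390 := pow_mod_sq 19 825353008489 17194854343 34389708686 261441003796 10518909390 (by norm_num) g3e17194854343 (by norm_num)
  have g3e34389708687 : 19 ^ 34389708687 % 825353008489 = 199859278410 := pow_mod_s1 19 825353008489 34389708686 34389708687 10518909390 199859278410 (by norm_num) g3e34389708686 (by norm_num)
  have g3e68779417374 : 19 ^ 68779417374 % 825353008489 = 789808588795 := pow_mod_sq 19 825353008489 34389708687 68779417374 199859278410 789808588795 (by norm_num) g3e34389708687 (by norm_num)
  have g3e137558834748 : 19 ^ 137558834748 % 825353008489 = 445127726531 := pow_mod_sq 19 825353008489 68779417374 137558834748 789808588795 445127726531 (by norm_num) g3e68779417374 (by norm_num)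
  have g3e275117669496 : 19 ^ 275117669496 % 825353008489 = 445127726530 := pow_mod_sq 19 825353008489 137558834748 275117669496 445127726531 445127726530 (by norm_num) g3e137558834748 (by norm_num)
  have hne3 : ((19:ℕ) : ZMod 825353008489) ^ 275117669496 ≠ 1 := by
    rw [zmod_pow_eq 825353008489 19 275117669496 445127726530 g3e275117669496]
    exact zmod_ne_one 825353008489 445127726530 (by norm_num) (by norm_num) (by norm_num)
  have g3821078743e1 : 19 ^ 1 % 825353008489 = 19 := by norm_num
  have g3821078743e2 : 19 ^ 2 % 825353008489 = 361 := pow_mod_sq 19 825353008489 1 2 19 361 (by norm_num) g3821078743e1 (by norm_num)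
  have g3821078743e3 : 19 ^ 3 % 825353008489 = 6859 := pow_mod_s1 19 825353008489 2 3 361 6859 (by norm_num) g3821078743e2 (by norm_num)
  have g3821078743e6 : 19 ^ 6 % 825353008489 = 47045881 := pow_mod_sq 19 825353008489 3 6 6859 47045881 (by norm_num) g3821078743e3 (by norm_num)
  have g3821078743e12 : 19 ^ 12 % 825353008489 = 543503307152 := pow_mod_sq 19 825353008489 6 12 47045881 543503307152 (by norm_num) g3821078743e6 (by norm_num)
  have g3821078743e13 : 19 ^ 13 % 825353008489 = 422326734020 := pow_mod_s1 19 825353008489 12 13 543503307152 422326734020 (by norm_num) g3821078743e12 (by norm_num)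
  have g3821078743e26 : 19 ^ 26 % 825353008489 = 659014447650 := pow_mod_sq 19 825353008489 13 26 422326734020 659014447650 (by norm_num) g3821078743e13 (by norm_num)
  have g3821078743e27 : 19 ^ 27 % 825353008489 = 140979378015 := pow_mod_s1 19 825353008489 26 27 659014447650 140979378015 (by norm_num) g3821078743e26 (by norm_num)
  have g3821078743e54 : 19 ^ 54 % 825353008489 = 281784224065 := pow_mod_sq 19 825353008489 27 54 140979378015 281784224065 (by norm_num) g3821078743e27 (by norm_num)
  have g3821078743e108 : 19 ^ 108 % 825353008489 = 106124957431 := pow_mod_sq 19 825353008489 54 108 281784224065 106124957431 (by norm_num) g3821078743e54 (by norm_num)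
  have g3821078743e216 : 19 ^ 216 % 825353008489 = 660801105550 := pow_mod_sq 19 825353008489 108 216 106124957431 660801105550 (by norm_num) g3821078743e108 (by norm_num)
  have hne3821078743 : ((19:ℕ) : ZMod 825353008489) ^ 216 ≠ 1 := by
    rw [zmod_pow_eq 825353008489 19 216 660801105550 g3821078743e216]
    exact zmod_ne_one 825353008489 660801105550 (by norm_num) (by norm_num) (by norm_num)
  refine lucas_primality 825353008489 ((19:ℕ) : ZMod 825353008489) hfull ?_
  intro q hq hdvd
  rw [show (825353008489:ℕ) - 1 = 2 ^ 3 * 3 ^ 3 * 3821078743 by norm_num] at hdvd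
  have hqcases : q = 2 ∨ q = 3 ∨ q = 3821078743 := by
    rcases (Nat.Prime.dvd_mul hq).mp hdvd with hdvdl | hdvdr
    · rcases (Nat.Prime.dvd_mul hq).mp hdvdl with hdvdll | hdvdlr
      · have hdvdllp : q ∣ 2 := hq.dvd_of_dvd_pow hdvdll
        have := (Nat.prime_dvd_prime_iff_eq hq Nat.prime_two).mp hdvdllp
        exact Or.inl this
      · have hdvdlrp : q ∣ 3 := hq.dvd_of_dvd_pow hdvdlr
        have := (Nat.prime_dvd_prime_iff_eq hq Nat.prime_three).mp hdvdlrp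
        exact Or.inr (Or.inl this)
    · have := (Nat.prime_dvd_prime_iff_eq hq prime_r).mp hdvdr
      exact Or.inr (Or.inr (this))
  rcases hqcases with rfl | rfl | rfl
  · rw [show (825353008489:ℕ) - 1 = 412676504244 * 2 by norm_num, Nat.mul_div_cancel _ (by norm_num)]
    exact hne2
  · rw [show (825353008489:ℕ) - 1 = 275117669496 * 3 by norm_num, Nat.mul_div_cancel _ (by norm_num)]
    exact hne3
  · rw [show (825353008489:ℕ) - 1 = 216 * 3821078743 by norm_num, Nat.mul_div_cancel _ (by norm_num)]
    exact hne3821078743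

private lemma prime_p2 : Nat.Prime 825353062753 := by
  have h1 : 5 ^ 1 % 825353062753 = 5 := by norm_num
  have h2 : 5 ^ 2 % 825353062753 = 25 := pow_mod_sq 5 825353062753 1 2 5 25 (by norm_num) h1 (by norm_num)
  have h3 : 5 ^ 3 % 825353062753 = 125 := pow_mod_s1 5 825353062753 2 3 25 125 (by norm_num) h2 (by norm_num)
  have h6 : 5 ^ 6 % 825353062753 = 15625 := pow_mod_sq 5 825353062753 3 6 125 15625 (by norm_num) h3 (by norm_num)
  have h12 : 5 ^ 12 % 825353062753 = 244140625 := pow_mod_sq 5 825353062753 6 12 15625 244140625 (by norm_num) h6 (by norm_num)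
  have h24 : 5 ^ 24 % 825353062753 = 122642557224 := pow_mod_sq 5 825353062753 12 24 244140625 122642557224 (by norm_num) h12 (by norm_num)
  have h48 : 5 ^ 48 % 825353062753 = 468830167522 := pow_mod_sq 5 825353062753 24 48 122642557224 468830167522 (by norm_num) h24 (by norm_num)
  have h96 : 5 ^ 96 % 825353062753 = 764702188434 := pow_mod_sq 5 825353062753 48 96 468830167522 764702188434 (by norm_num) h48 (by norm_num)
  have h192 : 5 ^ 192 % 825353062753 = 207389372612 := pow_mod_sq 5 825353062753 96 192 764702188434 207389372612 (by norm_num) h96 (by norm_num)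
  have h384 : 5 ^ 384 % 825353062753 = 675591891315 := pow_mod_sq 5 825353062753 192 384 207389372612 675591891315 (by norm_num) h192 (by norm_num)
  have h768 : 5 ^ 768 % 825353062753 = 803772582510 := pow_mod_sq 5 825353062753 384 768 675591891315 803772582510 (by norm_num) h384 (by norm_num)
  have h1536 : 5 ^ 1536 % 825353062753 = 446709451912 := pow_mod_sq 5 825353062753 768 1536 803772582510 446709451912 (by norm_num) h768 (by norm_num)
  have h1537 : 5 ^ 1537 % 825353062753 = 582841134054 := pow_mod_s1 5 825353062753 1536 1537 446709451912 582841134054 (by norm_num) h1536 (by norm_num)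
  have h3074 : 5 ^ 3074 % 825353062753 = 446026524464 := pow_mod_sq 5 825353062753 1537 3074 582841134054 446026524464 (by norm_num) h1537 (by norm_num)
  have h6148 : 5 ^ 6148 % 825353062753 = 73044371790 := pow_mod_sq 5 825353062753 3074 6148 446026524464 73044371790 (by norm_num) h3074 (by norm_num)
  have h6149 : 5 ^ 6149 % 825353062753 = 365221858950 := pow_mod_s1 5 825353062753 6148 6149 73044371790 365221858950 (by norm_num) h6148 (by norm_num)
  have h12298 : 5 ^ 12298 % 825353062753 = 767865796886 := pow_mod_sq 5 825353062753 6149 12298 365221858950 767865796886 (by norm_num) h6149 (by norm_num)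
  have h24596 : 5 ^ 24596 % 825353062753 = 469279418717 := pow_mod_sq 5 825353062753 12298 24596 767865796886 469279418717 (by norm_num) h12298 (by norm_num)
  have h24597 : 5 ^ 24597 % 825353062753 = 695690968079 := pow_mod_s1 5 825353062753 24596 24597 469279418717 695690968079 (by norm_num) h24596 (by norm_num)
  have h49194 : 5 ^ 49194 % 825353062753 = 818111103537 := pow_mod_sq 5 825353062753 24597 49194 695690968079 818111103537 (by norm_num) h24597 (by norm_num)
  have h98388 : 5 ^ 98388 % 825353062753 = 728904658110 := pow_mod_sq 5 825353062753 49194 98388 818111103537 728904658110 (by norm_num) h49194 (by norm_num)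
  have h98389 : 5 ^ 98389 % 825353062753 = 343111039538 := pow_mod_s1 5 825353062753 98388 98389 728904658110 343111039538 (by norm_num) h98388 (by norm_num)
  have h196778 : 5 ^ 196778 % 825353062753 = 563649756982 := pow_mod_sq 5 825353062753 98389 196778 343111039538 563649756982 (by norm_num) h98389 (by norm_num)
  have h196779 : 5 ^ 196779 % 825353062753 = 342189596651 := pow_mod_s1 5 825353062753 196778 196779 563649756982 342189596651 (by norm_num) h196778 (by norm_num)
  have h393558 : 5 ^ 393558 % 825353062753 = 470651219879 := pow_mod_sq 5 825353062753 196779 393558 342189596651 470651219879 (by norm_num) h196779 (by norm_num)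
  have h393559 : 5 ^ 393559 % 825353062753 = 702549973889 := pow_mod_s1 5 825353062753 393558 393559 470651219879 702549973889 (by norm_num) h393558 (by norm_num)
  have h787118 : 5 ^ 787118 % 825353062753 = 241156969388 := pow_mod_sq 5 825353062753 393559 787118 702549973889 241156969388 (by norm_num) h393559 (by norm_num)
  have h1574236 : 5 ^ 1574236 % 825353062753 = 648726704493 := pow_mod_sq 5 825353062753 787118 1574236 241156969388 648726704493 (by norm_num) h787118 (by norm_num)
  have h3148472 : 5 ^ 3148472 % 825353062753 = 185320846678 := pow_mod_sq 5 825353062753 1574236 3148472 648726704493 185320846678 (by norm_num) h1574236 (by norm_num)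
  have h6296944 : 5 ^ 6296944 % 825353062753 = 231759208738 := pow_mod_sq 5 825353062753 3148472 6296944 185320846678 231759208738 (by norm_num) h3148472 (by norm_num)
  have h12593888 : 5 ^ 12593888 % 825353062753 = 295323947567 := pow_mod_sq 5 825353062753 6296944 12593888 231759208738 295323947567 (by norm_num) h6296944 (by norm_num)
  have h25187776 : 5 ^ 25187776 % 825353062753 = 619859212696 := pow_mod_sq 5 825353062753 12593888 25187776 295323947567 619859212696 (by norm_num) h12593888 (by norm_num)
  have h50375552 : 5 ^ 50375552 % 825353062753 = 752123854677 := pow_mod_sq 5 825353062753 25187776 50375552 619859212696 752123854677 (by norm_num) h25187776 (by norm_num)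
  have h50375553 : 5 ^ 50375553 % 825353062753 = 459207022373 := pow_mod_s1 5 825353062753 50375552 50375553 752123854677 459207022373 (by norm_num) h50375552 (by norm_num)
  have h100751106 : 5 ^ 100751106 % 825353062753 = 562819807538 := pow_mod_sq 5 825353062753 50375553 100751106 459207022373 562819807538 (by norm_num) h50375553 (by norm_num)
  have h201502212 : 5 ^ 201502212 % 825353062753 = 306221473066 := pow_mod_sq 5 825353062753 100751106 201502212 562819807538 306221473066 (by norm_num) h100751106 (by norm_num)
  have h403004424 : 5 ^ 403004424 % 825353062753 = 146683916921 := pow_mod_sq 5 825353062753 201502212 403004424 306221473066 146683916921 (by norm_num) h201502212 (by norm_num)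
  have h403004425 : 5 ^ 403004425 % 825353062753 = 733419584605 := pow_mod_s1 5 825353062753 403004424 403004425 146683916921 733419584605 (by norm_num) h403004424 (by norm_num)
  have h806008850 : 5 ^ 806008850 % 825353062753 = 367354635917 := pow_mod_sq 5 825353062753 403004425 806008850 733419584605 367354635917 (by norm_num) h403004425 (by norm_num)
  have h1612017700 : 5 ^ 1612017700 % 825353062753 = 820224758131 := pow_mod_sq 5 825353062753 806008850 1612017700 367354635917 820224758131 (by norm_num) h806008850 (by norm_num)
  have h3224035400 : 5 ^ 3224035400 % 825353062753 = 233515142969 := pow_mod_sq 5 825353062753 1612017700 3224035400 820224758131 233515142969 (by norm_num) h1612017700 (by norm_num)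
  have h3224035401 : 5 ^ 3224035401 % 825353062753 = 342222652092 := pow_mod_s1 5 825353062753 3224035400 3224035401 233515142969 342222652092 (by norm_num) h3224035400 (by norm_num)
  have h6448070802 : 5 ^ 6448070802 % 825353062753 = 237736797533 := pow_mod_sq 5 825353062753 3224035401 6448070802 342222652092 237736797533 (by norm_num) h3224035401 (by norm_num)
  have h12896141604 : 5 ^ 12896141604 % 825353062753 = 37186589781 := pow_mod_sq 5 825353062753 6448070802 12896141604 237736797533 37186589781 (by norm_num) h6448070802 (by norm_num)
  have h12896141605 : 5 ^ 12896141605 % 825353062753 = 185932948905 := pow_mod_s1 5 825353062753 12896141604 12896141605 37186589781 185932948905 (by norm_num) h12896141604 (by norm_num)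
  have h25792283210 : 5 ^ 25792283210 % 825353062753 = 248353719362 := pow_mod_sq 5 825353062753 12896141605 25792283210 185932948905 248353719362 (by norm_num) h12896141605 (by norm_num)
  have h25792283211 : 5 ^ 25792283211 % 825353062753 = 416415534057 := pow_mod_s1 5 825353062753 25792283210 25792283211 248353719362 416415534057 (by norm_num) h25792283210 (by norm_num)
  have h51584566422 : 5 ^ 51584566422 % 825353062753 = 328786010264 := pow_mod_sq 5 825353062753 25792283211 51584566422 416415534057 328786010264 (by norm_num) h25792283211 (by norm_num)
  have h103169132844 : 5 ^ 103169132844 % 825353062753 = 25213804719 := pow_mod_sq 5 825353062753 51584566422 103169132844 328786010264 25213804719 (by norm_num) h51584566422 (by norm_num)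
  have h206338265688 : 5 ^ 206338265688 % 825353062753 = 106403042785 := pow_mod_sq 5 825353062753 103169132844 206338265688 25213804719 106403042785 (by norm_num) h103169132844 (by norm_num)
  have h412676531376 : 5 ^ 412676531376 % 825353062753 = 825353062752 := pow_mod_sq 5 825353062753 206338265688 412676531376 106403042785 825353062752 (by norm_num) h206338265688 (by norm_num)
  have h825353062752 : 5 ^ 825353062752 % 825353062753 = 1 := pow_mod_sq 5 825353062753 412676531376 825353062752 825353062752 1 (by norm_num) h412676531376 (by norm_num)
  have hfull : ((5:ℕ) : ZMod 825353062753) ^ (825353062753 - 1) = 1 := by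
    have h' := zmod_pow_eq 825353062753 5 825353062752 1 h825353062752
    rw [show (825353062753:ℕ) - 1 = 825353062752 by norm_num, h']; norm_num
  have g2e1 : 5 ^ 1 % 825353062753 = 5 := by norm_num
  have g2e2 : 5 ^ 2 % 825353062753 = 25 := pow_mod_sq 5 825353062753 1 2 5 25 (by norm_num) g2e1 (by norm_num)
  have g2e3 : 5 ^ 3 % 825353062753 = 125 := pow_mod_s1 5 825353062753 2 3 25 125 (by norm_num) g2e2 (by norm_num)
  have g2e6 : 5 ^ 6 % 825353062753 = 15625 := pow_mod_sq 5 825353062753 3 6 125 15625 (by norm_num) g2e3 (by norm_num)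
  have g2e12 : 5 ^ 12 % 825353062753 = 244140625 := pow_mod_sq 5 825353062753 6 12 15625 244140625 (by norm_num) g2e6 (by norm_num)
  have g2e24 : 5 ^ 24 % 825353062753 = 122642557224 := pow_mod_sq 5 825353062753 12 24 244140625 122642557224 (by norm_num) g2e12 (by norm_num)
  have g2e48 : 5 ^ 48 % 825353062753 = 468830167522 := pow_mod_sq 5 825353062753 24 48 122642557224 468830167522 (by norm_num) g2e24 (by norm_num)
  have g2e96 : 5 ^ 96 % 825353062753 = 764702188434 := pow_mod_sq 5 825353062753 48 96 468830167522 764702188434 (by norm_num) g2e48 (by norm_num)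
  have g2e192 : 5 ^ 192 % 825353062753 = 207389372612 := pow_mod_sq 5 825353062753 96 192 764702188434 207389372612 (by norm_num) g2e96 (by norm_num)
  have g2e384 : 5 ^ 384 % 825353062753 = 675591891315 := pow_mod_sq 5 825353062753 192 384 207389372612 675591891315 (by norm_num) g2e192 (by norm_num)
  have g2e768 : 5 ^ 768 % 825353062753 = 803772582510 := pow_mod_sq 5 825353062753 384 768 675591891315 803772582510 (by norm_num) g2e384 (by norm_num)
  have g2e1536 : 5 ^ 1536 % 825353062753 = 446709451912 := pow_mod_sq 5 825353062753 768 1536 803772582510 446709451912 (by norm_num) g2e768 (by norm_num)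
  have g2e1537 : 5 ^ 1537 % 825353062753 = 582841134054 := pow_mod_s1 5 825353062753 1536 1537 446709451912 582841134054 (by norm_num) g2e1536 (by norm_num)
  have g2e3074 : 5 ^ 3074 % 825353062753 = 446026524464 := pow_mod_sq 5 825353062753 1537 3074 582841134054 446026524464 (by norm_num) g2e1537 (by norm_num)
  have g2e6148 : 5 ^ 6148 % 825353062753 = 73044371790 := pow_mod_sq 5 825353062753 3074 6148 446026524464 73044371790 (by norm_num) g2e3074 (by norm_num)
  have g2e6149 : 5 ^ 6149 % 825353062753 = 365221858950 := pow_mod_s1 5 825353062753 6148 6149 73044371790 365221858950 (by norm_num) g2e6148 (by norm_num)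
  have g2e12298 : 5 ^ 12298 % 825353062753 = 767865796886 := pow_mod_sq 5 825353062753 6149 12298 365221858950 767865796886 (by norm_num) g2e6149 (by norm_num)
  have g2e24596 : 5 ^ 24596 % 825353062753 = 469279418717 := pow_mod_sq 5 825353062753 12298 24596 767865796886 469279418717 (by norm_num) g2e12298 (by norm_num)
  have g2e24597 : 5 ^ 24597 % 825353062753 = 695690968079 := pow_mod_s1 5 825353062753 24596 24597 469279418717 695690968079 (by norm_num) g2e24596 (by norm_num)
  have g2e49194 : 5 ^ 49194 % 825353062753 = 818111103537 := pow_mod_sq 5 825353062753 24597 49194 695690968079 818111103537 (by norm_num) g2e24597 (by norm_num)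
  have g2e98388 : 5 ^ 98388 % 825353062753 = 728904658110 := pow_mod_sq 5 825353062753 49194 98388 818111103537 728904658110 (by norm_num) g2e49194 (by norm_num)
  have g2e98389 : 5 ^ 98389 % 825353062753 = 343111039538 := pow_mod_s1 5 825353062753 98388 98389 728904658110 343111039538 (by norm_num) g2e98388 (by norm_num)
  have g2e196778 : 5 ^ 196778 % 825353062753 = 563649756982 := pow_mod_sq 5 825353062753 98389 196778 343111039538 563649756982 (by norm_num) g2e98389 (by norm_num)
  have g2e196779 : 5 ^ 196779 % 825353062753 = 342189596651 := pow_mod_s1 5 825353062753 196778 196779 563649756982 342189596651 (by norm_num) g2e196778 (by norm_num)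
  have g2e393558 : 5 ^ 393558 % 825353062753 = 470651219879 := pow_mod_sq 5 825353062753 196779 393558 342189596651 470651219879 (by norm_num) g2e196779 (by norm_num)
  have g2e393559 : 5 ^ 393559 % 825353062753 = 702549973889 := pow_mod_s1 5 825353062753 393558 393559 470651219879 702549973889 (by norm_num) g2e393558 (by norm_num)
  have g2e787118 : 5 ^ 787118 % 825353062753 = 241156969388 := pow_mod_sq 5 825353062753 393559 787118 702549973889 241156969388 (by norm_num) g2e393559 (by norm_num)
  have g2e1574236 : 5 ^ 1574236 % 825353062753 = 648726704493 := pow_mod_sq 5 825353062753 787118 1574236 241156969388 648726704493 (by norm_num) g2e787118 (by norm_num)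
  have g2e3148472 : 5 ^ 3148472 % 825353062753 = 185320846678 := pow_mod_sq 5 825353062753 1574236 3148472 648726704493 185320846678 (by norm_num) g2e1574236 (by norm_num)
  have g2e6296944 : 5 ^ 6296944 % 825353062753 = 231759208738 := pow_mod_sq 5 825353062753 3148472 6296944 185320846678 231759208738 (by norm_num) g2e3148472 (by norm_num)
  have g2e12593888 : 5 ^ 12593888 % 825353062753 = 295323947567 := pow_mod_sq 5 825353062753 6296944 12593888 231759208738 295323947567 (by norm_num) g2e6296944 (by norm_num)
  have g2e25187776 : 5 ^ 25187776 % 825353062753 = 619859212696 := pow_mod_sq 5 825353062753 12593888 25187776 295323947567 619859212696 (by norm_num) g2e12593888 (by norm_num)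
  have g2e50375552 : 5 ^ 50375552 % 825353062753 = 752123854677 := pow_mod_sq 5 825353062753 25187776 50375552 619859212696 752123854677 (by norm_num) g2e25187776 (by norm_num)
  have g2e50375553 : 5 ^ 50375553 % 825353062753 = 459207022373 := pow_mod_s1 5 825353062753 50375552 50375553 752123854677 459207022373 (by norm_num) g2e50375552 (by norm_num)
  have g2e100751106 : 5 ^ 100751106 % 825353062753 = 562819807538 := pow_mod_sq 5 825353062753 50375553 100751106 459207022373 562819807538 (by norm_num) g2e50375553 (by norm_num)
  have g2e201502212 : 5 ^ 201502212 % 825353062753 = 306221473066 := pow_mod_sq 5 825353062753 100751106 201502212 562819807538 306221473066 (by norm_num) g2e100751106 (by norm_num)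
  have g2e403004424 : 5 ^ 403004424 % 825353062753 = 146683916921 := pow_mod_sq 5 825353062753 201502212 403004424 306221473066 146683916921 (by norm_num) g2e201502212 (by norm_num)
  have g2e403004425 : 5 ^ 403004425 % 825353062753 = 733419584605 := pow_mod_s1 5 825353062753 403004424 403004425 146683916921 733419584605 (by norm_num) g2e403004424 (by norm_num)
  have g2e806008850 : 5 ^ 806008850 % 825353062753 = 367354635917 := pow_mod_sq 5 825353062753 403004425 806008850 733419584605 367354635917 (by norm_num) g2e403004425 (by norm_num)
  have g2e1612017700 : 5 ^ 1612017700 % 825353062753 = 820224758131 := pow_mod_sq 5 825353062753 806008850 1612017700 367354635917 820224758131 (by norm_num) g2e806008850 (by norm_num)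
  have g2e3224035400 : 5 ^ 3224035400 % 825353062753 = 233515142969 := pow_mod_sq 5 825353062753 1612017700 3224035400 820224758131 233515142969 (by norm_num) g2e1612017700 (by norm_num)
  have g2e3224035401 : 5 ^ 3224035401 % 825353062753 = 342222652092 := pow_mod_s1 5 825353062753 3224035400 3224035401 233515142969 342222652092 (by norm_num) g2e3224035400 (by norm_num)
  have g2e6448070802 : 5 ^ 6448070802 % 825353062753 = 237736797533 := pow_mod_sq 5 825353062753 3224035401 6448070802 342222652092 237736797533 (by norm_num) g2e3224035401 (by norm_num)
  have g2e12896141604 : 5 ^ 12896141604 % 825353062753 = 37186589781 := pow_mod_sq 5 825353062753 6448070802 12896141604 237736797533 37186589781 (by norm_num) g2e6448070802 (by norm_num)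
  have g2e12896141605 : 5 ^ 12896141605 % 825353062753 = 185932948905 := pow_mod_s1 5 825353062753 12896141604 12896141605 37186589781 185932948905 (by norm_num) g2e12896141604 (by norm_num)
  have g2e25792283210 : 5 ^ 25792283210 % 825353062753 = 248353719362 := pow_mod_sq 5 825353062753 12896141605 25792283210 185932948905 248353719362 (by norm_num) g2e12896141605 (by norm_num)
  have g2e25792283211 : 5 ^ 25792283211 % 825353062753 = 416415534057 := pow_mod_s1 5 825353062753 25792283210 25792283211 248353719362 416415534057 (by norm_num) g2e25792283210 (by norm_num)
  have g2e51584566422 : 5 ^ 51584566422 % 825353062753 = 328786010264 := pow_mod_sq 5 825353062753 25792283211 51584566422 416415534057 328786010264 (by norm_num) g2e25792283211 (by norm_num)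
  have g2e103169132844 : 5 ^ 103169132844 % 825353062753 = 25213804719 := pow_mod_sq 5 825353062753 51584566422 103169132844 328786010264 25213804719 (by norm_num) g2e51584566422 (by norm_num)
  have g2e206338265688 : 5 ^ 206338265688 % 825353062753 = 106403042785 := pow_mod_sq 5 825353062753 103169132844 206338265688 25213804719 106403042785 (by norm_num) g2e103169132844 (by norm_num)
  have g2e412676531376 : 5 ^ 412676531376 % 825353062753 = 825353062752 := pow_mod_sq 5 825353062753 206338265688 412676531376 106403042785 825353062752 (by norm_num) g2e206338265688 (by norm_num)
  have hne2 : ((5:ℕ) : ZMod 825353062753) ^ 412676531376 ≠ 1 := by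
    rw [zmod_pow_eq 825353062753 5 412676531376 825353062752 g2e412676531376]
    exact zmod_ne_one 825353062753 825353062752 (by norm_num) (by norm_num) (by norm_num)
  have g3e1 : 5 ^ 1 % 825353062753 = 5 := by norm_num
  have g3e2 : 5 ^ 2 % 825353062753 = 25 := pow_mod_sq 5 825353062753 1 2 5 25 (by norm_num) g3e1 (by norm_num)
  have g3e4 : 5 ^ 4 % 825353062753 = 625 := pow_mod_sq 5 825353062753 2 4 25 625 (by norm_num) g3e2 (by norm_num)
  have g3e8 : 5 ^ 8 % 825353062753 = 390625 := pow_mod_sq 5 825353062753 4 8 625 390625 (by norm_num) g3e4 (by norm_num)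
  have g3e16 : 5 ^ 16 % 825353062753 = 152587890625 := pow_mod_sq 5 825353062753 8 16 390625 152587890625 (by norm_num) g3e8 (by norm_num)
  have g3e32 : 5 ^ 32 % 825353062753 = 455741189868 := pow_mod_sq 5 825353062753 16 32 152587890625 455741189868 (by norm_num) g3e16 (by norm_num)
  have g3e64 : 5 ^ 64 % 825353062753 = 558712556935 := pow_mod_sq 5 825353062753 32 64 455741189868 558712556935 (by norm_num) g3e32 (by norm_num)
  have g3e128 : 5 ^ 128 % 825353062753 = 635798060025 := pow_mod_sq 5 825353062753 64 128 558712556935 635798060025 (by norm_num) g3e64 (by norm_num)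
  have g3e256 : 5 ^ 256 % 825353062753 = 201644063239 := pow_mod_sq 5 825353062753 128 256 635798060025 201644063239 (by norm_num) g3e128 (by norm_num)
  have g3e512 : 5 ^ 512 % 825353062753 = 114689239832 := pow_mod_sq 5 825353062753 256 512 201644063239 114689239832 (by norm_num) g3e256 (by norm_num)
  have g3e1024 : 5 ^ 1024 % 825353062753 = 142583467870 := pow_mod_sq 5 825353062753 512 1024 114689239832 142583467870 (by norm_num) g3e512 (by norm_num)
  have g3e2048 : 5 ^ 2048 % 825353062753 = 111811196982 := pow_mod_sq 5 825353062753 1024 2048 142583467870 111811196982 (by norm_num) g3e1024 (by norm_num)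
  have g3e2049 : 5 ^ 2049 % 825353062753 = 559055984910 := pow_mod_s1 5 825353062753 2048 2049 111811196982 559055984910 (by norm_num) g3e2048 (by norm_num)
  have g3e4098 : 5 ^ 4098 % 825353062753 = 347367732256 := pow_mod_sq 5 825353062753 2049 4098 559055984910 347367732256 (by norm_num) g3e2049 (by norm_num)
  have g3e4099 : 5 ^ 4099 % 825353062753 = 86132535774 := pow_mod_s1 5 825353062753 4098 4099 347367732256 86132535774 (by norm_num) g3e4098 (by norm_num)
  have g3e8198 : 5 ^ 8198 % 825353062753 = 821825005362 := pow_mod_sq 5 825353062753 4099 8198 86132535774 821825005362 (by norm_num) g3e4099 (by norm_num)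
  have g3e8199 : 5 ^ 8199 % 825353062753 = 807712775798 := pow_mod_s1 5 825353062753 8198 8199 821825005362 807712775798 (by norm_num) g3e8198 (by norm_num)
  have g3e16398 : 5 ^ 16398 % 825353062753 = 724089482696 := pow_mod_sq 5 825353062753 8199 16398 807712775798 724089482696 (by norm_num) g3e8199 (by norm_num)
  have g3e32796 : 5 ^ 32796 % 825353062753 = 309940377808 := pow_mod_sq 5 825353062753 16398 32796 724089482696 309940377808 (by norm_num) g3e16398 (by norm_num)
  have g3e65592 : 5 ^ 65592 % 825353062753 = 655058290226 := pow_mod_sq 5 825353062753 32796 65592 309940377808 655058290226 (by norm_num) g3e32796 (by norm_num)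
  have g3e65593 : 5 ^ 65593 % 825353062753 = 799232262871 := pow_mod_s1 5 825353062753 65592 65593 655058290226 799232262871 (by norm_num) g3e65592 (by norm_num)
  have g3e131186 : 5 ^ 131186 % 825353062753 = 267943347718 := pow_mod_sq 5 825353062753 65593 131186 799232262871 267943347718 (by norm_num) g3e65593 (by norm_num)
  have g3e262372 : 5 ^ 262372 % 825353062753 = 519421160912 := pow_mod_sq 5 825353062753 131186 262372 267943347718 519421160912 (by norm_num) g3e131186 (by norm_num)
  have g3e524744 : 5 ^ 524744 % 825353062753 = 820577884712 := pow_mod_sq 5 825353062753 262372 524744 519421160912 820577884712 (by norm_num) g3e262372 (by norm_num)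
  have g3e524745 : 5 ^ 524745 % 825353062753 = 801477172548 := pow_mod_s1 5 825353062753 524744 524745 820577884712 801477172548 (by norm_num) g3e524744 (by norm_num)
  have g3e1049490 : 5 ^ 1049490 % 825353062753 = 571254584356 := pow_mod_sq 5 825353062753 524745 1049490 801477172548 571254584356 (by norm_num) g3e524745 (by norm_num)
  have g3e2098980 : 5 ^ 2098980 % 825353062753 = 534130541675 := pow_mod_sq 5 825353062753 1049490 2098980 571254584356 534130541675 (by norm_num) g3e1049490 (by norm_num)
  have g3e2098981 : 5 ^ 2098981 % 825353062753 = 194593520116 := pow_mod_s1 5 825353062753 2098980 2098981 534130541675 194593520116 (by norm_num) g3e2098980 (by norm_num)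
  have g3e4197962 : 5 ^ 4197962 % 825353062753 = 597541513329 := pow_mod_sq 5 825353062753 2098981 4197962 194593520116 597541513329 (by norm_num) g3e2098981 (by norm_num)
  have g3e8395924 : 5 ^ 8395924 % 825353062753 = 655704561434 := pow_mod_sq 5 825353062753 4197962 8395924 597541513329 655704561434 (by norm_num) g3e4197962 (by norm_num)
  have g3e8395925 : 5 ^ 8395925 % 825353062753 = 802463618911 := pow_mod_s1 5 825353062753 8395924 8395925 655704561434 802463618911 (by norm_num) g3e8395924 (by norm_num)
  have g3e16791850 : 5 ^ 16791850 % 825353062753 = 287393427921 := pow_mod_sq 5 825353062753 8395925 16791850 802463618911 287393427921 (by norm_num) g3e8395925 (by norm_num)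
  have g3e16791851 : 5 ^ 16791851 % 825353062753 = 611614076852 := pow_mod_s1 5 825353062753 16791850 16791851 287393427921 611614076852 (by norm_num) g3e16791850 (by norm_num)
  have g3e33583702 : 5 ^ 33583702 % 825353062753 = 510704782130 := pow_mod_sq 5 825353062753 16791851 33583702 611614076852 510704782130 (by norm_num) g3e16791851 (by norm_num)
  have g3e67167404 : 5 ^ 67167404 % 825353062753 = 784003693690 := pow_mod_sq 5 825353062753 33583702 67167404 510704782130 784003693690 (by norm_num) g3e33583702 (by norm_num)
  have g3e134334808 : 5 ^ 134334808 % 825353062753 = 730763038702 := pow_mod_sq 5 825353062753 67167404 134334808 784003693690 730763038702 (by norm_num) g3e67167404 (by norm_num)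
  have g3e268669616 : 5 ^ 268669616 % 825353062753 = 75446154477 := pow_mod_sq 5 825353062753 134334808 268669616 730763038702 75446154477 (by norm_num) g3e134334808 (by norm_num)
  have g3e537339232 : 5 ^ 537339232 % 825353062753 = 757260393796 := pow_mod_sq 5 825353062753 268669616 537339232 75446154477 757260393796 (by norm_num) g3e268669616 (by norm_num)
  have g3e537339233 : 5 ^ 537339233 % 825353062753 = 484889717968 := pow_mod_s1 5 825353062753 537339232 537339233 757260393796 484889717968 (by norm_num) g3e537339232 (by norm_num)
  have g3e1074678466 : 5 ^ 1074678466 % 825353062753 = 332012265037 := pow_mod_sq 5 825353062753 537339233 1074678466 484889717968 332012265037 (by norm_num) g3e537339233 (by norm_num)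
  have g3e1074678467 : 5 ^ 1074678467 % 825353062753 = 9355199679 := pow_mod_s1 5 825353062753 1074678466 1074678467 332012265037 9355199679 (by norm_num) g3e1074678466 (by norm_num)
  have g3e2149356934 : 5 ^ 2149356934 % 825353062753 = 699851166007 := pow_mod_sq 5 825353062753 1074678467 2149356934 9355199679 699851166007 (by norm_num) g3e1074678467 (by norm_num)
  have g3e4298713868 : 5 ^ 4298713868 % 825353062753 = 353846267465 := pow_mod_sq 5 825353062753 2149356934 4298713868 699851166007 353846267465 (by norm_num) g3e2149356934 (by norm_num)
  have g3e8597427736 : 5 ^ 8597427736 % 825353062753 = 137859158727 := pow_mod_sq 5 825353062753 4298713868 8597427736 353846267465 137859158727 (by norm_num) g3e4298713868 (by norm_num)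
  have g3e8597427737 : 5 ^ 8597427737 % 825353062753 = 689295793635 := pow_mod_s1 5 825353062753 8597427736 8597427737 137859158727 689295793635 (by norm_num) g3e8597427736 (by norm_num)
  have g3e17194855474 : 5 ^ 17194855474 % 825353062753 = 571045603706 := pow_mod_sq 5 825353062753 8597427737 17194855474 689295793635 571045603706 (by norm_num) g3e8597427737 (by norm_num)
  have g3e34389710948 : 5 ^ 34389710948 % 825353062753 = 634828273807 := pow_mod_sq 5 825353062753 17194855474 34389710948 571045603706 634828273807 (by norm_num) g3e17194855474 (by norm_num)
  have g3e68779421896 : 5 ^ 68779421896 % 825353062753 = 402108427672 := pow_mod_sq 5 825353062753 34389710948 68779421896 634828273807 402108427672 (by norm_num) g3e34389710948 (by norm_num)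
  have g3e137558843792 : 5 ^ 137558843792 % 825353062753 = 289869498760 := pow_mod_sq 5 825353062753 68779421896 137558843792 402108427672 289869498760 (by norm_num) g3e68779421896 (by norm_num)
  have g3e275117687584 : 5 ^ 275117687584 % 825353062753 = 289869498759 := pow_mod_sq 5 825353062753 137558843792 275117687584 289869498760 289869498759 (by norm_num) g3e137558843792 (by norm_num)
  have hne3 : ((5:ℕ) : ZMod 825353062753) ^ 275117687584 ≠ 1 := by
    rw [zmod_pow_eq 825353062753 5 275117687584 289869498759 g3e275117687584]
    exact zmod_ne_one 825353062753 289869498759 (by norm_num) (by norm_num) (by norm_num)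
  have g227e1 : 5 ^ 1 % 825353062753 = 5 := by norm_num
  have g227e2 : 5 ^ 2 % 825353062753 = 25 := pow_mod_sq 5 825353062753 1 2 5 25 (by norm_num) g227e1 (by norm_num)
  have g227e3 : 5 ^ 3 % 825353062753 = 125 := pow_mod_s1 5 825353062753 2 3 25 125 (by norm_num) g227e2 (by norm_num)
  have g227e6 : 5 ^ 6 % 825353062753 = 15625 := pow_mod_sq 5 825353062753 3 6 125 15625 (by norm_num) g227e3 (by norm_num)
  have g227e12 : 5 ^ 12 % 825353062753 = 244140625 := pow_mod_sq 5 825353062753 6 12 15625 244140625 (by norm_num) g227e6 (by norm_num)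
  have g227e13 : 5 ^ 13 % 825353062753 = 1220703125 := pow_mod_s1 5 825353062753 12 13 244140625 1220703125 (by norm_num) g227e12 (by norm_num)
  have g227e26 : 5 ^ 26 % 825353062753 = 590004742341 := pow_mod_sq 5 825353062753 13 26 1220703125 590004742341 (by norm_num) g227e13 (by norm_num)
  have g227e27 : 5 ^ 27 % 825353062753 = 473964523446 := pow_mod_s1 5 825353062753 26 27 590004742341 473964523446 (by norm_num) g227e26 (by norm_num)
  have g227e54 : 5 ^ 54 % 825353062753 = 462935598375 := pow_mod_sq 5 825353062753 27 54 473964523446 462935598375 (by norm_num) g227e27 (by norm_num)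
  have g227e108 : 5 ^ 108 % 825353062753 = 238366473 := pow_mod_sq 5 825353062753 54 108 462935598375 238366473 (by norm_num) g227e54 (by norm_num)
  have g227e216 : 5 ^ 216 % 825353062753 = 445257480456 := pow_mod_sq 5 825353062753 108 216 238366473 445257480456 (by norm_num) g227e108 (by norm_num)
  have g227e432 : 5 ^ 432 % 825353062753 = 736335561775 := pow_mod_sq 5 825353062753 216 432 445257480456 736335561775 (by norm_num) g227e216 (by norm_num)
  have g227e433 : 5 ^ 433 % 825353062753 = 380265557863 := pow_mod_s1 5 825353062753 432 433 736335561775 380265557863 (by norm_num) g227e432 (by norm_num)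
  have g227e866 : 5 ^ 866 % 825353062753 = 669653383503 := pow_mod_sq 5 825353062753 433 866 380265557863 669653383503 (by norm_num) g227e433 (by norm_num)
  have g227e1732 : 5 ^ 1732 % 825353062753 = 81564853221 := pow_mod_sq 5 825353062753 866 1732 669653383503 81564853221 (by norm_num) g227e866 (by norm_num)
  have g227e1733 : 5 ^ 1733 % 825353062753 = 407824266105 := pow_mod_s1 5 825353062753 1732 1733 81564853221 407824266105 (by norm_num) g227e1732 (by norm_num)
  have g227e3466 : 5 ^ 3466 % 825353062753 = 170330922615 := pow_mod_sq 5 825353062753 1733 3466 407824266105 170330922615 (by norm_num) g227e1733 (by norm_num)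
  have g227e3467 : 5 ^ 3467 % 825353062753 = 26301550322 := pow_mod_s1 5 825353062753 3466 3467 170330922615 26301550322 (by norm_num) g227e3466 (by norm_num)
  have g227e6934 : 5 ^ 6934 % 825353062753 = 465347465103 := pow_mod_sq 5 825353062753 3467 6934 26301550322 465347465103 (by norm_num) g227e3467 (by norm_num)
  have g227e13868 : 5 ^ 13868 % 825353062753 = 268070317394 := pow_mod_sq 5 825353062753 6934 13868 465347465103 268070317394 (by norm_num) g227e6934 (by norm_num)
  have g227e13869 : 5 ^ 13869 % 825353062753 = 514998524217 := pow_mod_s1 5 825353062753 13868 13869 268070317394 514998524217 (by norm_num) g227e13868 (by norm_num)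
  have g227e27738 : 5 ^ 27738 % 825353062753 = 343583162934 := pow_mod_sq 5 825353062753 13869 27738 514998524217 343583162934 (by norm_num) g227e13869 (by norm_num)
  have g227e27739 : 5 ^ 27739 % 825353062753 = 67209689164 := pow_mod_s1 5 825353062753 27738 27739 343583162934 67209689164 (by norm_num) g227e27738 (by norm_num)
  have g227e55478 : 5 ^ 55478 % 825353062753 = 88774115400 := pow_mod_sq 5 825353062753 27739 55478 67209689164 88774115400 (by norm_num) g227e27739 (by norm_num)
  have g227e55479 : 5 ^ 55479 % 825353062753 = 443870577000 := pow_mod_s1 5 825353062753 55478 55479 88774115400 443870577000 (by norm_num) g227e55478 (by norm_num)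
  have g227e110958 : 5 ^ 110958 % 825353062753 = 88053158111 := pow_mod_sq 5 825353062753 55479 110958 443870577000 88053158111 (by norm_num) g227e55479 (by norm_num)
  have g227e110959 : 5 ^ 110959 % 825353062753 = 440265790555 := pow_mod_s1 5 825353062753 110958 110959 88053158111 440265790555 (by norm_num) g227e110958 (by norm_num)
  have g227e221918 : 5 ^ 221918 % 825353062753 = 626134154641 := pow_mod_sq 5 825353062753 110959 221918 440265790555 626134154641 (by norm_num) g227e110959 (by norm_num)
  have g227e443836 : 5 ^ 443836 % 825353062753 = 426273629978 := pow_mod_sq 5 825353062753 221918 443836 626134154641 426273629978 (by norm_num) g227e221918 (by norm_num)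
  have g227e443837 : 5 ^ 443837 % 825353062753 = 480662024384 := pow_mod_s1 5 825353062753 443836 443837 426273629978 480662024384 (by norm_num) g227e443836 (by norm_num)
  have g227e887674 : 5 ^ 887674 % 825353062753 = 665253394738 := pow_mod_sq 5 825353062753 443837 887674 480662024384 665253394738 (by norm_num) g227e443837 (by norm_num)
  have g227e1775348 : 5 ^ 1775348 % 825353062753 = 387494739228 := pow_mod_sq 5 825353062753 887674 1775348 665253394738 387494739228 (by norm_num) g227e887674 (by norm_num)
  have g227e1775349 : 5 ^ 1775349 % 825353062753 = 286767570634 := pow_mod_s1 5 825353062753 1775348 1775349 387494739228 286767570634 (by norm_num) g227e1775348 (by norm_num)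
  have g227e3550698 : 5 ^ 3550698 % 825353062753 = 213878703685 := pow_mod_sq 5 825353062753 1775349 3550698 286767570634 213878703685 (by norm_num) g227e1775349 (by norm_num)
  have g227e3550699 : 5 ^ 3550699 % 825353062753 = 244040455672 := pow_mod_s1 5 825353062753 3550698 3550699 213878703685 244040455672 (by norm_num) g227e3550698 (by norm_num)
  have g227e7101398 : 5 ^ 7101398 % 825353062753 = 71016198720 := pow_mod_sq 5 825353062753 3550699 7101398 244040455672 71016198720 (by norm_num) g227e3550699 (by norm_num)
  have g227e7101399 : 5 ^ 7101399 % 825353062753 = 355080993600 := pow_mod_s1 5 825353062753 7101398 7101399 71016198720 355080993600 (by norm_num) g227e7101398 (by norm_num)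
  have g227e14202798 : 5 ^ 14202798 % 825353062753 = 477201576230 := pow_mod_sq 5 825353062753 7101399 14202798 355080993600 477201576230 (by norm_num) g227e7101399 (by norm_num)
  have g227e14202799 : 5 ^ 14202799 % 825353062753 = 735301755644 := pow_mod_s1 5 825353062753 14202798 14202799 477201576230 735301755644 (by norm_num) g227e14202798 (by norm_num)
  have g227e28405598 : 5 ^ 28405598 % 825353062753 = 161987025213 := pow_mod_sq 5 825353062753 14202799 28405598 735301755644 161987025213 (by norm_num) g227e14202799 (by norm_num)
  have g227e56811196 : 5 ^ 56811196 % 825353062753 = 437126043033 := pow_mod_sq 5 825353062753 28405598 56811196 161987025213 437126043033 (by norm_num) g227e28405598 (by norm_num)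
  have g227e113622392 : 5 ^ 113622392 % 825353062753 = 457793875234 := pow_mod_sq 5 825353062753 56811196 113622392 437126043033 457793875234 (by norm_num) g227e56811196 (by norm_num)
  have g227e113622393 : 5 ^ 113622393 % 825353062753 = 638263250664 := pow_mod_s1 5 825353062753 113622392 113622393 457793875234 638263250664 (by norm_num) g227e113622392 (by norm_num)
  have g227e227244786 : 5 ^ 227244786 % 825353062753 = 558518313873 := pow_mod_sq 5 825353062753 113622393 227244786 638263250664 558518313873 (by norm_num) g227e113622393 (by norm_num)
  have g227e454489572 : 5 ^ 454489572 % 825353062753 = 718047260680 := pow_mod_sq 5 825353062753 227244786 454489572 558518313873 718047260680 (by norm_num) g227e227244786 (by norm_num)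
  have g227e908979144 : 5 ^ 908979144 % 825353062753 = 245477934888 := pow_mod_sq 5 825353062753 454489572 908979144 718047260680 245477934888 (by norm_num) g227e454489572 (by norm_num)
  have g227e1817958288 : 5 ^ 1817958288 % 825353062753 = 404218456132 := pow_mod_sq 5 825353062753 908979144 1817958288 245477934888 404218456132 (by norm_num) g227e908979144 (by norm_num)
  have g227e3635916576 : 5 ^ 3635916576 % 825353062753 = 3880590922 := pow_mod_sq 5 825353062753 1817958288 3635916576 404218456132 3880590922 (by norm_num) g227e1817958288 (by norm_num)
  have hne227 : ((5:ℕ) : ZMod 825353062753) ^ 3635916576 ≠ 1 := by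
    rw [zmod_pow_eq 825353062753 5 3635916576 3880590922 g227e3635916576]
    exact zmod_ne_one 825353062753 3880590922 (by norm_num) (by norm_num) (by norm_num)
  have g4567e1 : 5 ^ 1 % 825353062753 = 5 := by norm_num
  have g4567e2 : 5 ^ 2 % 825353062753 = 25 := pow_mod_sq 5 825353062753 1 2 5 25 (by norm_num) g4567e1 (by norm_num)
  have g4567e4 : 5 ^ 4 % 825353062753 = 625 := pow_mod_sq 5 825353062753 2 4 25 625 (by norm_num) g4567e2 (by norm_num)
  have g4567e5 : 5 ^ 5 % 825353062753 = 3125 := pow_mod_s1 5 825353062753 4 5 625 3125 (by norm_num) g4567e4 (by norm_num)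
  have g4567e10 : 5 ^ 10 % 825353062753 = 9765625 := pow_mod_sq 5 825353062753 5 10 3125 9765625 (by norm_num) g4567e5 (by norm_num)
  have g4567e20 : 5 ^ 20 % 825353062753 = 451829424030 := pow_mod_sq 5 825353062753 10 20 9765625 451829424030 (by norm_num) g4567e10 (by norm_num)
  have g4567e21 : 5 ^ 21 % 825353062753 = 608440994644 := pow_mod_s1 5 825353062753 20 21 451829424030 608440994644 (by norm_num) g4567e20 (by norm_num)
  have g4567e42 : 5 ^ 42 % 825353062753 = 17250171432 := pow_mod_sq 5 825353062753 21 42 608440994644 17250171432 (by norm_num) g4567e21 (by norm_num)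
  have g4567e43 : 5 ^ 43 % 825353062753 = 86250857160 := pow_mod_s1 5 825353062753 42 43 17250171432 86250857160 (by norm_num) g4567e42 (by norm_num)
  have g4567e86 : 5 ^ 86 % 825353062753 = 414036009755 := pow_mod_sq 5 825353062753 43 86 86250857160 414036009755 (by norm_num) g4567e43 (by norm_num)
  have g4567e172 : 5 ^ 172 % 825353062753 = 330617378041 := pow_mod_sq 5 825353062753 86 172 414036009755 330617378041 (by norm_num) g4567e86 (by norm_num)
  have g4567e344 : 5 ^ 344 % 825353062753 = 701267164417 := pow_mod_sq 5 825353062753 172 344 330617378041 701267164417 (by norm_num) g4567e172 (by norm_num)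
  have g4567e688 : 5 ^ 688 % 825353062753 = 21595217897 := pow_mod_sq 5 825353062753 344 688 701267164417 21595217897 (by norm_num) g4567e344 (by norm_num)
  have g4567e689 : 5 ^ 689 % 825353062753 = 107976089485 := pow_mod_s1 5 825353062753 688 689 21595217897 107976089485 (by norm_num) g4567e688 (by norm_num)
  have g4567e1378 : 5 ^ 1378 % 825353062753 = 802619105280 := pow_mod_sq 5 825353062753 689 1378 107976089485 802619105280 (by norm_num) g4567e689 (by norm_num)
  have g4567e2756 : 5 ^ 2756 % 825353062753 = 410313259350 := pow_mod_sq 5 825353062753 1378 2756 802619105280 410313259350 (by norm_num) g4567e1378 (by norm_num)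
  have g4567e2757 : 5 ^ 2757 % 825353062753 = 400860171244 := pow_mod_s1 5 825353062753 2756 2757 410313259350 400860171244 (by norm_num) g4567e2756 (by norm_num)
  have g4567e5514 : 5 ^ 5514 % 825353062753 = 704820591322 := pow_mod_sq 5 825353062753 2757 5514 400860171244 704820591322 (by norm_num) g4567e2757 (by norm_num)
  have g4567e5515 : 5 ^ 5515 % 825353062753 = 222690705598 := pow_mod_s1 5 825353062753 5514 5515 704820591322 222690705598 (by norm_num) g4567e5514 (by norm_num)
  have g4567e11030 : 5 ^ 11030 % 825353062753 = 770387168962 := pow_mod_sq 5 825353062753 5515 11030 222690705598 770387168962 (by norm_num) g4567e5515 (by norm_num)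
  have g4567e22060 : 5 ^ 22060 % 825353062753 = 210155307091 := pow_mod_sq 5 825353062753 11030 22060 770387168962 210155307091 (by norm_num) g4567e11030 (by norm_num)
  have g4567e44120 : 5 ^ 44120 % 825353062753 = 504937552967 := pow_mod_sq 5 825353062753 22060 44120 210155307091 504937552967 (by norm_num) g4567e22060 (by norm_num)
  have g4567e44121 : 5 ^ 44121 % 825353062753 = 48628576576 := pow_mod_s1 5 825353062753 44120 44121 504937552967 48628576576 (by norm_num) g4567e44120 (by norm_num)
  have g4567e88242 : 5 ^ 88242 % 825353062753 = 615888637264 := pow_mod_sq 5 825353062753 44121 88242 48628576576 615888637264 (by norm_num) g4567e44121 (by norm_num)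
  have g4567e176484 : 5 ^ 176484 % 825353062753 = 250642886629 := pow_mod_sq 5 825353062753 88242 176484 615888637264 250642886629 (by norm_num) g4567e88242 (by norm_num)
  have g4567e176485 : 5 ^ 176485 % 825353062753 = 427861370392 := pow_mod_s1 5 825353062753 176484 176485 250642886629 427861370392 (by norm_num) g4567e176484 (by norm_num)
  have g4567e352970 : 5 ^ 352970 % 825353062753 = 761587933167 := pow_mod_sq 5 825353062753 176485 352970 427861370392 761587933167 (by norm_num) g4567e176485 (by norm_num)
  have g4567e705940 : 5 ^ 705940 % 825353062753 = 294879097385 := pow_mod_sq 5 825353062753 352970 705940 761587933167 294879097385 (by norm_num) g4567e352970 (by norm_num)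
  have g4567e705941 : 5 ^ 705941 % 825353062753 = 649042424172 := pow_mod_s1 5 825353062753 705940 705941 294879097385 649042424172 (by norm_num) g4567e705940 (by norm_num)
  have g4567e1411882 : 5 ^ 1411882 % 825353062753 = 534302927737 := pow_mod_sq 5 825353062753 705941 1411882 649042424172 534302927737 (by norm_num) g4567e705941 (by norm_num)
  have g4567e1411883 : 5 ^ 1411883 % 825353062753 = 195455450426 := pow_mod_s1 5 825353062753 1411882 1411883 534302927737 195455450426 (by norm_num) g4567e1411882 (by norm_num)
  have g4567e2823766 : 5 ^ 2823766 % 825353062753 = 168636297678 := pow_mod_sq 5 825353062753 1411883 2823766 195455450426 168636297678 (by norm_num) g4567e1411883 (by norm_num)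
  have g4567e5647532 : 5 ^ 5647532 % 825353062753 = 506264348401 := pow_mod_sq 5 825353062753 2823766 5647532 168636297678 506264348401 (by norm_num) g4567e2823766 (by norm_num)
  have g4567e5647533 : 5 ^ 5647533 % 825353062753 = 55262553746 := pow_mod_s1 5 825353062753 5647532 5647533 506264348401 55262553746 (by norm_num) g4567e5647532 (by norm_num)
  have g4567e11295066 : 5 ^ 11295066 % 825353062753 = 302181015370 := pow_mod_sq 5 825353062753 5647533 11295066 55262553746 302181015370 (by norm_num) g4567e5647533 (by norm_num)
  have g4567e22590132 : 5 ^ 22590132 % 825353062753 = 369688253857 := pow_mod_sq 5 825353062753 11295066 22590132 302181015370 369688253857 (by norm_num) g4567e11295066 (by norm_num)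
  have g4567e45180264 : 5 ^ 45180264 % 825353062753 = 73870247633 := pow_mod_sq 5 825353062753 22590132 45180264 369688253857 73870247633 (by norm_num) g4567e22590132 (by norm_num)
  have g4567e90360528 : 5 ^ 90360528 % 825353062753 = 815444893821 := pow_mod_sq 5 825353062753 45180264 90360528 73870247633 815444893821 (by norm_num) g4567e45180264 (by norm_num)
  have g4567e180721056 : 5 ^ 180721056 % 825353062753 = 53983876928 := pow_mod_sq 5 825353062753 90360528 180721056 815444893821 53983876928 (by norm_num) g4567e90360528 (by norm_num)
  have hne4567 : ((5:ℕ) : ZMod 825353062753) ^ 180721056 ≠ 1 := by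
    rw [zmod_pow_eq 825353062753 5 180721056 53983876928 g4567e180721056]
    exact zmod_ne_one 825353062753 53983876928 (by norm_num) (by norm_num) (by norm_num)
  have g8293e1 : 5 ^ 1 % 825353062753 = 5 := by norm_num
  have g8293e2 : 5 ^ 2 % 825353062753 = 25 := pow_mod_sq 5 825353062753 1 2 5 25 (by norm_num) g8293e1 (by norm_num)
  have g8293e4 : 5 ^ 4 % 825353062753 = 625 := pow_mod_sq 5 825353062753 2 4 25 625 (by norm_num) g8293e2 (by norm_num)
  have g8293e5 : 5 ^ 5 % 825353062753 = 3125 := pow_mod_s1 5 825353062753 4 5 625 3125 (by norm_num) g8293e4 (by norm_num)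
  have g8293e10 : 5 ^ 10 % 825353062753 = 9765625 := pow_mod_sq 5 825353062753 5 10 3125 9765625 (by norm_num) g8293e5 (by norm_num)
  have g8293e11 : 5 ^ 11 % 825353062753 = 48828125 := pow_mod_s1 5 825353062753 10 11 9765625 48828125 (by norm_num) g8293e10 (by norm_num)
  have g8293e22 : 5 ^ 22 % 825353062753 = 566145784961 := pow_mod_sq 5 825353062753 11 22 48828125 566145784961 (by norm_num) g8293e11 (by norm_num)
  have g8293e23 : 5 ^ 23 % 825353062753 = 354669736546 := pow_mod_s1 5 825353062753 22 23 566145784961 354669736546 (by norm_num) g8293e22 (by norm_num)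
  have g8293e46 : 5 ^ 46 % 825353062753 = 51767329211 := pow_mod_sq 5 825353062753 23 46 354669736546 51767329211 (by norm_num) g8293e23 (by norm_num)
  have g8293e47 : 5 ^ 47 % 825353062753 = 258836646055 := pow_mod_s1 5 825353062753 46 47 51767329211 258836646055 (by norm_num) g8293e46 (by norm_num)
  have g8293e94 : 5 ^ 94 % 825353062753 = 756898782760 := pow_mod_sq 5 825353062753 47 94 258836646055 756898782760 (by norm_num) g8293e47 (by norm_num)
  have g8293e188 : 5 ^ 188 % 825353062753 = 391219033516 := pow_mod_sq 5 825353062753 94 188 756898782760 391219033516 (by norm_num) g8293e94 (by norm_num)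
  have g8293e189 : 5 ^ 189 % 825353062753 = 305389042074 := pow_mod_s1 5 825353062753 188 189 391219033516 305389042074 (by norm_num) g8293e188 (by norm_num)
  have g8293e378 : 5 ^ 378 % 825353062753 = 450091755939 := pow_mod_sq 5 825353062753 189 378 305389042074 450091755939 (by norm_num) g8293e189 (by norm_num)
  have g8293e379 : 5 ^ 379 % 825353062753 = 599752654189 := pow_mod_s1 5 825353062753 378 379 450091755939 599752654189 (by norm_num) g8293e378 (by norm_num)
  have g8293e758 : 5 ^ 758 % 825353062753 = 460630445379 := pow_mod_sq 5 825353062753 379 758 599752654189 460630445379 (by norm_num) g8293e379 (by norm_num)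
  have g8293e759 : 5 ^ 759 % 825353062753 = 652446101389 := pow_mod_s1 5 825353062753 758 759 460630445379 652446101389 (by norm_num) g8293e758 (by norm_num)
  have g8293e1518 : 5 ^ 1518 % 825353062753 = 506548591027 := pow_mod_sq 5 825353062753 759 1518 652446101389 506548591027 (by norm_num) g8293e759 (by norm_num)
  have g8293e3036 : 5 ^ 3036 % 825353062753 = 728854650834 := pow_mod_sq 5 825353062753 1518 3036 506548591027 728854650834 (by norm_num) g8293e1518 (by norm_num)
  have g8293e3037 : 5 ^ 3037 % 825353062753 = 342861003158 := pow_mod_s1 5 825353062753 3036 3037 728854650834 342861003158 (by norm_num) g8293e3036 (by norm_num)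
  have g8293e6074 : 5 ^ 6074 % 825353062753 = 348282756645 := pow_mod_sq 5 825353062753 3037 6074 342861003158 348282756645 (by norm_num) g8293e3037 (by norm_num)
  have g8293e12148 : 5 ^ 12148 % 825353062753 = 376461964725 := pow_mod_sq 5 825353062753 6074 12148 348282756645 376461964725 (by norm_num) g8293e6074 (by norm_num)
  have g8293e24296 : 5 ^ 24296 % 825353062753 = 286899015453 := pow_mod_sq 5 825353062753 12148 24296 376461964725 286899015453 (by norm_num) g8293e12148 (by norm_num)
  have g8293e24297 : 5 ^ 24297 % 825353062753 = 609142014512 := pow_mod_s1 5 825353062753 24296 24297 286899015453 609142014512 (by norm_num) g8293e24296 (by norm_num)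
  have g8293e48594 : 5 ^ 48594 % 825353062753 = 318960007820 := pow_mod_sq 5 825353062753 24297 48594 609142014512 318960007820 (by norm_num) g8293e24297 (by norm_num)
  have g8293e48595 : 5 ^ 48595 % 825353062753 = 769446976347 := pow_mod_s1 5 825353062753 48594 48595 318960007820 769446976347 (by norm_num) g8293e48594 (by norm_num)
  have g8293e97190 : 5 ^ 97190 % 825353062753 = 811137819405 := pow_mod_sq 5 825353062753 48595 97190 769446976347 811137819405 (by norm_num) g8293e48595 (by norm_num)
  have g8293e97191 : 5 ^ 97191 % 825353062753 = 754276846013 := pow_mod_s1 5 825353062753 97190 97191 811137819405 754276846013 (by norm_num) g8293e97190 (by norm_num)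
  have g8293e194382 : 5 ^ 194382 % 825353062753 = 164192072873 := pow_mod_sq 5 825353062753 97191 194382 754276846013 164192072873 (by norm_num) g8293e97191 (by norm_num)
  have g8293e388764 : 5 ^ 388764 % 825353062753 = 638453100753 := pow_mod_sq 5 825353062753 194382 388764 164192072873 638453100753 (by norm_num) g8293e194382 (by norm_num)
  have g8293e388765 : 5 ^ 388765 % 825353062753 = 716206315506 := pow_mod_s1 5 825353062753 388764 388765 638453100753 716206315506 (by norm_num) g8293e388764 (by norm_num)
  have g8293e777530 : 5 ^ 777530 % 825353062753 = 180390492136 := pow_mod_sq 5 825353062753 388765 777530 716206315506 180390492136 (by norm_num) g8293e388765 (by norm_num)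
  have g8293e777531 : 5 ^ 777531 % 825353062753 = 76599397927 := pow_mod_s1 5 825353062753 777530 777531 180390492136 76599397927 (by norm_num) g8293e777530 (by norm_num)
  have g8293e1555062 : 5 ^ 1555062 % 825353062753 = 520154080965 := pow_mod_sq 5 825353062753 777531 1555062 76599397927 520154080965 (by norm_num) g8293e777531 (by norm_num)
  have g8293e1555063 : 5 ^ 1555063 % 825353062753 = 124711216566 := pow_mod_s1 5 825353062753 1555062 1555063 520154080965 124711216566 (by norm_num) g8293e1555062 (by norm_num)
  have g8293e3110126 : 5 ^ 3110126 % 825353062753 = 456468809218 := pow_mod_sq 5 825353062753 1555063 3110126 124711216566 456468809218 (by norm_num) g8293e1555063 (by norm_num)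
  have g8293e3110127 : 5 ^ 3110127 % 825353062753 = 631637920584 := pow_mod_s1 5 825353062753 3110126 3110127 456468809218 631637920584 (by norm_num) g8293e3110126 (by norm_num)
  have g8293e6220254 : 5 ^ 6220254 % 825353062753 = 272918798198 := pow_mod_sq 5 825353062753 3110127 6220254 631637920584 272918798198 (by norm_num) g8293e3110127 (by norm_num)
  have g8293e12440508 : 5 ^ 12440508 % 825353062753 = 591340540931 := pow_mod_sq 5 825353062753 6220254 12440508 272918798198 591340540931 (by norm_num) g8293e6220254 (by norm_num)
  have g8293e24881016 : 5 ^ 24881016 % 825353062753 = 125868363900 := pow_mod_sq 5 825353062753 12440508 24881016 591340540931 125868363900 (by norm_num) g8293e12440508 (by norm_num)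
  have g8293e49762032 : 5 ^ 49762032 % 825353062753 = 663030801516 := pow_mod_sq 5 825353062753 24881016 49762032 125868363900 663030801516 (by norm_num) g8293e24881016 (by norm_num)
  have g8293e99524064 : 5 ^ 99524064 % 825353062753 = 707920407431 := pow_mod_sq 5 825353062753 49762032 99524064 663030801516 707920407431 (by norm_num) g8293e49762032 (by norm_num)
  have hne8293 : ((5:ℕ) : ZMod 825353062753) ^ 99524064 ≠ 1 := by
    rw [zmod_pow_eq 825353062753 5 99524064 707920407431 g8293e99524064]
    exact zmod_ne_one 825353062753 707920407431 (by norm_num) (by norm_num) (by norm_num)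
  refine lucas_primality 825353062753 ((5:ℕ) : ZMod 825353062753) hfull ?_
  intro q hq hdvd
  rw [show (825353062753:ℕ) - 1 = 2 ^ 5 * 3 * 227 * 4567 * 8293 by norm_num] at hdvd
  have hqcases : q = 2 ∨ q = 3 ∨ q = 227 ∨ q = 4567 ∨ q = 8293 := by
    rcases (Nat.Prime.dvd_mul hq).mp hdvd with hdvdl | hdvdr
    · rcases (Nat.Prime.dvd_mul hq).mp hdvdl with hdvdll | hdvdlr
      · rcases (Nat.Prime.dvd_mul hq).mp hdvdll with hdvdlll | hdvdllr
        · rcases (Nat.Prime.dvd_mul hq).mp hdvdlll with hdvdllll | hdvdlllr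
          · have hdvdllllp : q ∣ 2 := hq.dvd_of_dvd_pow hdvdllll
            have := (Nat.prime_dvd_prime_iff_eq hq Nat.prime_two).mp hdvdllllp
            exact Or.inl this
          · have := (Nat.prime_dvd_prime_iff_eq hq Nat.prime_three).mp hdvdlllr
            exact Or.inr (Or.inl this)
        · have := (Nat.prime_dvd_prime_iff_eq hq (by norm_num)).mp hdvdllr
          exact Or.inr (Or.inr (Or.inl this))
      · have := (Nat.prime_dvd_prime_iff_eq hq (by norm_num)).mp hdvdlr
        exact Or.inr (Or.inr (Or.inr (Or.inl this)))
    · have := (Nat.prime_dvd_prime_iff_eq hq (by norm_num)).mp hdvdr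
      exact Or.inr (Or.inr (Or.inr (Or.inr (this))))
  rcases hqcases with rfl | rfl | rfl | rfl | rfl
  · rw [show (825353062753:ℕ) - 1 = 412676531376 * 2 by norm_num, Nat.mul_div_cancel _ (by norm_num)]
    exact hne2
  · rw [show (825353062753:ℕ) - 1 = 275117687584 * 3 by norm_num, Nat.mul_div_cancel _ (by norm_num)]
    exact hne3
  · rw [show (825353062753:ℕ) - 1 = 3635916576 * 227 by norm_num, Nat.mul_div_cancel _ (by norm_num)]
    exact hne227
  · rw [show (825353062753:ℕ) - 1 = 180721056 * 4567 by norm_num, Nat.mul_div_cancel _ (by norm_num)]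
    exact hne4567
  · rw [show (825353062753:ℕ) - 1 = 99524064 * 8293 by norm_num, Nat.mul_div_cancel _ (by norm_num)]
    exact hne8293

private def facs : List ℕ := [3, 106861, 5, 3, 92381, 683, 3, 5, 1193, 3, 108287, 13, 3, 67, 7, 3, 18191, 5, 3, 107, 11, 3, 5, 283, 3, 701, 23, 3, 7, 302399, 3, 11, 5, 3, 859, 7, 3, 5, 29, 3, 7451, 61, 3, 51907, 3449, 3, 79, 5, 3, 7, 13, 3, 5, 11, 3, 31, 7, 3, 1493, 3709, 3, 2333, 5, 3, 11, 373, 3, 5, 23671, 3, 7, 103, 3, 41, 151, 3, 13, 5, 3, 47, 67, 3, 5, 17, 3, 25349, 11, 3, 823, 13, 3, 7, 5, 3, 57107, 23, 3, 5, 7, 3, 17, 185359, 3, 43, 37171, 3, 1427, 5, 3, 353, 877, 3, 5, 137, 3, 13, 463283, 3, 23, 7, 3, 531359, 5, 3, 7159, 29, 3, 5, 13, 3, 11, 71, 3, 7, 17, 3, 73, 5, 3, 113, 7, 3, 5, 72911, 3, 613, 43, 3, 31, 97, 3, 17, 5, 3, 7, 41, 3, 5, 659, 3, 991, 7, 3,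 11, 23, 3, 197, 5, 3, 571, 114407, 3, 5, 47, 3, 7, 53, 3, 397, 31, 3, 139, 5, 3, 597767, 11, 3, 5, 109, 3, 2953, 646687, 3, 13, 6361, 3, 7, 5, 3, 325453, 37, 3, 5, 7, 3, 10009, 13, 3, 937, 73, 3, 249329, 5, 3, 67, 73597, 3, 5, 11, 3, 47, 293, 3, 14851, 7, 3, 59, 5, 3, 11, 127, 3, 5, 23, 3, 144511, 17, 3, 7, 149, 3, 29, 5, 3, 2017, 7, 3, 5, 10391, 3, 137, 11, 3, 17, 101, 3, 23, 5, 3, 7, 313, 3, 5, 1129, 3, 1453, 7, 3, 647, 35897, 3, 13, 5, 3, 37, 43, 3, 5, 41, 3, 7, 67, 3, 79, 11, 3, 337, 5, 3, 1051, 8627, 3, 5, 181019, 3, 11, 216173, 3, 46051, 29, 3, 7, 5, 3, 17, 28201, 3, 5, 7, 3, 13, 37, 3, 1993, 47, 3, 83, 5, 3, 41, 139, 3, 5, 13, 3, 23, 1019, 3, 11, 7, 3, 728851, 5, 3, 31, 53, 3, 5, 17, 3, 107, 3109, 3, 7, 59, 3, 61, 5, 3, 13, 7, 3, 5, 491, 3,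 17]

set_option maxRecDepth 10000 in
private lemma mid : ∀ k, 1 ≤ k → k ≤ 356 → ¬ (825353008489 + 152 * k).Prime := by
  intro k h1 h2
  have hall : (List.range 356).all (fun j => decide (1 < facs.getD j 0) && decide (facs.getD j 0 < 825353008489) && ((825353008489 + 152 * (j+1)) % facs.getD j 0 == 0)) = true := by decide
  have hk := List.all_eq_true.mp hall (k-1) (List.mem_range.mpr (by omega))
  simp only [Bool.and_eq_true, decide_eq_true_eq, beq_iff_eq] at hk
  obtain ⟨⟨ha, hb⟩, hc⟩ := hk
  rw [show k - 1 + 1 = k by omega] at hc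
  exact np _ _ ha (by omega) hc

/-- A gap of length 357·152 in the AP with common difference 152 starting at 825353008489,
with 825353008489 exceeding the square of the gap, and the stated relation between the
floors of the square roots of the bounding primes. -/
theorem exceptional_gap_q152 :
    Nat.Prime 825353008489 ∧
    Nat.Prime (825353008489 + 357 * 152) ∧
    (∀ m : ℕ, 825353008489 < m → m < 825353008489 + 357 * 152 → m % 152 = 825353008489 % 152 → ¬ Nat.Prime m) ∧
    (357 * 152) * (357 * 152) < 825353008489 ∧
    Nat.sqrt 825353008489 = Nat.sqrt (825353008489 + 357 * 152) := by
  refine ⟨prime_p, by rw [show (825353008489 + 357 * 152 : ℕ) = 825353062753 by norm_num]; exact prime_p2, ?_, by norm_num, ?_⟩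
  · intro m h1 h2 h3
    obtain ⟨k, hk1, hk2, rfl⟩ : ∃ k, 1 ≤ k ∧ k ≤ 356 ∧ m = 825353008489 + 152 * k :=
      ⟨(m - 825353008489) / 152, by omega, by omega, by omega⟩
    exact mid k hk1 hk2
  · have hA : 908489 ≤ Nat.sqrt 825353008489 := Nat.le_sqrt.mpr (by norm_num)
    have hB : Nat.sqrt (825353008489 + 357 * 152) < 908490 := Nat.sqrt_lt.mpr (by norm_num)
    have hC : Nat.sqrt 825353008489 ≤ Nat.sqrt (825353008489 + 357 * 152) := Nat.sqrt_le_sqrt (by norm_num)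
    omega
end

section
/- For q = 762 and p = 38943534114929: p is prime, p + 340·762 is prime, no integer m with p < m < p + 340·762 and m ≡ p (mod 762) is prime, and moreover ⌊√p⌋ = ⌊√(p + 340·762)⌋ (in particular p exceeds the square of the gap 340·762 = 259080). -/
/-!
Both endpoints are certified prime by Lucas' test with base 3, using
38943534114928 = 2⁴ · 61 · 36901 · 1081303 and 38943534374008 = 2³ · 11 · 23 · 8179 · 2352473.
Each of the 339 terms of the progression strictly between them has an explicit prime factor.
Finally 6240475² ≤ 38943534114929 and 38943534114929 + 259080 < 6240476², so both square roots
have integer part 6240475.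
-/

theorem Nat.prime_of_lucas {p : ℕ} (hp : 1 < p) (a : ZMod p) (ha : a ^ (p - 1) = 1)
    (hd : ∀ q ∈ (p - 1).primeFactorsList, a ^ ((p - 1) / q) ≠ 1) : p.Prime :=
  lucas_primality p a ha fun q hq hdvd =>
    hd q ((Nat.mem_primeFactorsList (by omega)).2 ⟨hq, hdvd⟩)

theorem Nat.not_prime_add_mul_of_factors (a q : ℕ) (ds : List ℕ)
    (hds : ∀ i (hi : i < ds.length),
      2 ≤ ds[i] ∧ ds[i] < a + q * (i + 1) ∧ ds[i] ∣ a + q * (i + 1))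
    {k : ℕ} (hk₀ : 0 < k) (hk : k ≤ ds.length) : ¬ (a + q * k).Prime := by
  obtain ⟨i, rfl⟩ : ∃ i, k = i + 1 := ⟨k - 1, by omega⟩
  obtain ⟨htwo, hlt, hdvd⟩ := hds i hk
  exact Nat.not_prime_of_dvd_of_lt hdvd htwo hlt

theorem Nat.not_prime_of_modEq_of_forall_not_prime {a q n : ℕ}
    (h : ∀ k, 0 < k → k < n → ¬ (a + q * k).Prime) {m : ℕ} (ham : a < m)
    (hm : m < a + n * q) (hmod : m ≡ a [MOD q]) : ¬ m.Prime := by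
  obtain ⟨k, hk⟩ := (Nat.modEq_iff_dvd' ham.le).mp hmod.symm
  have hkn : q * k < q * n := by rw [mul_comm q n]; omega
  rw [show m = a + q * k by omega]
  refine h k (Nat.pos_of_ne_zero fun hk₀ => ?_) (Nat.lt_of_mul_lt_mul_left hkn)
  simp only [hk₀, mul_zero] at hk
  omega

theorem prime_38943534114929 : Nat.Prime 38943534114929 := by
  refine Nat.prime_of_lucas (by norm_num) 3 (by reduce_mod_char) ?_
  simp only [Nat.reduceSub, Nat.primeFactorsList_ofNat, List.mem_cons, List.not_mem_nil, or_false,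
    forall_eq_or_imp, forall_eq]
  and_intros <;> reduce_mod_char <;> decide

theorem prime_38943534374009 : Nat.Prime 38943534374009 := by
  refine Nat.prime_of_lucas (by norm_num) 3 (by reduce_mod_char) ?_
  simp only [Nat.reduceSub, Nat.primeFactorsList_ofNat, List.mem_cons, List.not_mem_nil, or_false,
    forall_eq_or_imp, forall_eq]
  and_intros <;> reduce_mod_char <;> decide

/-- `gapFactors[i]` is the least prime factor of `38943534114929 + 762 * (i + 1)`. -/
def gapFactors : List ℕ := [
  1063, 61, 5, 43, 41, 11, 743, 5, 17, 7, 1562719, 29, 5, 5813, 19, 13, 7, 5, 53, 35141, 47, 163,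
  5, 7, 37, 17, 6571, 5, 13, 89, 7, 619, 5, 19, 468473, 1051, 127973, 5, 11, 70663, 29, 13, 5,
  31, 7, 41, 43, 5, 73, 11, 79, 7, 5, 113, 13, 23, 241, 5, 7, 17, 11, 37, 5, 1433, 24923, 7,
  14087, 5, 2237, 29, 442991, 11, 5, 16421, 31, 497153, 17, 5, 23, 7, 13, 523, 5, 4721, 193,
  29629, 7, 5, 277, 43, 19, 2251, 5, 7, 20431, 1222411, 71, 5, 29, 2161, 7, 23, 5, 101, 11, 31,
  13, 5, 103, 19, 17, 16229, 5, 131501, 7, 11, 1913, 5, 89, 13, 28867, 7, 5, 61, 23, 21467, 11,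
  5, 7, 79, 1193, 4822199, 5, 25469, 2179, 7, 31, 5, 74779, 67, 44773, 59, 5, 4970519, 17, 13,
  839, 5, 11, 7, 30977, 278269, 5, 2190157, 1171, 2598613, 7, 5, 13, 11, 283, 17, 5, 7, 269987,
  11399, 19, 5, 41, 107, 7, 13, 5, 293, 24359, 43, 997, 5, 17, 35099, 7643, 11, 5, 1361, 7, 19,
  587, 5, 295871, 697523, 1223, 7, 5, 23, 73, 17, 3550711, 5, 7, 196643, 59, 337, 5, 11, 19, 7,
  67, 5, 47, 37, 13, 97, 5, 3343, 11, 83, 23, 5, 43, 7, 821, 1709, 5, 13, 267049, 11, 7, 5, 547,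
  17, 53, 131, 5, 7, 1117, 1982521, 11, 5, 71, 23, 7, 398467, 5, 29, 541, 61, 17, 5, 617, 13, 41,
  3331, 5, 135449, 7, 47, 503, 5, 11, 59, 31, 7, 5, 17, 883, 2819, 229, 5, 7, 11, 199, 25301, 5,
  67, 95393, 7, 107, 5, 439, 113, 11, 29837, 5, 37, 373, 23, 167, 5, 13, 7, 601, 11, 5, 89213,
  61961, 491, 7, 5, 83, 19, 109, 13, 5, 7, 43, 101, 61, 5, 23, 71, 7, 35677, 5, 11, 13, 797,
  26107, 5, 19, 344857, 37, 2339, 5, 7411, 7, 281, 1439, 5, 911, 1163783, 29, 7, 5, 137873, 2953,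
  11, 53, 5, 7]

set_option maxRecDepth 4000 in
theorem not_prime_of_gap (k : ℕ) (hk₀ : 0 < k) (hk : k < 340) :
    ¬ (38943534114929 + 762 * k).Prime :=
  Nat.not_prime_add_mul_of_factors _ _ gapFactors (by decide +kernel) hk₀ (Nat.le_of_lt_succ hk)

/-- A gap of length 340·762 in the AP with common difference 762 starting at 38943534114929,
with 38943534114929 exceeding the square of the gap, and the stated relation between the
floors of the square roots of the bounding primes. -/
theorem exceptional_gap_q762 :
    Nat.Prime 38943534114929 ∧
    Nat.Prime (38943534114929 + 340 * 762) ∧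
    (∀ m : ℕ, 38943534114929 < m → m < 38943534114929 + 340 * 762 → m % 762 = 38943534114929 % 762 → ¬ Nat.Prime m) ∧
    (340 * 762) * (340 * 762) < 38943534114929 ∧
    Nat.sqrt 38943534114929 = Nat.sqrt (38943534114929 + 340 * 762) :=
  ⟨prime_38943534114929, prime_38943534374009,
    fun _ => Nat.not_prime_of_modEq_of_forall_not_prime not_prime_of_gap, by norm_num, by norm_num⟩
end

section
/- The prime p = 1638279983, which is the least prime congruent to 4431139 modulo q = 7197572, satisfies p > φ(q)·(log p)², where φ is Euler's totient function and log the natural logarithm. -/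
set_option maxRecDepth 8000

theorem sq_mod' (a e p c d : ℕ) (h : a ^ e % p = c) (hd : c * c % p = d) :
    a ^ (2 * e) % p = d := by
  calc a ^ (2 * e) % p = (a ^ e * a ^ e) % p := by rw [two_mul, pow_add]
    _ = (a ^ e % p) * (a ^ e % p) % p := Nat.mul_mod _ _ _
    _ = d := by rw [h, hd]

theorem sqmul_mod' (a e p c d : ℕ) (h : a ^ e % p = c)
    (hd : (c * c % p) * (a % p) % p = d) : a ^ (2 * e + 1) % p = d := by
  calc a ^ (2 * e + 1) % p = (a ^ e * a ^ e * a) % p := by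
        rw [pow_succ, two_mul, pow_add]
    _ = ((a ^ e * a ^ e) % p) * (a % p) % p := Nat.mul_mod _ _ _
    _ = ((a ^ e % p) * (a ^ e % p) % p) * (a % p) % p := by rw [Nat.mul_mod (a ^ e)]
    _ = d := by rw [h, hd]

theorem sq_mod (a e f p c d : ℕ) (hf : 2 * e = f) (h : a ^ e % p = c)
    (hd : c * c % p = d) : a ^ f % p = d := hf ▸ sq_mod' a e p c d h hd

theorem sqmul_mod (a e f p c d : ℕ) (hf : 2 * e + 1 = f) (h : a ^ e % p = c)
    (hd : (c * c % p) * (a % p) % p = d) : a ^ f % p = d :=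
  hf ▸ sqmul_mod' a e p c d h hd

theorem zpow_eq (p a n c : ℕ) (h : a ^ n % p = c) : (a : ZMod p) ^ n = (c : ZMod p) := by
  rw [← Nat.cast_pow, ← h, ZMod.natCast_mod]

theorem zne_one (p c : ℕ) (h1 : 1 < c) (h2 : c < p) : (c : ZMod p) ≠ 1 := by
  intro h
  have h3 : ((c : ℕ) : ZMod p) = ((1 : ℕ) : ZMod p) := by simpa using h
  rw [ZMod.natCast_eq_natCast_iff] at h3
  have h4 : c % p = 1 % p := h3
  rw [Nat.mod_eq_of_lt h2, Nat.mod_eq_of_lt (by omega)] at h4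
  omega

theorem prime_819139991 : Nat.Prime 819139991 := by
  have hC0 : 17 ^ 1 % 819139991 = 17 := by norm_num
  have hC1 : 17 ^ 3 % 819139991 = 4913 := sqmul_mod 17 1 3 819139991 17 4913 (by norm_num) hC0 (by norm_num)
  have hC2 : 17 ^ 6 % 819139991 = 24137569 := sq_mod 17 3 6 819139991 4913 24137569 (by norm_num) hC1 (by norm_num)
  have hC3 : 17 ^ 12 % 819139991 = 727231101 := sq_mod 17 6 12 819139991 24137569 727231101 (by norm_num) hC2 (by norm_num)
  have hC4 : 17 ^ 24 % 819139991 = 519363088 := sq_mod 17 12 24 819139991 727231101 519363088 (by norm_num) hC3 (by norm_num)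
  have hC5 : 17 ^ 48 % 819139991 = 279863202 := sq_mod 17 24 48 819139991 519363088 279863202 (by norm_num) hC4 (by norm_num)
  have hC6 : 17 ^ 97 % 819139991 = 606243246 := sqmul_mod 17 48 97 819139991 279863202 606243246 (by norm_num) hC5 (by norm_num)
  have hC7 : 17 ^ 195 % 819139991 = 666920536 := sqmul_mod 17 97 195 819139991 606243246 666920536 (by norm_num) hC6 (by norm_num)
  have hC8 : 17 ^ 390 % 819139991 = 211917271 := sq_mod 17 195 390 819139991 666920536 211917271 (by norm_num) hC7 (by norm_num)
  have hC9 : 17 ^ 781 % 819139991 = 144712999 := sqmul_mod 17 390 781 819139991 211917271 144712999 (by norm_num) hC8 (by norm_num)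
  have hC10 : 17 ^ 1562 % 819139991 = 34684914 := sq_mod 17 781 1562 819139991 144712999 34684914 (by norm_num) hC9 (by norm_num)
  have hC11 : 17 ^ 3124 % 819139991 = 205165390 := sq_mod 17 1562 3124 819139991 34684914 205165390 (by norm_num) hC10 (by norm_num)
  have hC12 : 17 ^ 6249 % 819139991 = 453858893 := sqmul_mod 17 3124 6249 819139991 205165390 453858893 (by norm_num) hC11 (by norm_num)
  have hC13 : 17 ^ 12499 % 819139991 = 802231243 := sqmul_mod 17 6249 12499 819139991 453858893 802231243 (by norm_num) hC12 (by norm_num)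
  have hC14 : 17 ^ 24998 % 819139991 = 508728783 := sq_mod 17 12499 24998 819139991 802231243 508728783 (by norm_num) hC13 (by norm_num)
  have hC15 : 17 ^ 49996 % 819139991 = 375285754 := sq_mod 17 24998 49996 819139991 508728783 375285754 (by norm_num) hC14 (by norm_num)
  have hC16 : 17 ^ 99992 % 819139991 = 53589699 := sq_mod 17 49996 99992 819139991 375285754 53589699 (by norm_num) hC15 (by norm_num)
  have hC17 : 17 ^ 199985 % 819139991 = 583269064 := sqmul_mod 17 99992 199985 819139991 53589699 583269064 (by norm_num) hC16 (by norm_num)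
  have hC18 : 17 ^ 399970 % 819139991 = 515989501 := sq_mod 17 199985 399970 819139991 583269064 515989501 (by norm_num) hC17 (by norm_num)
  have hC19 : 17 ^ 799941 % 819139991 = 62780549 := sqmul_mod 17 399970 799941 819139991 515989501 62780549 (by norm_num) hC18 (by norm_num)
  have hC20 : 17 ^ 1599882 % 819139991 = 416126053 := sq_mod 17 799941 1599882 819139991 62780549 416126053 (by norm_num) hC19 (by norm_num)
  have hC21 : 17 ^ 3199765 % 819139991 = 621629411 := sqmul_mod 17 1599882 3199765 819139991 416126053 621629411 (by norm_num) hC20 (by norm_num)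
  have hC22 : 17 ^ 6399531 % 819139991 = 246775936 := sqmul_mod 17 3199765 6399531 819139991 621629411 246775936 (by norm_num) hC21 (by norm_num)
  have hC23 : 17 ^ 12799062 % 819139991 = 387394499 := sq_mod 17 6399531 12799062 819139991 246775936 387394499 (by norm_num) hC22 (by norm_num)
  have hC24 : 17 ^ 25598124 % 819139991 = 177289462 := sq_mod 17 12799062 25598124 819139991 387394499 177289462 (by norm_num) hC23 (by norm_num)
  have hC25 : 17 ^ 51196249 % 819139991 = 445365693 := sqmul_mod 17 25598124 51196249 819139991 177289462 445365693 (by norm_num) hC24 (by norm_num)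
  have hC26 : 17 ^ 102392498 % 819139991 = 624774664 := sq_mod 17 51196249 102392498 819139991 445365693 624774664 (by norm_num) hC25 (by norm_num)
  have hC27 : 17 ^ 204784997 % 819139991 = 74327899 := sqmul_mod 17 102392498 204784997 819139991 624774664 74327899 (by norm_num) hC26 (by norm_num)
  have hC28 : 17 ^ 409569995 % 819139991 = 819139990 := sqmul_mod 17 204784997 409569995 819139991 74327899 819139990 (by norm_num) hC27 (by norm_num)
  have hC29 : 17 ^ 819139990 % 819139991 = 1 := sq_mod 17 409569995 819139990 819139991 819139990 1 (by norm_num) hC28 (by norm_num)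
  have hD2_0 : 17 ^ 1 % 819139991 = 17 := by norm_num
  have hD2_1 : 17 ^ 3 % 819139991 = 4913 := sqmul_mod 17 1 3 819139991 17 4913 (by norm_num) hD2_0 (by norm_num)
  have hD2_2 : 17 ^ 6 % 819139991 = 24137569 := sq_mod 17 3 6 819139991 4913 24137569 (by norm_num) hD2_1 (by norm_num)
  have hD2_3 : 17 ^ 12 % 819139991 = 727231101 := sq_mod 17 6 12 819139991 24137569 727231101 (by norm_num) hD2_2 (by norm_num)
  have hD2_4 : 17 ^ 24 % 819139991 = 519363088 := sq_mod 17 12 24 819139991 727231101 519363088 (by norm_num) hD2_3 (by norm_num)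
  have hD2_5 : 17 ^ 48 % 819139991 = 279863202 := sq_mod 17 24 48 819139991 519363088 279863202 (by norm_num) hD2_4 (by norm_num)
  have hD2_6 : 17 ^ 97 % 819139991 = 606243246 := sqmul_mod 17 48 97 819139991 279863202 606243246 (by norm_num) hD2_5 (by norm_num)
  have hD2_7 : 17 ^ 195 % 819139991 = 666920536 := sqmul_mod 17 97 195 819139991 606243246 666920536 (by norm_num) hD2_6 (by norm_num)
  have hD2_8 : 17 ^ 390 % 819139991 = 211917271 := sq_mod 17 195 390 819139991 666920536 211917271 (by norm_num) hD2_7 (by norm_num)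
  have hD2_9 : 17 ^ 781 % 819139991 = 144712999 := sqmul_mod 17 390 781 819139991 211917271 144712999 (by norm_num) hD2_8 (by norm_num)
  have hD2_10 : 17 ^ 1562 % 819139991 = 34684914 := sq_mod 17 781 1562 819139991 144712999 34684914 (by norm_num) hD2_9 (by norm_num)
  have hD2_11 : 17 ^ 3124 % 819139991 = 205165390 := sq_mod 17 1562 3124 819139991 34684914 205165390 (by norm_num) hD2_10 (by norm_num)
  have hD2_12 : 17 ^ 6249 % 819139991 = 453858893 := sqmul_mod 17 3124 6249 819139991 205165390 453858893 (by norm_num) hD2_11 (by norm_num)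
  have hD2_13 : 17 ^ 12499 % 819139991 = 802231243 := sqmul_mod 17 6249 12499 819139991 453858893 802231243 (by norm_num) hD2_12 (by norm_num)
  have hD2_14 : 17 ^ 24998 % 819139991 = 508728783 := sq_mod 17 12499 24998 819139991 802231243 508728783 (by norm_num) hD2_13 (by norm_num)
  have hD2_15 : 17 ^ 49996 % 819139991 = 375285754 := sq_mod 17 24998 49996 819139991 508728783 375285754 (by norm_num) hD2_14 (by norm_num)
  have hD2_16 : 17 ^ 99992 % 819139991 = 53589699 := sq_mod 17 49996 99992 819139991 375285754 53589699 (by norm_num) hD2_15 (by norm_num)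
  have hD2_17 : 17 ^ 199985 % 819139991 = 583269064 := sqmul_mod 17 99992 199985 819139991 53589699 583269064 (by norm_num) hD2_16 (by norm_num)
  have hD2_18 : 17 ^ 399970 % 819139991 = 515989501 := sq_mod 17 199985 399970 819139991 583269064 515989501 (by norm_num) hD2_17 (by norm_num)
  have hD2_19 : 17 ^ 799941 % 819139991 = 62780549 := sqmul_mod 17 399970 799941 819139991 515989501 62780549 (by norm_num) hD2_18 (by norm_num)
  have hD2_20 : 17 ^ 1599882 % 819139991 = 416126053 := sq_mod 17 799941 1599882 819139991 62780549 416126053 (by norm_num) hD2_19 (by norm_num)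
  have hD2_21 : 17 ^ 3199765 % 819139991 = 621629411 := sqmul_mod 17 1599882 3199765 819139991 416126053 621629411 (by norm_num) hD2_20 (by norm_num)
  have hD2_22 : 17 ^ 6399531 % 819139991 = 246775936 := sqmul_mod 17 3199765 6399531 819139991 621629411 246775936 (by norm_num) hD2_21 (by norm_num)
  have hD2_23 : 17 ^ 12799062 % 819139991 = 387394499 := sq_mod 17 6399531 12799062 819139991 246775936 387394499 (by norm_num) hD2_22 (by norm_num)
  have hD2_24 : 17 ^ 25598124 % 819139991 = 177289462 := sq_mod 17 12799062 25598124 819139991 387394499 177289462 (by norm_num) hD2_23 (by norm_num)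
  have hD2_25 : 17 ^ 51196249 % 819139991 = 445365693 := sqmul_mod 17 25598124 51196249 819139991 177289462 445365693 (by norm_num) hD2_24 (by norm_num)
  have hD2_26 : 17 ^ 102392498 % 819139991 = 624774664 := sq_mod 17 51196249 102392498 819139991 445365693 624774664 (by norm_num) hD2_25 (by norm_num)
  have hD2_27 : 17 ^ 204784997 % 819139991 = 74327899 := sqmul_mod 17 102392498 204784997 819139991 624774664 74327899 (by norm_num) hD2_26 (by norm_num)
  have hD2_28 : 17 ^ 409569995 % 819139991 = 819139990 := sqmul_mod 17 204784997 409569995 819139991 74327899 819139990 (by norm_num) hD2_27 (by norm_num)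
  have hD5_0 : 17 ^ 1 % 819139991 = 17 := by norm_num
  have hD5_1 : 17 ^ 2 % 819139991 = 289 := sq_mod 17 1 2 819139991 17 289 (by norm_num) hD5_0 (by norm_num)
  have hD5_2 : 17 ^ 4 % 819139991 = 83521 := sq_mod 17 2 4 819139991 289 83521 (by norm_num) hD5_1 (by norm_num)
  have hD5_3 : 17 ^ 9 % 819139991 = 631717793 := sqmul_mod 17 4 9 819139991 83521 631717793 (by norm_num) hD5_2 (by norm_num)
  have hD5_4 : 17 ^ 19 % 819139991 = 71010802 := sqmul_mod 17 9 19 819139991 631717793 71010802 (by norm_num) hD5_3 (by norm_num)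
  have hD5_5 : 17 ^ 39 % 819139991 = 135165323 := sqmul_mod 17 19 39 819139991 71010802 135165323 (by norm_num) hD5_4 (by norm_num)
  have hD5_6 : 17 ^ 78 % 819139991 = 326625559 := sq_mod 17 39 78 819139991 135165323 326625559 (by norm_num) hD5_5 (by norm_num)
  have hD5_7 : 17 ^ 156 % 819139991 = 720056577 := sq_mod 17 78 156 819139991 326625559 720056577 (by norm_num) hD5_6 (by norm_num)
  have hD5_8 : 17 ^ 312 % 819139991 = 713641818 := sq_mod 17 156 312 819139991 720056577 713641818 (by norm_num) hD5_7 (by norm_num)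
  have hD5_9 : 17 ^ 624 % 819139991 = 567923224 := sq_mod 17 312 624 819139991 713641818 567923224 (by norm_num) hD5_8 (by norm_num)
  have hD5_10 : 17 ^ 1249 % 819139991 = 139968860 := sqmul_mod 17 624 1249 819139991 567923224 139968860 (by norm_num) hD5_9 (by norm_num)
  have hD5_11 : 17 ^ 2499 % 819139991 = 608017496 := sqmul_mod 17 1249 2499 819139991 139968860 608017496 (by norm_num) hD5_10 (by norm_num)
  have hD5_12 : 17 ^ 4999 % 819139991 = 735931979 := sqmul_mod 17 2499 4999 819139991 608017496 735931979 (by norm_num) hD5_11 (by norm_num)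
  have hD5_13 : 17 ^ 9999 % 819139991 = 316040185 := sqmul_mod 17 4999 9999 819139991 735931979 316040185 (by norm_num) hD5_12 (by norm_num)
  have hD5_14 : 17 ^ 19998 % 819139991 = 333864428 := sq_mod 17 9999 19998 819139991 316040185 333864428 (by norm_num) hD5_13 (by norm_num)
  have hD5_15 : 17 ^ 39997 % 819139991 = 70500548 := sqmul_mod 17 19998 39997 819139991 333864428 70500548 (by norm_num) hD5_14 (by norm_num)
  have hD5_16 : 17 ^ 79994 % 819139991 = 417589946 := sq_mod 17 39997 79994 819139991 70500548 417589946 (by norm_num) hD5_15 (by norm_num)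
  have hD5_17 : 17 ^ 159988 % 819139991 = 119574137 := sq_mod 17 79994 159988 819139991 417589946 119574137 (by norm_num) hD5_16 (by norm_num)
  have hD5_18 : 17 ^ 319976 % 819139991 = 375988509 := sq_mod 17 159988 319976 819139991 119574137 375988509 (by norm_num) hD5_17 (by norm_num)
  have hD5_19 : 17 ^ 639953 % 819139991 = 104705857 := sqmul_mod 17 319976 639953 819139991 375988509 104705857 (by norm_num) hD5_18 (by norm_num)
  have hD5_20 : 17 ^ 1279906 % 819139991 = 94659864 := sq_mod 17 639953 1279906 819139991 104705857 94659864 (by norm_num) hD5_19 (by norm_num)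
  have hD5_21 : 17 ^ 2559812 % 819139991 = 224088587 := sq_mod 17 1279906 2559812 819139991 94659864 224088587 (by norm_num) hD5_20 (by norm_num)
  have hD5_22 : 17 ^ 5119624 % 819139991 = 188943083 := sq_mod 17 2559812 5119624 819139991 224088587 188943083 (by norm_num) hD5_21 (by norm_num)
  have hD5_23 : 17 ^ 10239249 % 819139991 = 590218587 := sqmul_mod 17 5119624 10239249 819139991 188943083 590218587 (by norm_num) hD5_22 (by norm_num)
  have hD5_24 : 17 ^ 20478499 % 819139991 = 615084339 := sqmul_mod 17 10239249 20478499 819139991 590218587 615084339 (by norm_num) hD5_23 (by norm_num)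
  have hD5_25 : 17 ^ 40956999 % 819139991 = 224057337 := sqmul_mod 17 20478499 40956999 819139991 615084339 224057337 (by norm_num) hD5_24 (by norm_num)
  have hD5_26 : 17 ^ 81913999 % 819139991 = 536891651 := sqmul_mod 17 40956999 81913999 819139991 224057337 536891651 (by norm_num) hD5_25 (by norm_num)
  have hD5_27 : 17 ^ 163827998 % 819139991 = 806235930 := sq_mod 17 81913999 163827998 819139991 536891651 806235930 (by norm_num) hD5_26 (by norm_num)
  have hD67_0 : 17 ^ 1 % 819139991 = 17 := by norm_num
  have hD67_1 : 17 ^ 2 % 819139991 = 289 := sq_mod 17 1 2 819139991 17 289 (by norm_num) hD67_0 (by norm_num)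
  have hD67_2 : 17 ^ 5 % 819139991 = 1419857 := sqmul_mod 17 2 5 819139991 289 1419857 (by norm_num) hD67_1 (by norm_num)
  have hD67_3 : 17 ^ 11 % 819139991 = 717364175 := sqmul_mod 17 5 11 819139991 1419857 717364175 (by norm_num) hD67_2 (by norm_num)
  have hD67_4 : 17 ^ 23 % 819139991 = 319659002 := sqmul_mod 17 11 23 819139991 717364175 319659002 (by norm_num) hD67_3 (by norm_num)
  have hD67_5 : 17 ^ 46 % 819139991 = 54821879 := sq_mod 17 23 46 819139991 319659002 54821879 (by norm_num) hD67_4 (by norm_num)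
  have hD67_6 : 17 ^ 93 % 819139991 = 157860471 := sqmul_mod 17 46 93 819139991 54821879 157860471 (by norm_num) hD67_5 (by norm_num)
  have hD67_7 : 17 ^ 186 % 819139991 = 711460399 := sq_mod 17 93 186 819139991 157860471 711460399 (by norm_num) hD67_6 (by norm_num)
  have hD67_8 : 17 ^ 373 % 819139991 = 59678903 := sqmul_mod 17 186 373 819139991 711460399 59678903 (by norm_num) hD67_7 (by norm_num)
  have hD67_9 : 17 ^ 746 % 819139991 = 749954860 := sq_mod 17 373 746 819139991 59678903 749954860 (by norm_num) hD67_8 (by norm_num)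
  have hD67_10 : 17 ^ 1492 % 819139991 = 68717977 := sq_mod 17 746 1492 819139991 749954860 68717977 (by norm_num) hD67_9 (by norm_num)
  have hD67_11 : 17 ^ 2984 % 819139991 = 163935531 := sq_mod 17 1492 2984 819139991 68717977 163935531 (by norm_num) hD67_10 (by norm_num)
  have hD67_12 : 17 ^ 5969 % 819139991 = 736163241 := sqmul_mod 17 2984 5969 819139991 163935531 736163241 (by norm_num) hD67_11 (by norm_num)
  have hD67_13 : 17 ^ 11939 % 819139991 = 263837819 := sqmul_mod 17 5969 11939 819139991 736163241 263837819 (by norm_num) hD67_12 (by norm_num)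
  have hD67_14 : 17 ^ 23878 % 819139991 = 351355420 := sq_mod 17 11939 23878 819139991 263837819 351355420 (by norm_num) hD67_13 (by norm_num)
  have hD67_15 : 17 ^ 47757 % 819139991 = 768483283 := sqmul_mod 17 23878 47757 819139991 351355420 768483283 (by norm_num) hD67_14 (by norm_num)
  have hD67_16 : 17 ^ 95515 % 819139991 = 746853258 := sqmul_mod 17 47757 95515 819139991 768483283 746853258 (by norm_num) hD67_15 (by norm_num)
  have hD67_17 : 17 ^ 191030 % 819139991 = 766065135 := sq_mod 17 95515 191030 819139991 746853258 766065135 (by norm_num) hD67_16 (by norm_num)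
  have hD67_18 : 17 ^ 382061 % 819139991 = 290864176 := sqmul_mod 17 191030 382061 819139991 766065135 290864176 (by norm_num) hD67_17 (by norm_num)
  have hD67_19 : 17 ^ 764123 % 819139991 = 234504973 := sqmul_mod 17 382061 764123 819139991 290864176 234504973 (by norm_num) hD67_18 (by norm_num)
  have hD67_20 : 17 ^ 1528246 % 819139991 = 785181535 := sq_mod 17 764123 1528246 819139991 234504973 785181535 (by norm_num) hD67_19 (by norm_num)
  have hD67_21 : 17 ^ 3056492 % 819139991 = 465114037 := sq_mod 17 1528246 3056492 819139991 785181535 465114037 (by norm_num) hD67_20 (by norm_num)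
  have hD67_22 : 17 ^ 6112985 % 819139991 = 374164714 := sqmul_mod 17 3056492 6112985 819139991 465114037 374164714 (by norm_num) hD67_21 (by norm_num)
  have hD67_23 : 17 ^ 12225970 % 819139991 = 138951985 := sq_mod 17 6112985 12225970 819139991 374164714 138951985 (by norm_num) hD67_22 (by norm_num)
  have hD1222597_0 : 17 ^ 1 % 819139991 = 17 := by norm_num
  have hD1222597_1 : 17 ^ 2 % 819139991 = 289 := sq_mod 17 1 2 819139991 17 289 (by norm_num) hD1222597_0 (by norm_num)
  have hD1222597_2 : 17 ^ 5 % 819139991 = 1419857 := sqmul_mod 17 2 5 819139991 289 1419857 (by norm_num) hD1222597_1 (by norm_num)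
  have hD1222597_3 : 17 ^ 10 % 819139991 = 90382598 := sq_mod 17 5 10 819139991 1419857 90382598 (by norm_num) hD1222597_2 (by norm_num)
  have hD1222597_4 : 17 ^ 20 % 819139991 = 388043643 := sq_mod 17 10 20 819139991 90382598 388043643 (by norm_num) hD1222597_3 (by norm_num)
  have hD1222597_5 : 17 ^ 41 % 819139991 = 563198770 := sqmul_mod 17 20 41 819139991 388043643 563198770 (by norm_num) hD1222597_4 (by norm_num)
  have hD1222597_6 : 17 ^ 83 % 819139991 = 565580467 := sqmul_mod 17 41 83 819139991 563198770 565580467 (by norm_num) hD1222597_5 (by norm_num)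
  have hD1222597_7 : 17 ^ 167 % 819139991 = 498233312 := sqmul_mod 17 83 167 819139991 565580467 498233312 (by norm_num) hD1222597_6 (by norm_num)
  have hD1222597_8 : 17 ^ 335 % 819139991 = 635112720 := sqmul_mod 17 167 335 819139991 498233312 635112720 (by norm_num) hD1222597_7 (by norm_num)
  have hD1222597_9 : 17 ^ 670 % 819139991 = 72098086 := sq_mod 17 335 670 819139991 635112720 72098086 (by norm_num) hD1222597_8 (by norm_num)
  refine lucas_primality 819139991 17 ?_ ?_
  · have hexp : (819139991 - 1 : ℕ) = 819139990 := by norm_num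
    rw [hexp, show (17 : ZMod 819139991) = ((17 : ℕ) : ZMod 819139991) by simp,
      zpow_eq 819139991 17 819139990 1 hC29, Nat.cast_one]
  · intro q hq hdvd
    have hfac : (819139991 - 1 : ℕ) = 2 * (5 * (67 * 1222597)) := by norm_num
    rw [hfac] at hdvd
    rcases (Nat.Prime.dvd_mul hq).mp hdvd with h | h
    · have hq2 : q = 2 := (Nat.prime_dvd_prime_iff_eq hq (by norm_num)).mp h
      subst hq2
      have hexp : (819139991 - 1 : ℕ) / 2 = 409569995 := by norm_num
      rw [hexp, show (17 : ZMod 819139991) = ((17 : ℕ) : ZMod 819139991) by simp, zpow_eq 819139991 17 409569995 819139990 hD2_28]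
      exact zne_one _ _ (by norm_num) (by norm_num)
    rcases (Nat.Prime.dvd_mul hq).mp h with h | h
    · have hq2 : q = 5 := (Nat.prime_dvd_prime_iff_eq hq (by norm_num)).mp h
      subst hq2
      have hexp : (819139991 - 1 : ℕ) / 5 = 163827998 := by norm_num
      rw [hexp, show (17 : ZMod 819139991) = ((17 : ℕ) : ZMod 819139991) by simp, zpow_eq 819139991 17 163827998 806235930 hD5_27]
      exact zne_one _ _ (by norm_num) (by norm_num)
    rcases (Nat.Prime.dvd_mul hq).mp h with h | h
    · have hq2 : q = 67 := (Nat.prime_dvd_prime_iff_eq hq (by norm_num)).mp h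
      subst hq2
      have hexp : (819139991 - 1 : ℕ) / 67 = 12225970 := by norm_num
      rw [hexp, show (17 : ZMod 819139991) = ((17 : ℕ) : ZMod 819139991) by simp, zpow_eq 819139991 17 12225970 138951985 hD67_23]
      exact zne_one _ _ (by norm_num) (by norm_num)
    · have hq2 : q = 1222597 := (Nat.prime_dvd_prime_iff_eq hq (by norm_num)).mp h
      subst hq2
      have hexp : (819139991 - 1 : ℕ) / 1222597 = 670 := by norm_num
      rw [hexp, show (17 : ZMod 819139991) = ((17 : ℕ) : ZMod 819139991) by simp, zpow_eq 819139991 17 670 72098086 hD1222597_9]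
      exact zne_one _ _ (by norm_num) (by norm_num)

theorem prime_1638279983 : Nat.Prime 1638279983 := by
  have hA0 : 5 ^ 1 % 1638279983 = 5 := by norm_num
  have hA1 : 5 ^ 3 % 1638279983 = 125 := sqmul_mod 5 1 3 1638279983 5 125 (by norm_num) hA0 (by norm_num)
  have hA2 : 5 ^ 6 % 1638279983 = 15625 := sq_mod 5 3 6 1638279983 125 15625 (by norm_num) hA1 (by norm_num)
  have hA3 : 5 ^ 12 % 1638279983 = 244140625 := sq_mod 5 6 12 1638279983 15625 244140625 (by norm_num) hA2 (by norm_num)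
  have hA4 : 5 ^ 24 % 1638279983 = 293052326 := sq_mod 5 12 24 1638279983 244140625 293052326 (by norm_num) hA3 (by norm_num)
  have hA5 : 5 ^ 48 % 1638279983 = 225320952 := sq_mod 5 24 48 1638279983 293052326 225320952 (by norm_num) hA4 (by norm_num)
  have hA6 : 5 ^ 97 % 1638279983 = 707121808 := sqmul_mod 5 48 97 1638279983 225320952 707121808 (by norm_num) hA5 (by norm_num)
  have hA7 : 5 ^ 195 % 1638279983 = 1149728619 := sqmul_mod 5 97 195 1638279983 707121808 1149728619 (by norm_num) hA6 (by norm_num)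
  have hA8 : 5 ^ 390 % 1638279983 = 877685269 := sq_mod 5 195 390 1638279983 1149728619 877685269 (by norm_num) hA7 (by norm_num)
  have hA9 : 5 ^ 781 % 1638279983 = 900403916 := sqmul_mod 5 390 781 1638279983 877685269 900403916 (by norm_num) hA8 (by norm_num)
  have hA10 : 5 ^ 1562 % 1638279983 = 1137237846 := sq_mod 5 781 1562 1638279983 900403916 1137237846 (by norm_num) hA9 (by norm_num)
  have hA11 : 5 ^ 3124 % 1638279983 = 593096185 := sq_mod 5 1562 3124 1638279983 1137237846 593096185 (by norm_num) hA10 (by norm_num)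
  have hA12 : 5 ^ 6249 % 1638279983 = 1377295636 := sqmul_mod 5 3124 6249 1638279983 593096185 1377295636 (by norm_num) hA11 (by norm_num)
  have hA13 : 5 ^ 12499 % 1638279983 = 1416946507 := sqmul_mod 5 6249 12499 1638279983 1377295636 1416946507 (by norm_num) hA12 (by norm_num)
  have hA14 : 5 ^ 24998 % 1638279983 = 958023410 := sq_mod 5 12499 24998 1638279983 1416946507 958023410 (by norm_num) hA13 (by norm_num)
  have hA15 : 5 ^ 49996 % 1638279983 = 414208902 := sq_mod 5 24998 49996 1638279983 958023410 414208902 (by norm_num) hA14 (by norm_num)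
  have hA16 : 5 ^ 99992 % 1638279983 = 746012083 := sq_mod 5 49996 99992 1638279983 414208902 746012083 (by norm_num) hA15 (by norm_num)
  have hA17 : 5 ^ 199985 % 1638279983 = 986109758 := sqmul_mod 5 99992 199985 1638279983 746012083 986109758 (by norm_num) hA16 (by norm_num)
  have hA18 : 5 ^ 399970 % 1638279983 = 1250086544 := sq_mod 5 199985 399970 1638279983 986109758 1250086544 (by norm_num) hA17 (by norm_num)
  have hA19 : 5 ^ 799941 % 1638279983 = 1002240964 := sqmul_mod 5 399970 799941 1638279983 1250086544 1002240964 (by norm_num) hA18 (by norm_num)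
  have hA20 : 5 ^ 1599882 % 1638279983 = 182905877 := sq_mod 5 799941 1599882 1638279983 1002240964 182905877 (by norm_num) hA19 (by norm_num)
  have hA21 : 5 ^ 3199765 % 1638279983 = 1053401426 := sqmul_mod 5 1599882 3199765 1638279983 182905877 1053401426 (by norm_num) hA20 (by norm_num)
  have hA22 : 5 ^ 6399531 % 1638279983 = 340653502 := sqmul_mod 5 3199765 6399531 1638279983 1053401426 340653502 (by norm_num) hA21 (by norm_num)
  have hA23 : 5 ^ 12799062 % 1638279983 = 1415990410 := sq_mod 5 6399531 12799062 1638279983 340653502 1415990410 (by norm_num) hA22 (by norm_num)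
  have hA24 : 5 ^ 25598124 % 1638279983 = 213264429 := sq_mod 5 12799062 25598124 1638279983 1415990410 213264429 (by norm_num) hA23 (by norm_num)
  have hA25 : 5 ^ 51196249 % 1638279983 = 548679189 := sqmul_mod 5 25598124 51196249 1638279983 213264429 548679189 (by norm_num) hA24 (by norm_num)
  have hA26 : 5 ^ 102392498 % 1638279983 = 494162387 := sq_mod 5 51196249 102392498 1638279983 548679189 494162387 (by norm_num) hA25 (by norm_num)
  have hA27 : 5 ^ 204784997 % 1638279983 = 1484140899 := sqmul_mod 5 102392498 204784997 1638279983 494162387 1484140899 (by norm_num) hA26 (by norm_num)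
  have hA28 : 5 ^ 409569995 % 1638279983 = 1287572293 := sqmul_mod 5 204784997 409569995 1638279983 1484140899 1287572293 (by norm_num) hA27 (by norm_num)
  have hA29 : 5 ^ 819139991 % 1638279983 = 1638279982 := sqmul_mod 5 409569995 819139991 1638279983 1287572293 1638279982 (by norm_num) hA28 (by norm_num)
  have hA30 : 5 ^ 1638279982 % 1638279983 = 1 := sq_mod 5 819139991 1638279982 1638279983 1638279982 1 (by norm_num) hA29 (by norm_num)
  have hB0 : 5 ^ 1 % 1638279983 = 5 := by norm_num
  have hB1 : 5 ^ 3 % 1638279983 = 125 := sqmul_mod 5 1 3 1638279983 5 125 (by norm_num) hB0 (by norm_num)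
  have hB2 : 5 ^ 6 % 1638279983 = 15625 := sq_mod 5 3 6 1638279983 125 15625 (by norm_num) hB1 (by norm_num)
  have hB3 : 5 ^ 12 % 1638279983 = 244140625 := sq_mod 5 6 12 1638279983 15625 244140625 (by norm_num) hB2 (by norm_num)
  have hB4 : 5 ^ 24 % 1638279983 = 293052326 := sq_mod 5 12 24 1638279983 244140625 293052326 (by norm_num) hB3 (by norm_num)
  have hB5 : 5 ^ 48 % 1638279983 = 225320952 := sq_mod 5 24 48 1638279983 293052326 225320952 (by norm_num) hB4 (by norm_num)
  have hB6 : 5 ^ 97 % 1638279983 = 707121808 := sqmul_mod 5 48 97 1638279983 225320952 707121808 (by norm_num) hB5 (by norm_num)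
  have hB7 : 5 ^ 195 % 1638279983 = 1149728619 := sqmul_mod 5 97 195 1638279983 707121808 1149728619 (by norm_num) hB6 (by norm_num)
  have hB8 : 5 ^ 390 % 1638279983 = 877685269 := sq_mod 5 195 390 1638279983 1149728619 877685269 (by norm_num) hB7 (by norm_num)
  have hB9 : 5 ^ 781 % 1638279983 = 900403916 := sqmul_mod 5 390 781 1638279983 877685269 900403916 (by norm_num) hB8 (by norm_num)
  have hB10 : 5 ^ 1562 % 1638279983 = 1137237846 := sq_mod 5 781 1562 1638279983 900403916 1137237846 (by norm_num) hB9 (by norm_num)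
  have hB11 : 5 ^ 3124 % 1638279983 = 593096185 := sq_mod 5 1562 3124 1638279983 1137237846 593096185 (by norm_num) hB10 (by norm_num)
  have hB12 : 5 ^ 6249 % 1638279983 = 1377295636 := sqmul_mod 5 3124 6249 1638279983 593096185 1377295636 (by norm_num) hB11 (by norm_num)
  have hB13 : 5 ^ 12499 % 1638279983 = 1416946507 := sqmul_mod 5 6249 12499 1638279983 1377295636 1416946507 (by norm_num) hB12 (by norm_num)
  have hB14 : 5 ^ 24998 % 1638279983 = 958023410 := sq_mod 5 12499 24998 1638279983 1416946507 958023410 (by norm_num) hB13 (by norm_num)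
  have hB15 : 5 ^ 49996 % 1638279983 = 414208902 := sq_mod 5 24998 49996 1638279983 958023410 414208902 (by norm_num) hB14 (by norm_num)
  have hB16 : 5 ^ 99992 % 1638279983 = 746012083 := sq_mod 5 49996 99992 1638279983 414208902 746012083 (by norm_num) hB15 (by norm_num)
  have hB17 : 5 ^ 199985 % 1638279983 = 986109758 := sqmul_mod 5 99992 199985 1638279983 746012083 986109758 (by norm_num) hB16 (by norm_num)
  have hB18 : 5 ^ 399970 % 1638279983 = 1250086544 := sq_mod 5 199985 399970 1638279983 986109758 1250086544 (by norm_num) hB17 (by norm_num)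
  have hB19 : 5 ^ 799941 % 1638279983 = 1002240964 := sqmul_mod 5 399970 799941 1638279983 1250086544 1002240964 (by norm_num) hB18 (by norm_num)
  have hB20 : 5 ^ 1599882 % 1638279983 = 182905877 := sq_mod 5 799941 1599882 1638279983 1002240964 182905877 (by norm_num) hB19 (by norm_num)
  have hB21 : 5 ^ 3199765 % 1638279983 = 1053401426 := sqmul_mod 5 1599882 3199765 1638279983 182905877 1053401426 (by norm_num) hB20 (by norm_num)
  have hB22 : 5 ^ 6399531 % 1638279983 = 340653502 := sqmul_mod 5 3199765 6399531 1638279983 1053401426 340653502 (by norm_num) hB21 (by norm_num)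
  have hB23 : 5 ^ 12799062 % 1638279983 = 1415990410 := sq_mod 5 6399531 12799062 1638279983 340653502 1415990410 (by norm_num) hB22 (by norm_num)
  have hB24 : 5 ^ 25598124 % 1638279983 = 213264429 := sq_mod 5 12799062 25598124 1638279983 1415990410 213264429 (by norm_num) hB23 (by norm_num)
  have hB25 : 5 ^ 51196249 % 1638279983 = 548679189 := sqmul_mod 5 25598124 51196249 1638279983 213264429 548679189 (by norm_num) hB24 (by norm_num)
  have hB26 : 5 ^ 102392498 % 1638279983 = 494162387 := sq_mod 5 51196249 102392498 1638279983 548679189 494162387 (by norm_num) hB25 (by norm_num)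
  have hB27 : 5 ^ 204784997 % 1638279983 = 1484140899 := sqmul_mod 5 102392498 204784997 1638279983 494162387 1484140899 (by norm_num) hB26 (by norm_num)
  have hB28 : 5 ^ 409569995 % 1638279983 = 1287572293 := sqmul_mod 5 204784997 409569995 1638279983 1484140899 1287572293 (by norm_num) hB27 (by norm_num)
  have hB29 : 5 ^ 819139991 % 1638279983 = 1638279982 := sqmul_mod 5 409569995 819139991 1638279983 1287572293 1638279982 (by norm_num) hB28 (by norm_num)
  refine lucas_primality 1638279983 5 ?_ ?_
  · have hexp : (1638279983 - 1 : ℕ) = 1638279982 := by norm_num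
    rw [hexp, show (5 : ZMod 1638279983) = ((5 : ℕ) : ZMod 1638279983) by simp,
      zpow_eq 1638279983 5 1638279982 1 hA30, Nat.cast_one]
  · intro q hq hdvd
    have hfac : (1638279983 - 1 : ℕ) = 2 * 819139991 := by norm_num
    rw [hfac] at hdvd
    rcases (Nat.Prime.dvd_mul hq).mp hdvd with h | h
    · have hq2 : q = 2 := (Nat.prime_dvd_prime_iff_eq hq (by norm_num)).mp h
      subst hq2
      have hexp : (1638279983 - 1 : ℕ) / 2 = 819139991 := by norm_num
      rw [hexp, show (5 : ZMod 1638279983) = ((5 : ℕ) : ZMod 1638279983) by simp, zpow_eq 1638279983 5 819139991 1638279982 hB29]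
      exact zne_one _ _ (by norm_num) (by norm_num)
    · have hq2 : q = 819139991 := (Nat.prime_dvd_prime_iff_eq hq prime_819139991).mp h
      subst hq2
      have h25 : (5 : ℕ) ^ 2 % 1638279983 = 25 := by norm_num
      have hexp : (1638279983 - 1 : ℕ) / 819139991 = 2 := by norm_num
      rw [hexp, show (5 : ZMod 1638279983) = ((5 : ℕ) : ZMod 1638279983) by simp, zpow_eq 1638279983 5 2 25 h25]
      exact zne_one _ _ (by norm_num) (by norm_num)

theorem totient_7197572 : Nat.totient 7197572 = 3598784 := by
  have h : (7197572 : ℕ) = 4 * 1799393 := by norm_num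
  rw [h, Nat.totient_mul (by norm_num),
    Nat.totient_prime (by norm_num : Nat.Prime 1799393)]
  have h4 : Nat.totient 4 = 2 := by decide
  rw [h4]

theorem log_lt_c : Real.log 1638279983 < 21.3 := by
  rw [Real.log_lt_iff_lt_exp (by norm_num)]
  have h : (21.3 : ℝ) = 21 + 0.3 := by norm_num
  rw [h, Real.exp_add]
  have h1 : (2.7182818283 : ℝ) ^ (21 : ℕ) ≤ Real.exp 21 := by
    calc (2.7182818283 : ℝ) ^ (21 : ℕ) ≤ Real.exp 1 ^ (21 : ℕ) :=
          pow_le_pow_left₀ (by norm_num) Real.exp_one_gt_d9.le _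
      _ = Real.exp 21 := by rw [← Real.exp_nat_mul]; norm_num
  have h2 : (1.3 : ℝ) < Real.exp 0.3 := by
    have := Real.add_one_lt_exp (x := 0.3) (by norm_num)
    linarith
  calc (1638279983 : ℝ) < 2.7182818283 ^ (21 : ℕ) * 1.3 := by norm_num
    _ ≤ Real.exp 21 * Real.exp 0.3 :=
        mul_le_mul h1 h2.le (by norm_num) (Real.exp_nonneg _)

/-- The prime p = 1638279983, the least prime congruent to 4431139 modulo q = 7197572,
satisfies p > φ(q) · (log p)². -/
theorem exceptional_least_prime_q7197572 :
    Nat.Prime 1638279983 ∧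
    1638279983 % 7197572 = 4431139 ∧
    (∀ p' : ℕ, Nat.Prime p' → p' % 7197572 = 4431139 → 1638279983 ≤ p') ∧
    (Nat.totient 7197572 : ℝ) * (Real.log 1638279983) ^ 2 < 1638279983 := by
  refine ⟨prime_1638279983, by norm_num, ?_, ?_⟩
  · intro p' hp hmod
    by_contra hlt
    push_neg at hlt
    have hk := Nat.div_add_mod p' 7197572
    rw [hmod] at hk
    set k := p' / 7197572 with hkdef
    have hk2 : k < 227 := by omega
    interval_cases k <;> (rw [← hk] at hp; revert hp; norm_num)
  · rw [totient_7197572]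
    have hpos : (0 : ℝ) ≤ Real.log 1638279983 := Real.log_nonneg (by norm_num)
    have h2 : (Real.log 1638279983) ^ 2 < 21.3 ^ 2 := by
      apply pow_lt_pow_left₀ log_lt_c hpos
      norm_num
    push_cast
    nlinarith [h2]
end

section
/- The least prime starting a gap of length 10·18 = 180 in an arithmetic progression with common difference q = 18 is 5167: the integers 5167 and 5347 are both prime and congruent modulo 18, no integer m with 5167 < m < 5347 and m ≡ 5167 (mod 18) is prime, and for every prime p with 5 ≤ p < 5167 coprime to 18 there exists a prime p' with p < p' < p + 180 and p' ≡ p (mod 18). -/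
set_option maxRecDepth 100000
set_option maxHeartbeats 4000000

/-- Primality check by trial division up to 73, valid for numbers below 74² = 5476. -/
def Q (p : ℕ) : Prop := 2 ≤ p ∧ ∀ m < 74, 2 ≤ m → m ∣ p → m = p

instance : DecidablePred Q := fun _ => inferInstanceAs (Decidable (_ ∧ _))

lemma Q_iff {p : ℕ} (h : p < 5476) : Nat.Prime p ↔ Q p := by
  constructor
  · intro hp
    refine ⟨hp.two_le, fun m _ h2 hdvd => ?_⟩
    rcases (Nat.Prime.eq_one_or_self_of_dvd hp m hdvd) with h1 | h1
    · omega
    · exact h1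
  · rintro ⟨h2, hm⟩
    by_contra hnp
    have h0 : 0 < p := by omega
    have hsq := Nat.minFac_sq_le_self h0 hnp
    have hd := Nat.minFac_dvd p
    have hmfp : (p.minFac).Prime := Nat.minFac_prime (by omega)
    have h2' : 2 ≤ p.minFac := hmfp.two_le
    have hlt : p.minFac < 74 := by nlinarith [hsq]
    have heq := hm _ hlt h2' hd
    exact hnp (heq ▸ hmfp)

/-- For a prime `p`, asserts existence of a prime `p + 18k`, `1 ≤ k ≤ 9`. -/
def R (p : ℕ) : Prop := p % 6 = 1 ∨ p % 6 = 5 → Q p → ∃ e < 9, Q (p + 18 * (e + 1))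

instance : DecidablePred R := fun p => by unfold R; infer_instance

theorem chunkA : ∀ q < 500, R (0 + q) := by decide
theorem chunkB : ∀ q < 500, R (500 + q) := by decide
theorem chunkC : ∀ q < 500, R (1000 + q) := by decide
theorem chunkD : ∀ q < 500, R (1500 + q) := by decide
theorem chunkE : ∀ q < 500, R (2000 + q) := by decide
theorem chunkF : ∀ q < 500, R (2500 + q) := by decide
theorem chunkG : ∀ q < 500, R (3000 + q) := by decide
theorem chunkH : ∀ q < 500, R (3500 + q) := by decide
theorem chunkI : ∀ q < 500, R (4000 + q) := by decide
theorem chunkJ : ∀ q < 500, R (4500 + q) := by decide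
theorem chunkK : ∀ q < 167, R (5000 + q) := by decide

theorem allR : ∀ p < 5167, R p := by
  intro p hp
  by_cases h0 : p < 500
  · simpa using chunkA p h0
  by_cases h1 : p < 1000
  · have := chunkB (p - 500) (by omega); rwa [show 500 + (p - 500) = p by omega] at this
  by_cases h2 : p < 1500
  · have := chunkC (p - 1000) (by omega); rwa [show 1000 + (p - 1000) = p by omega] at this
  by_cases h3 : p < 2000
  · have := chunkD (p - 1500) (by omega); rwa [show 1500 + (p - 1500) = p by omega] at this
  by_cases h4 : p < 2500
  · have := chunkE (p - 2000) (by omega); rwa [show 2000 + (p - 2000) = p by omega] at this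
  by_cases h5 : p < 3000
  · have := chunkF (p - 2500) (by omega); rwa [show 2500 + (p - 2500) = p by omega] at this
  by_cases h6 : p < 3500
  · have := chunkG (p - 3000) (by omega); rwa [show 3000 + (p - 3000) = p by omega] at this
  by_cases h7 : p < 4000
  · have := chunkH (p - 3500) (by omega); rwa [show 3500 + (p - 3500) = p by omega] at this
  by_cases h8 : p < 4500
  · have := chunkI (p - 4000) (by omega); rwa [show 4000 + (p - 4000) = p by omega] at this
  by_cases h9 : p < 5000
  · have := chunkJ (p - 4500) (by omega); rwa [show 4500 + (p - 4500) = p by omega] at this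
  · have := chunkK (p - 5000) (by omega); rwa [show 5000 + (p - 5000) = p by omega] at this

theorem midGap : ∀ d < 179, (5168 + d) % 18 = 1 → ¬ Q (5168 + d) := by decide

/-- The least prime starting a gap of length 10·18 = 180 in an arithmetic
progression with common difference 18 is 5167. -/
theorem p_min_q18_k10 :
    Nat.Prime 5167 ∧
    Nat.Prime 5347 ∧
    5347 % 18 = 5167 % 18 ∧
    (∀ m : ℕ, 5167 < m → m < 5347 → m % 18 = 5167 % 18 → ¬ Nat.Prime m) ∧
    (∀ p : ℕ, Nat.Prime p → 5 ≤ p → p < 5167 → Nat.Coprime p 18 →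
      ∃ p' : ℕ, Nat.Prime p' ∧ p < p' ∧ p' < p + 180 ∧ p' % 18 = p % 18) := by
  refine ⟨by norm_num, by norm_num, by norm_num, ?_, ?_⟩
  · intro m h1 h2 h3 hp
    have hm : m = 5168 + (m - 5168) := by omega
    have hQ : Q m := (Q_iff (by omega)).mp hp
    have h3' : (5168 + (m - 5168)) % 18 = 1 := by rw [← hm]; omega
    exact midGap (m - 5168) (by omega) h3' (hm ▸ hQ)
  · intro p hp h5 hlt _
    have hQ : Q p := (Q_iff (by omega)).mp hp
    have h2 : ¬ 2 ∣ p := fun h => by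
      rcases hp.eq_one_or_self_of_dvd 2 h with h' | h' <;> omega
    have h3 : ¬ 3 ∣ p := fun h => by
      rcases hp.eq_one_or_self_of_dvd 3 h with h' | h' <;> omega
    obtain ⟨e, he, hQ'⟩ := allR p hlt (by omega) hQ
    refine ⟨p + 18 * (e + 1), (Q_iff (by omega)).mpr hQ', by omega, by omega,
      Nat.add_mul_mod_self_left p 18 (e + 1)⟩
end
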